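/- arXiv:2209.07609 — 9 statements merged into one kernel-verified Lean document; each statement's English description precedes it below -/
import Mathlib

section
/- Let (r,ρ) ∈ 𝒩𝒞. Then the shift map σ_{r,ρ} on M_{r,ρ} is topologically transitive, i.e., for all non-empty open sets U and V in M_{r,ρ} there is a non-negative integer n such that σ_{r,ρ}^n(U) ∩ V ≠ ∅. -/
/-!
Open sets of `M_{r,ρ}` contain cylinders, sets of points whose first `N` coordinates are
`ε`-close to those of a given point, so given `x` and `y` we need `z ∈ M_{r,ρ}` that shadows `x`
up to time `N` and, from some time `n` on, shadows `y`. After replacing `x` and `y` by nearby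
points with positive coordinates (a point with `x 0 = 0` is identically `0`, and `δ * r ^ i` is
close to it), follow `x` up to time `N`, then take `k` steps `r` and `l` steps `ρ` to reach
`c * y 0`, and continue as `c • y`. Because `log r / log ρ` is irrational, Dirichlet's theorem
gives arbitrarily small nonzero `k log r + l log ρ` with `k, l ∈ ℕ`, so these sums are dense in
`ℝ`; hence `k, l` can be chosen with `c ∈ (1 - δ, 1]`, and `c • y` is `δ`-close to `y`.
-/

/-- `(r, ρ) ∈ 𝒩𝒞`: `0 < r < 1 < ρ` and `r^k = ρ^ℓ` only for `k = ℓ = 0`. -/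
def NC (r ρ : ℝ) : Prop :=
  0 < r ∧ r < 1 ∧ 1 < ρ ∧ ∀ k l : ℤ, r ^ k = ρ ^ l ↔ k = 0 ∧ l = 0

/-- The Mahavier product `M_{r,ρ} ⊆ [0,1]^ℕ`. -/
def Mset (r ρ : ℝ) : Set (ℕ → ℝ) :=
  {x | (∀ i, x i ∈ Set.Icc (0:ℝ) 1) ∧ ∀ i, x (i + 1) = r * x i ∨ x (i + 1) = ρ * x i}

/-- The shift map `σ_{r,ρ}` on `M_{r,ρ}`. -/
def shiftM (r ρ : ℝ) (x : Mset r ρ) : Mset r ρ :=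
  ⟨fun i => x.1 (i + 1), fun i => x.2.1 (i + 1), fun i => x.2.2 (i + 1)⟩

open Topology

lemma exists_nsmul_add_nsmul_near {a g : ℝ} (ha : a < 0) (hg : 0 < g) (u : ℝ) :
    ∃ k m : ℕ, |k • a + m • g - u| < g := by
  set k := ⌈u / a⌉₊
  have hk : k * a ≤ u := (div_le_iff_of_neg ha).1 (Nat.le_ceil _)
  set m := ⌊(u - k * a) / g⌋₊
  have h₁ : m * g ≤ u - k * a := (le_div_iff₀ hg).1 (Nat.floor_le (div_nonneg (by linarith) hg.le))
  have h₂ : u - k * a < (m + 1) * g := (div_lt_iff₀ hg).1 (Nat.lt_floor_add_one _)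
  refine ⟨k, m, ?_⟩
  rw [nsmul_eq_mul, nsmul_eq_mul, abs_sub_lt_iff]
  constructor <;> linarith

lemma AddSubmonoid.dense_of_exists_ne_zero_abs_lt (S : AddSubmonoid ℝ) {a b : ℝ} (ha : a ∈ S)
    (ha₀ : a < 0) (hb : b ∈ S) (hb₀ : 0 < b) (hS : ∀ ε > 0, ∃ g ∈ S, g ≠ 0 ∧ |g| < ε) :
    Dense (S : Set ℝ) := by
  refine Metric.dense_iff.2 fun u ε hε => ?_
  obtain ⟨g, hg, hg₀, hgε⟩ := hS ε hε
  suffices ∃ s ∈ S, |s - u| < |g| by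
    obtain ⟨s, hs, hsu⟩ := this
    exact ⟨s, by rw [Metric.mem_ball, Real.dist_eq]; exact hsu.trans hgε, hs⟩
  rcases hg₀.lt_or_gt with hneg | hpos
  · obtain ⟨k, m, hkm⟩ := exists_nsmul_add_nsmul_near (neg_neg_of_pos hb₀) (neg_pos.2 hneg) (-u)
    refine ⟨k • b + m • g, add_mem (nsmul_mem hb k) (nsmul_mem hg m), ?_⟩
    rw [abs_of_neg hneg, ← abs_neg]
    convert hkm using 2
    simp only [smul_neg]
    ring
  · obtain ⟨k, m, hkm⟩ := exists_nsmul_add_nsmul_near ha₀ hpos u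
    exact ⟨_, add_mem (nsmul_mem ha k) (nsmul_mem hg m), by rwa [abs_of_pos hpos]⟩

/-- Dirichlet's approximation theorem applied to `-a / b`. -/
lemma exists_mem_closure_pair_ne_zero_abs_lt {a b : ℝ} (ha : a < 0) (hb : 0 < b)
    (hab : Irrational (a / b)) {ε : ℝ} (hε : 0 < ε) :
    ∃ g ∈ AddSubmonoid.closure {a, b}, g ≠ 0 ∧ |g| < ε := by
  obtain ⟨n, hn⟩ := exists_nat_gt (b / ε)
  have hn₀ : 0 < n := by exact_mod_cast (div_pos hb hε).trans hn
  obtain ⟨j, k, hk, -, hjk⟩ := Real.exists_int_int_abs_mul_sub_le (-(a / b)) hn₀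
  have hj : 0 ≤ j := by
    have hpos : 0 < (k : ℝ) * -(a / b) :=
      mul_pos (by exact_mod_cast hk) (neg_pos.2 (div_neg_of_neg_of_pos ha hb))
    have hle : (k : ℝ) * -(a / b) - j ≤ 1 / (n + 1) := (abs_le.1 hjk).2
    have hlt : 1 / ((n : ℝ) + 1) < 1 := by
      rw [div_lt_one (by positivity)]
      have : (1 : ℝ) ≤ n := by exact_mod_cast hn₀
      linarith
    have : (-1 : ℤ) < j := by exact_mod_cast (by linarith : (-1 : ℝ) < j)
    omega
  lift j to ℕ using hj
  lift k to ℕ using hk.le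
  push_cast at hjk
  have key : k • a + j • b = -b * (k * -(a / b) - j) := by
    rw [nsmul_eq_mul, nsmul_eq_mul]; field_simp; ring
  refine ⟨k • a + j • b, add_mem (nsmul_mem (AddSubmonoid.subset_closure (by simp)) k)
    (nsmul_mem (AddSubmonoid.subset_closure (by simp)) j), ?_, ?_⟩
  · rw [key]
    refine mul_ne_zero (neg_ne_zero.2 hb.ne') (sub_ne_zero.2 ?_)
    exact (hab.neg.natCast_mul (by exact_mod_cast hk.ne')).ne_nat j
  · rw [key, abs_mul, abs_neg, abs_of_pos hb]
    calc b * |k * -(a / b) - j| ≤ b * (1 / (n + 1)) := by gcongr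
      _ < ε := by
        rw [div_lt_iff₀ hε] at hn
        rw [mul_one_div, div_lt_iff₀ (by positivity)]
        nlinarith

lemma dense_addSubmonoidClosure_pair {a b : ℝ} (ha : a < 0) (hb : 0 < b)
    (hab : Irrational (a / b)) : Dense (AddSubmonoid.closure {a, b} : Set ℝ) :=
  (AddSubmonoid.closure {a, b}).dense_of_exists_ne_zero_abs_lt
    (AddSubmonoid.subset_closure (by simp)) ha (AddSubmonoid.subset_closure (by simp)) hb
    fun _ hε => exists_mem_closure_pair_ne_zero_abs_lt ha hb hab hε

namespace NC

variable {r ρ : ℝ}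

lemma irrational_log_div_log (h : NC r ρ) : Irrational (Real.log r / Real.log ρ) := by
  obtain ⟨hr, -, hρ, hnc⟩ := h
  have hlogρ : Real.log ρ ≠ 0 := (Real.log_pos hρ).ne'
  refine (irrational_iff_ne_rational _).2 fun p q hq hpq => hq ((hnc q p).1 ?_).1
  have hpq' : (q : ℝ) * Real.log r = p * Real.log ρ := by
    field_simp at hpq; linarith
  apply Real.log_injOn_pos (zpow_pos hr q) (zpow_pos (by linarith : (0 : ℝ) < ρ) p)
  rw [Real.log_zpow, Real.log_zpow, hpq']

lemma exists_pow_mul_pow_mem_Ioo (h : NC r ρ) {α β : ℝ} (hα : 0 < α) (hαβ : α < β) :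
    ∃ k l : ℕ, α < r ^ k * ρ ^ l ∧ r ^ k * ρ ^ l < β := by
  have hirr := h.irrational_log_div_log
  obtain ⟨hr, hr₁, hρ, -⟩ := h
  obtain ⟨s, hs, hαs, hsβ⟩ := (dense_addSubmonoidClosure_pair (Real.log_neg hr hr₁)
    (Real.log_pos hρ) hirr).exists_between (Real.log_lt_log hα hαβ)
  obtain ⟨k, l, rfl⟩ := (AddSubmonoid.mem_closure_pair _ _ _).1 hs
  have hexp : Real.exp (k • Real.log r + l • Real.log ρ) = r ^ k * ρ ^ l := by
    rw [Real.exp_add, nsmul_eq_mul, nsmul_eq_mul, Real.exp_nat_mul, Real.exp_nat_mul,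
      Real.exp_log hr, Real.exp_log (by linarith)]
  refine ⟨k, l, ?_, ?_⟩ <;> rw [← hexp]
  · exact (Real.log_lt_iff_lt_exp hα).1 hαs
  · exact (Real.lt_log_iff_exp_lt (hα.trans hαβ)).1 hsβ

end NC

section Mahavier

variable {r ρ : ℝ}

def IsMPath (r ρ : ℝ) (n : ℕ) (x : ℕ → ℝ) : Prop :=
  (∀ i ≤ n, x i ∈ Set.Icc (0 : ℝ) 1) ∧ ∀ i < n, x (i + 1) = r * x i ∨ x (i + 1) = ρ * x i

lemma IsMPath.mono {m n : ℕ} {x : ℕ → ℝ} (hx : IsMPath r ρ n x) (hmn : m ≤ n) :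
    IsMPath r ρ m x :=
  ⟨fun i hi => hx.1 i (hi.trans hmn), fun i hi => hx.2 i (hi.trans_le hmn)⟩

lemma mem_Mset_iff_forall_isMPath {x : ℕ → ℝ} : x ∈ Mset r ρ ↔ ∀ n, IsMPath r ρ n x :=
  ⟨fun hx _ => ⟨fun i _ => hx.1 i, fun i _ => hx.2 i⟩,
    fun hx => ⟨fun i => (hx i).1 i le_rfl, fun i => (hx (i + 1)).2 i (Nat.lt_succ_self i)⟩⟩

lemma isMPath_geom {c u : ℝ} {n : ℕ} (hc : c = r ∨ c = ρ) (hu : 0 ≤ u) (hc₀ : 0 ≤ c)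
    (h : ∀ i ≤ n, u * c ^ i ≤ 1) : IsMPath r ρ n (fun i => u * c ^ i) := by
  refine ⟨fun i hi => ⟨by positivity, h i hi⟩, fun i _ => ?_⟩
  rcases hc with rfl | rfl
  · left; ring
  · right; ring

def glue (x p : ℕ → ℝ) (N : ℕ) : ℕ → ℝ := fun i => if i ≤ N then x i else p (i - N)

lemma glue_of_le {x p : ℕ → ℝ} {N i : ℕ} (hi : i ≤ N) : glue x p N i = x i := if_pos hi

lemma glue_add {x p : ℕ → ℝ} {N : ℕ} (h : x N = p 0) (i : ℕ) : glue x p N (N + i) = p i := by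
  rcases Nat.eq_zero_or_pos i with rfl | hi
  · simpa [glue] using h
  · simp [glue, Nat.not_le.2 (Nat.lt_add_of_pos_right hi)]

lemma IsMPath.glue {x p : ℕ → ℝ} {N K : ℕ} (hx : IsMPath r ρ N x) (hp : IsMPath r ρ K p)
    (h : x N = p 0) : IsMPath r ρ (N + K) (glue x p N) := by
  refine ⟨fun i hi => ?_, fun i hi => ?_⟩
  · rcases le_or_gt i N with hiN | hiN
    · rw [glue_of_le hiN]; exact hx.1 i hiN
    · obtain ⟨j, rfl⟩ := Nat.exists_eq_add_of_le hiN.le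
      rw [glue_add h]; exact hp.1 j (by omega)
  · rcases lt_or_ge i N with hiN | hiN
    · rw [glue_of_le hiN, glue_of_le hiN.le]; exact hx.2 i hiN
    · obtain ⟨j, rfl⟩ := Nat.exists_eq_add_of_le hiN
      rw [add_assoc, glue_add h, glue_add h]; exact hp.2 j (by omega)

lemma glue_mem_Mset {x p : ℕ → ℝ} {N : ℕ} (hx : IsMPath r ρ N x) (hp : p ∈ Mset r ρ)
    (h : x N = p 0) : glue x p N ∈ Mset r ρ :=
  mem_Mset_iff_forall_isMPath.2 fun n =>
    (hx.glue (mem_Mset_iff_forall_isMPath.1 hp n) h).mono (Nat.le_add_left n N)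

/-- Taking all `r`-steps before the `ρ`-steps keeps the path below `max v (v * r ^ k * ρ ^ l)`. -/
lemma isMPath_descend_ascend (hr : 0 ≤ r) (hr₁ : r ≤ 1) (hρ : 1 ≤ ρ) {v : ℝ} (hv : v ∈ Set.Icc 0 1)
    {k l : ℕ} (hvkl : v * r ^ k * ρ ^ l ≤ 1) :
    IsMPath r ρ (k + l) (glue (fun i => v * r ^ i) (fun i => v * r ^ k * ρ ^ i) k) := by
  have hvr : 0 ≤ v * r ^ k := mul_nonneg hv.1 (pow_nonneg hr k)
  refine (isMPath_geom (Or.inl rfl) hv.1 hr fun i _ => ?_).glue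
    (isMPath_geom (Or.inr rfl) hvr (by linarith) fun i hi => ?_) (by simp)
  · exact mul_le_one₀ hv.2 (pow_nonneg hr i) (pow_le_one₀ hr hr₁)
  · exact (mul_le_mul_of_nonneg_left (pow_le_pow_right₀ hρ hi) (by positivity)).trans hvkl

lemma smul_mem_Mset {x : ℕ → ℝ} (hx : x ∈ Mset r ρ) {c : ℝ} (hc : c ∈ Set.Icc 0 1) :
    c • x ∈ Mset r ρ := by
  refine ⟨fun i => ?_, fun i => ?_⟩
  · have := hx.1 i
    exact ⟨mul_nonneg hc.1 this.1, mul_le_one₀ hc.2 this.1 this.2⟩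
  · simp only [Pi.smul_apply, smul_eq_mul]
    rcases hx.2 i with h | h <;> rw [h]
    · left; ring
    · right; ring

lemma pos_of_mem_Mset (hr : 0 < r) (hρ : 0 < ρ) {x : ℕ → ℝ} (hx : x ∈ Mset r ρ) (h₀ : 0 < x 0)
    (i : ℕ) : 0 < x i := by
  induction i with
  | zero => exact h₀
  | succ i ih => rcases hx.2 i with h | h <;> rw [h] <;> positivity

lemma eq_zero_of_mem_Mset {x : ℕ → ℝ} (hx : x ∈ Mset r ρ) (h₀ : x 0 = 0) (i : ℕ) : x i = 0 := by
  induction i with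
  | zero => exact h₀
  | succ i ih => rcases hx.2 i with h | h <;> rw [h, ih, mul_zero]

lemma exists_pos_mem_Mset_near (hr : 0 < r) (hr₁ : r ≤ 1) (hρ : 0 < ρ) {x : ℕ → ℝ}
    (hx : x ∈ Mset r ρ) {δ : ℝ} (hδ : 0 < δ) :
    ∃ x' ∈ Mset r ρ, (∀ i, 0 < x' i) ∧ ∀ i, |x' i - x i| ≤ δ := by
  rcases (hx.1 0).1.lt_or_eq with h₀ | h₀
  · exact ⟨x, hx, pos_of_mem_Mset hr hρ hx h₀, fun i => by simp [hδ.le]⟩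
  · set u := min δ 1
    have hu : 0 < u := lt_min hδ one_pos
    have hr' : ∀ i : ℕ, r ^ i ≤ 1 := fun i => pow_le_one₀ hr.le hr₁
    refine ⟨fun i => u * r ^ i, mem_Mset_iff_forall_isMPath.2 fun n => isMPath_geom (Or.inl rfl)
      hu.le hr.le fun i _ => mul_le_one₀ (min_le_right _ _) (by positivity) (hr' i),
      fun i => by positivity, fun i => ?_⟩
    rw [eq_zero_of_mem_Mset hx h₀.symm, sub_zero, abs_of_pos (by positivity)]
    exact (mul_le_of_le_one_right hu.le (hr' i)).trans (min_le_left _ _)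

lemma abs_mul_sub_lt {c δ y y' : ℝ} (hc : c ∈ Set.Ioc (1 - δ) 1) (hy' : y' ∈ Set.Icc 0 1)
    (hyy' : |y' - y| ≤ δ) : |c * y' - y| < 2 * δ := by
  have hscale : |c * y' - y'| < δ := by
    rw [show c * y' - y' = -((1 - c) * y') by ring, abs_neg,
      abs_of_nonneg (mul_nonneg (by linarith [hc.2]) hy'.1)]
    exact (mul_le_of_le_one_right (by linarith [hc.2]) hy'.2).trans_lt (by linarith [hc.1])
  calc |c * y' - y| ≤ |c * y' - y'| + |y' - y| := abs_sub_le _ _ _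
    _ < 2 * δ := by linarith

lemma exists_mem_Mset_near_and_iterate_near (h : NC r ρ) {x y : ℕ → ℝ} (hx : x ∈ Mset r ρ)
    (hy : y ∈ Mset r ρ) (N : ℕ) {ε : ℝ} (hε : 0 < ε) :
    ∃ z ∈ Mset r ρ, ∃ n, (∀ i ≤ N, |z i - x i| < ε) ∧ ∀ i, |z (n + i) - y i| < ε := by
  obtain ⟨hr, hr₁, hρ, -⟩ := id h
  set δ := min (ε / 2) (1 / 2)
  have hδ : 0 < δ := lt_min (half_pos hε) one_half_pos
  have hδε : 2 * δ ≤ ε := by linarith [min_le_left (ε / 2) (1 / 2)]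
  have hδ₁ : δ < 1 := (min_le_right _ _).trans_lt one_half_lt_one
  obtain ⟨x', hx', hx'₀, hxx'⟩ := exists_pos_mem_Mset_near hr hr₁.le (by linarith) hx hδ
  obtain ⟨y', hy', hy'₀, hyy'⟩ := exists_pos_mem_Mset_near hr hr₁.le (by linarith) hy hδ
  set v := x' N
  set w := y' 0
  have hv := hx'₀ N
  have hw := hy'₀ 0
  obtain ⟨k, l, hlow, hhigh⟩ := h.exists_pow_mul_pow_mem_Ioo (α := (1 - δ) * w / v) (β := w / v)
    (by have := sub_pos.2 hδ₁; positivity) (by gcongr; exact mul_lt_of_lt_one_left hw (by linarith))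
  rw [div_lt_iff₀' hv] at hlow
  rw [lt_div_iff₀' hv] at hhigh
  set c := v * r ^ k * ρ ^ l / w
  have hcw : c * w = v * r ^ k * ρ ^ l := div_mul_cancel₀ _ hw.ne'
  have hc : c ∈ Set.Icc 0 1 := ⟨by positivity, (div_le_one hw).2 (by linarith)⟩
  have hcδ : 1 - δ < c := (lt_div_iff₀ hw).2 (by linarith)
  set p := glue (fun i => v * r ^ i) (fun i => v * r ^ k * ρ ^ i) k
  have hp : IsMPath r ρ (k + l) p :=
    isMPath_descend_ascend hr.le hr₁.le hρ.le ⟨hv.le, (hx'.1 N).2⟩ (by linarith [(hy'.1 0).2])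
  have hp₀ : glue p (c • y') (k + l) 0 = v := by simp [p, glue]
  have hpkl : p (k + l) = c * w := by
    rw [hcw]; exact glue_add (by simp) l
  refine ⟨glue x' (glue p (c • y') (k + l)) N, glue_mem_Mset (mem_Mset_iff_forall_isMPath.1 hx' N)
    (glue_mem_Mset hp (smul_mem_Mset hy' hc) hpkl) hp₀.symm, N + (k + l), fun i hi => ?_,
    fun i => ?_⟩
  · rw [glue_of_le hi]
    linarith [hxx' i]
  · rw [add_assoc, glue_add hp₀.symm, glue_add hpkl]
    exact (abs_mul_sub_lt ⟨hcδ, hc.2⟩ (hy'.1 i) (hyy' i)).trans_le hδε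

end Mahavier

lemma exists_cylinder_subset {s : Set (ℕ → ℝ)} {x : s} {U : Set s} (hU : U ∈ 𝓝 x) :
    ∃ N : ℕ, ∃ ε > 0, ∀ z : s, (∀ i ≤ N, |z.1 i - x.1 i| < ε) → z ∈ U := by
  obtain ⟨t, ht, htU⟩ := (mem_nhds_subtype s x U).1 hU
  rw [nhds_pi, Filter.mem_pi'] at ht
  obtain ⟨I, t', ht', hI⟩ := ht
  have hball : ∀ᶠ ε in 𝓝[>] (0 : ℝ), ∀ i ∈ I, Metric.ball (x.1 i) ε ⊆ t' i := by
    refine (Filter.eventually_all_finset I).2 fun i _ => ?_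
    obtain ⟨ε₀, hε₀, hε₀t⟩ := Metric.mem_nhds_iff.1 (ht' i)
    filter_upwards [Ioo_mem_nhdsGT hε₀] with ε hε
    exact (Metric.ball_subset_ball hε.2.le).trans hε₀t
  obtain ⟨ε, hε, hε₀⟩ := (hball.and self_mem_nhdsWithin).exists
  refine ⟨I.sup id, ε, hε₀, fun z hz => htU (hI fun i hi => hε i hi ?_)⟩
  rw [Metric.mem_ball, Real.dist_eq]
  exact hz i (Finset.le_sup (f := id) hi)

lemma shiftM_iterate_apply {r ρ : ℝ} (n : ℕ) (x : Mset r ρ) (i : ℕ) :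
    ((shiftM r ρ)^[n] x).1 i = x.1 (n + i) := by
  induction n generalizing x with
  | zero => simp
  | succ n ih =>
    rw [Function.iterate_succ_apply, ih]
    simp only [shiftM, Nat.add_right_comm]

/-- The shift map on the Lelek fan `M_{r,ρ}` is topologically transitive. -/
theorem stmt0 (r ρ : ℝ) (h : NC r ρ) :
    ∀ U V : Set (Mset r ρ), IsOpen U → IsOpen V → U.Nonempty → V.Nonempty →
      ∃ n : ℕ, ((shiftM r ρ)^[n] '' U ∩ V).Nonempty := by
  rintro U V hU hV ⟨x, hxU⟩ ⟨y, hyV⟩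
  obtain ⟨N, ε₁, hε₁, hxU'⟩ := exists_cylinder_subset (hU.mem_nhds hxU)
  obtain ⟨_, ε₂, hε₂, hyV'⟩ := exists_cylinder_subset (hV.mem_nhds hyV)
  obtain ⟨z, hz, n, hzx, hzy⟩ :=
    exists_mem_Mset_near_and_iterate_near h x.2 y.2 N (lt_min hε₁ hε₂)
  refine ⟨n, _, ⟨⟨z, hz⟩, hxU' _ fun i hi => (hzx i hi).trans_le (min_le_left _ _), rfl⟩,
    hyV' _ fun i _ => ?_⟩
  rw [shiftM_iterate_apply]
  exact (hzy i).trans_le (min_le_right _ _)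
end

section
/- Let (r,ρ) ∈ 𝒩𝒞. Then there exists a point z ∈ M_{r,ρ} whose forward orbit {z, σ_{r,ρ}(z), σ_{r,ρ}^2(z), σ_{r,ρ}^3(z), …} is dense in M_{r,ρ}. -/
set_option linter.unusedSectionVars false



set_option maxHeartbeats 2000000 in
theorem semigroup_dense (α β : ℝ) (hα : 0 < α) (hβ : β < 0)
    (hirr : ∀ k l : ℤ, (k:ℝ) * β = (l:ℝ) * α → k = 0 ∧ l = 0) :
    ∀ c d : ℝ, c < d → ∃ P Q : ℕ, c < P * α + Q * β ∧ (P:ℝ) * α + Q * β < d := by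
  intro c d hcd
  obtain ⟨θ, hθdef⟩ : ∃ θ:ℝ, θ = α / (-β) := ⟨_, rfl⟩
  have hnb : (0:ℝ) < -β := by linarith
  have hbne : β ≠ 0 := ne_of_lt hβ
  have hθ : 0 < θ := hθdef ▸ div_pos hα hnb
  have mulθ : ∀ n : ℕ, (-β) * ((n:ℝ)*θ) = n * α := by
    intro n; rw [hθdef]; field_simp
  have fract_eq : ∀ n : ℕ, (-β) * Int.fract ((n:ℝ) * θ) = n * α + (⌊(n:ℝ)*θ⌋ : ℤ) * β := by
    intro n
    rw [Int.fract]
    linear_combination (mulθ n)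
  have key : ∃ (p q : ℕ), 0 < p ∧ (p:ℝ) * α + q * β ≠ 0 ∧ |(p:ℝ) * α + q * β| < d - c := by
    have hdc : 0 < d - c := by linarith
    obtain ⟨ε, hε⟩ : ∃ ε:ℝ, ε = (d - c) / (-β) := ⟨_, rfl⟩
    have hε0 : 0 < ε := hε ▸ div_pos hdc hnb
    obtain ⟨N, hN⟩ := exists_nat_gt (1 / ε)
    have hN0 : 0 < (N:ℝ) := lt_trans (by positivity) hN
    have main : ∀ n1 n2 : ℕ, n1 < n2 →
        |Int.fract ((n2:ℝ) * θ) - Int.fract ((n1:ℝ) * θ)| < 1 / N →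
        ∃ (p q : ℕ), 0 < p ∧ (p:ℝ) * α + q * β ≠ 0 ∧ |(p:ℝ) * α + q * β| < d - c := by
      intro n1 n2 h12 hfr
      have hmono : ⌊(n1:ℝ)*θ⌋ ≤ ⌊(n2:ℝ)*θ⌋ := by
        apply Int.floor_le_floor
        have : (n1:ℝ) ≤ n2 := by exact_mod_cast h12.le
        nlinarith
      have hval : ((n2 - n1 : ℕ):ℝ) * α + ((⌊(n2:ℝ)*θ⌋ - ⌊(n1:ℝ)*θ⌋).toNat : ℝ) * β
          = (-β) * (Int.fract ((n2:ℝ) * θ) - Int.fract ((n1:ℝ) * θ)) := by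
        have e2 := fract_eq n2
        have e1 := fract_eq n1
        have hc1 : ((n2 - n1 : ℕ):ℝ) = (n2:ℝ) - n1 := by
          push_cast [Nat.cast_sub h12.le]; ring
        have hc2 : (((⌊(n2:ℝ)*θ⌋ - ⌊(n1:ℝ)*θ⌋).toNat : ℕ):ℝ) = (⌊(n2:ℝ)*θ⌋:ℝ) - (⌊(n1:ℝ)*θ⌋:ℝ) := by
          rw [← Int.cast_natCast, Int.toNat_of_nonneg (by omega)]; push_cast; ring
        rw [hc1, hc2]
        linear_combination e1 - e2
      refine ⟨n2 - n1, (⌊(n2:ℝ)*θ⌋ - ⌊(n1:ℝ)*θ⌋).toNat, by omega, ?_, ?_⟩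
      · rw [hval]
        intro h0
        have hfeq : Int.fract ((n2:ℝ) * θ) = Int.fract ((n1:ℝ) * θ) := by
          rcases mul_eq_zero.mp h0 with h | h
          · linarith
          · linarith
        have hrel : ((⌊(n1:ℝ)*θ⌋ - ⌊(n2:ℝ)*θ⌋ : ℤ):ℝ) * β = (((n2:ℤ)) - ((n1:ℤ)) : ℤ) * α := by
          have f2 : Int.fract ((n2:ℝ)*θ) = (n2:ℝ)*θ - ⌊(n2:ℝ)*θ⌋ := rfl
          have f1 : Int.fract ((n1:ℝ)*θ) = (n1:ℝ)*θ - ⌊(n1:ℝ)*θ⌋ := rfl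
          rw [f2, f1] at hfeq
          have m2 := mulθ n2
          have m1 := mulθ n1
          push_cast
          nlinarith [hfeq, m2, m1]
        obtain ⟨hk, hl⟩ := hirr _ _ hrel
        omega
      · rw [hval, abs_mul, abs_of_pos hnb]
        calc (-β) * |Int.fract ((n2:ℝ) * θ) - Int.fract ((n1:ℝ) * θ)|
            < (-β) * (1 / N) := mul_lt_mul_of_pos_left hfr hnb
          _ ≤ (-β) * ε := by
              apply mul_le_mul_of_nonneg_left _ hnb.le
              rw [div_le_iff₀ hN0]
              rw [div_lt_iff₀ hε0] at hN
              nlinarith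
          _ = d - c := by rw [hε]; field_simp
    have hfr : ∀ n : ℕ, Int.fract ((n:ℝ) * θ) * N < N := by
      intro n
      have h1 := Int.fract_lt_one ((n:ℝ) * θ)
      nlinarith [Int.fract_nonneg ((n:ℝ) * θ)]
    obtain ⟨f, hf⟩ : ∃ f : Fin (N+1) → Fin N, f = fun n => ⟨⌊Int.fract ((n:ℝ) * θ) * N⌋₊,
      (Nat.floor_lt (mul_nonneg (Int.fract_nonneg _) hN0.le)).mpr (by
        have := hfr (n:ℕ); exact_mod_cast this)⟩ := ⟨_, rfl⟩
    obtain ⟨i, j, hij, hfij⟩ := Fintype.exists_ne_map_eq_of_card_lt f (by simp)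
    have hclose : ∀ a b : Fin (N+1), f a = f b →
        |Int.fract ((b:ℝ) * θ) - Int.fract ((a:ℝ) * θ)| < 1 / N := by
      intro a b hab
      have ha0 : 0 ≤ Int.fract ((a:ℝ)*θ) * N := mul_nonneg (Int.fract_nonneg _) hN0.le
      have hb0 : 0 ≤ Int.fract ((b:ℝ)*θ) * N := mul_nonneg (Int.fract_nonneg _) hN0.le
      have h1 : (⌊Int.fract ((a:ℝ)*θ) * N⌋₊ : ℝ) ≤ Int.fract ((a:ℝ)*θ) * N := Nat.floor_le ha0
      have h2 : Int.fract ((a:ℝ)*θ) * N < ⌊Int.fract ((a:ℝ)*θ) * N⌋₊ + 1 := Nat.lt_floor_add_one _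
      have h3 : (⌊Int.fract ((b:ℝ)*θ) * N⌋₊ : ℝ) ≤ Int.fract ((b:ℝ)*θ) * N := Nat.floor_le hb0
      have h4 : Int.fract ((b:ℝ)*θ) * N < ⌊Int.fract ((b:ℝ)*θ) * N⌋₊ + 1 := Nat.lt_floor_add_one _
      have heq : ⌊Int.fract ((a:ℝ)*θ) * N⌋₊ = ⌊Int.fract ((b:ℝ)*θ) * N⌋₊ := by
        have h5 := congrArg Fin.val hab
        rw [hf] at h5
        simpa using h5
      rw [heq] at h1 h2
      have hinv : (1:ℝ)/N * N = 1 := by field_simp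
      rw [abs_lt]
      constructor <;> nlinarith [hN0, hinv]
    rcases hij.lt_or_gt with hlt | hlt
    · exact main i j (by exact_mod_cast hlt) (hclose i j hfij)
    · exact main j i (by exact_mod_cast hlt) (hclose j i hfij.symm)
  obtain ⟨p, q, hp, hδne, hδsm⟩ := key
  obtain ⟨δ, hδ⟩ : ∃ δ:ℝ, δ = (p:ℝ) * α + q * β := ⟨_, rfl⟩
  rw [← hδ] at hδne hδsm
  rcases hδne.lt_or_gt with hneg | hpos
  · obtain ⟨m, hm⟩ := exists_nat_ge (d / α)
    have hma : d ≤ m * α := by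
      rw [div_le_iff₀ hα] at hm; linarith
    have hhi0 : d - m * α ≤ 0 := by linarith
    have hdiv0 : 0 ≤ (d - m * α) / δ := by
      have h7 := div_nonneg (neg_nonneg.2 hhi0) (neg_nonneg.2 hneg.le)
      rwa [neg_div_neg_eq] at h7
    obtain ⟨j, hj⟩ : ∃ j:ℕ, j = ⌊(d - m * α) / δ⌋₊ + 1 := ⟨_, rfl⟩
    have hj1 : (j:ℝ) * δ < d - m * α := by
      have h6 := Nat.lt_floor_add_one ((d - m * α) / δ)
      rw [div_lt_iff_of_neg hneg] at h6
      rw [hj]; push_cast; linarith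
    have hj2 : c - m * α < (j:ℝ) * δ := by
      have h5 : (⌊(d - m * α) / δ⌋₊ : ℝ) ≤ (d - m * α) / δ := Nat.floor_le hdiv0
      rw [le_div_iff_of_neg hneg] at h5
      have habs : |δ| < d - c := hδsm
      rw [abs_of_neg hneg] at habs
      rw [hj]; push_cast
      nlinarith
    refine ⟨j * p + m, j * q, ?_, ?_⟩
    · push_cast; nlinarith [hj2]
    · push_cast; rw [hδ] at hj1 hj2; nlinarith [hj1]
  · obtain ⟨m, hm⟩ := exists_nat_ge ((-c) / (-β))
    have hmb : -c ≤ m * (-β) := by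
      rw [div_le_iff₀ hnb] at hm; linarith
    have hlo0 : 0 ≤ c - m * β := by nlinarith
    obtain ⟨j, hj⟩ : ∃ j:ℕ, j = ⌊(c - m * β) / δ⌋₊ + 1 := ⟨_, rfl⟩
    have hj1 : c - m * β < (j:ℝ) * δ := by
      have h6 := Nat.lt_floor_add_one ((c - m * β) / δ)
      rw [div_lt_iff₀ hpos] at h6
      rw [hj]; push_cast; linarith
    have hj2 : (j:ℝ) * δ < d - m * β := by
      have h5 : (⌊(c - m * β) / δ⌋₊ : ℝ) ≤ (c - m * β) / δ := Nat.floor_le (by positivity)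
      rw [le_div_iff₀ hpos] at h5
      have habs : |δ| < d - c := hδsm
      rw [abs_of_pos hpos] at habs
      rw [hj]; push_cast
      nlinarith
    refine ⟨j * p, j * q + m, ?_, ?_⟩
    · push_cast; nlinarith [hj1]
    · push_cast; nlinarith [hj2]


open List in
theorem prefix_cases' {α : Type*} {p A B : List α} (h : p <+: A ++ B) :
    p <+: A ∨ ∃ s, s <+: B ∧ p = A ++ s := by
  rcases le_or_gt p.length A.length with hl | hl
  · exact Or.inl (prefix_of_prefix_length_le h (A.prefix_append B) (by simpa using hl))
  · right
    have hA : A <+: p := prefix_of_prefix_length_le (A.prefix_append B) h (by simpa using hl.le)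
    obtain ⟨s, rfl⟩ := hA
    exact ⟨s, (prefix_append_right_inj A).mp h, rfl⟩

namespace NCa

noncomputable def lv (r ρ : ℝ) (b : Bool) : ℝ := if b then ρ else r

noncomputable def lp (r ρ : ℝ) (L : List Bool) : ℝ := (L.map (lv r ρ)).prod

def Ok (r ρ : ℝ) (L : List Bool) : Prop := ∀ p, p <+: L → lp r ρ p ≤ 1

def Valid (r ρ : ℝ) (w : List Bool) (a b : ℚ) : Prop :=
  0 < a ∧ a < b ∧ (b:ℝ) ≤ 1 ∧ ∀ p, p <+: w → (b:ℝ) * lp r ρ p ≤ 1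

section basic
variable {r ρ : ℝ} (hr0 : 0 < r) (hρ0 : 0 < ρ)

theorem lp_nil : lp r ρ [] = 1 := by simp [lp]

theorem lp_append (L M : List Bool) : lp r ρ (L ++ M) = lp r ρ L * lp r ρ M := by
  simp [lp]

include hr0 hρ0 in
theorem lv_pos (b : Bool) : 0 < lv r ρ b := by cases b <;> simpa [lv]

include hr0 hρ0 in
theorem lp_pos (L : List Bool) : 0 < lp r ρ L := by
  apply List.prod_pos
  intro x hx
  obtain ⟨b, _, rfl⟩ := List.mem_map.mp hx
  exact lv_pos hr0 hρ0 b

theorem lp_replicate_false (n : ℕ) : lp r ρ (List.replicate n false) = r ^ n := by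
  simp [lp, lv]

theorem lp_replicate_true (n : ℕ) : lp r ρ (List.replicate n true) = ρ ^ n := by
  simp [lp, lv]

theorem Ok.le_one {L : List Bool} (h : Ok r ρ L) : lp r ρ L ≤ 1 := h L (List.prefix_refl L)

theorem ok_nil : Ok r ρ [] := by
  intro p hp
  rw [List.prefix_nil.mp hp, lp_nil]

theorem Ok.append {L u : List Bool} (h : Ok r ρ L)
    (hu : ∀ s, s <+: u → lp r ρ L * lp r ρ s ≤ 1) : Ok r ρ (L ++ u) := by
  intro p hp
  rcases prefix_cases' hp with hp | ⟨s, hs, rfl⟩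
  · exact h p hp
  · rw [lp_append]; exact hu s hs

theorem prefix_replicate {s : List Bool} {n : ℕ} {x : Bool} (h : s <+: List.replicate n x) :
    s = List.replicate s.length x ∧ s.length ≤ n := by
  have hl : s.length ≤ n := by simpa using h.length_le
  have := List.prefix_iff_eq_take.mp h
  rw [List.take_replicate] at this
  rw [this]
  simp [Nat.min_eq_left hl, hl]
theorem prefix_single {x : Bool} {s : List Bool} (hs : s <+: [x]) : s = [] ∨ s = [x] := by
  rcases hs with ⟨t, ht⟩
  cases s with
  | nil => exact Or.inl rfl
  | cons b s' =>
    rw [List.cons_append] at ht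
    injection ht with h1 h2
    rcases List.append_eq_nil_iff.mp h2 with ⟨rfl, rfl⟩
    exact Or.inr (by rw [h1])

theorem lp_single (b : Bool) : lp r ρ [b] = lv r ρ b := by simp [lp]

include hr0 hρ0 in
theorem lp_le_one_single (hr1 : r < 1) {s : List Bool} (hs : s <+: [false]) : lp r ρ s ≤ 1 := by
  rcases prefix_single hs with rfl | rfl
  · rw [lp_nil]
  · rw [lp_single]; simp [lv]; linarith

end basic

end NCa
namespace NCa
variable {r ρ : ℝ}

theorem log_irr (h : NC r ρ) : ∀ k l : ℤ, (k:ℝ) * Real.log r = (l:ℝ) * Real.log ρ → k = 0 ∧ l = 0 := by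
  intro k l hkl
  apply (h.2.2.2 k l).mp
  have hr0 := h.1
  have hρ0 : (0:ℝ) < ρ := lt_trans one_pos h.2.2.1
  have h1 : Real.log (r ^ k) = Real.log (ρ ^ l) := by
    rw [Real.log_zpow, Real.log_zpow]; exact hkl
  calc r ^ k = Real.exp (Real.log (r ^ k)) := (Real.exp_log (zpow_pos hr0 k)).symm
    _ = Real.exp (Real.log (ρ ^ l)) := by rw [h1]
    _ = ρ ^ l := Real.exp_log (zpow_pos hρ0 l)

theorem steer_num (h : NC r ρ) {t a b : ℝ} (ht0 : 0 < t) (ha : 0 < a) (hab : a < b) :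
    ∃ Q P : ℕ, a < t * r ^ Q * ρ ^ P ∧ t * r ^ Q * ρ ^ P < b := by
  have hr0 := h.1; have hr1 := h.2.1; have hρ1 := h.2.2.1
  have hρ0 : (0:ℝ) < ρ := lt_trans one_pos hρ1
  have hb0 : 0 < b := lt_trans ha hab
  have hα : 0 < Real.log ρ := Real.log_pos hρ1
  have hβ : Real.log r < 0 := Real.log_neg hr0 hr1
  obtain ⟨P, Q, h1, h2⟩ := semigroup_dense (Real.log ρ) (Real.log r) hα hβ (log_irr h)
    (Real.log a - Real.log t) (Real.log b - Real.log t)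
    (by have := Real.log_lt_log ha hab; linarith)
  have hlog : Real.log (t * r ^ Q * ρ ^ P)
      = Real.log t + Q * Real.log r + P * Real.log ρ := by
    rw [Real.log_mul (by positivity) (by positivity),
      Real.log_mul (ne_of_gt ht0) (by positivity), Real.log_pow, Real.log_pow]
  refine ⟨Q, P, ?_, ?_⟩
  · calc a = Real.exp (Real.log a) := (Real.exp_log ha).symm
      _ < Real.exp (Real.log (t * r^Q*ρ^P)) := by
          apply Real.exp_lt_exp.mpr; rw [hlog]; linarith
      _ = _ := Real.exp_log (by positivity)
  · calc t * r^Q*ρ^P = Real.exp (Real.log (t * r^Q*ρ^P)) := (Real.exp_log (by positivity)).symm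
      _ < Real.exp (Real.log b) := by
          apply Real.exp_lt_exp.mpr; rw [hlog]; linarith
      _ = b := Real.exp_log hb0

theorem steer_word (h : NC r ρ) {t a b : ℝ} (ht0 : 0 < t) (ht1 : t ≤ 1)
    (ha : 0 < a) (hab : a < b) (hb1 : b ≤ 1) :
    ∃ u : List Bool, (∀ s, s <+: u → t * lp r ρ s ≤ 1) ∧
      a < t * lp r ρ u ∧ t * lp r ρ u < b := by
  have hr0 := h.1; have hr1 := h.2.1; have hρ1 := h.2.2.1
  have hρ0 : (0:ℝ) < ρ := lt_trans one_pos hρ1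
  obtain ⟨Q, P, h1, h2⟩ := steer_num h ht0 ha hab
  refine ⟨List.replicate Q false ++ List.replicate P true, ?_, ?_, ?_⟩
  · intro s hs
    rcases prefix_cases' hs with hs | ⟨s', hs', rfl⟩
    · obtain ⟨hrep, hlen⟩ := prefix_replicate hs
      rw [hrep, lp_replicate_false]
      have : r ^ s.length ≤ 1 := pow_le_one₀ hr0.le hr1.le
      nlinarith
    · obtain ⟨hrep, hlen⟩ := prefix_replicate hs'
      rw [lp_append, lp_replicate_false, hrep, lp_replicate_true]
      have hmono : ρ ^ s'.length ≤ ρ ^ P := pow_le_pow_right₀ hρ1.le hlen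
      have hrQ : (0:ℝ) < r ^ Q := by positivity
      have hfin : t * r ^ Q * ρ ^ P < 1 := lt_of_lt_of_le h2 hb1
      nlinarith [mul_le_mul_of_nonneg_left hmono (le_of_lt (mul_pos ht0 hrQ))]
  · rw [lp_append, lp_replicate_false, lp_replicate_true]
    calc a < t * r ^ Q * ρ ^ P := h1
      _ = t * (r ^ Q * ρ ^ P) := by ring
  · rw [lp_append, lp_replicate_false, lp_replicate_true]
    calc t * (r ^ Q * ρ ^ P) = t * r ^ Q * ρ ^ P := by ring
      _ < b := h2

theorem exists_block (h : NC r ρ) (L : List Bool) (hL : Ok r ρ L) (w : List Bool) (a b : ℚ) :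
    ∃ u : List Bool, Ok r ρ (L ++ u) ∧ 0 < u.length ∧
      (Valid r ρ w a b →
        ∃ v, (v ++ w) <+: u ∧ (a:ℝ) < lp r ρ (L ++ v) ∧ lp r ρ (L ++ v) < b) := by
  have hr0 := h.1; have hr1 := h.2.1; have hρ1 := h.2.2.1
  have hρ0 : (0:ℝ) < ρ := lt_trans one_pos hρ1
  by_cases hV : Valid r ρ w a b
  · obtain ⟨ha, hab, hb1, hw⟩ := hV
    have ha' : (0:ℝ) < a := by exact_mod_cast ha
    have hab' : (a:ℝ) < b := by exact_mod_cast hab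
    obtain ⟨u0, hu0pre, hu0a, hu0b⟩ :=
      steer_word h (lp_pos hr0 hρ0 L) hL.le_one ha' hab' hb1
    refine ⟨u0 ++ w ++ [false], ?_, by simp, fun _ => ⟨u0, ?_, ?_, ?_⟩⟩
    · apply hL.append
      intro s hs
      rw [List.append_assoc] at hs
      rcases prefix_cases' hs with hs | ⟨s', hs', rfl⟩
      · exact hu0pre s hs
      · rcases prefix_cases' hs' with hs' | ⟨s'', hs'', rfl⟩
        · have h3 := hw s' hs'
          have h4 : 0 < lp r ρ s' := lp_pos hr0 hρ0 s'
          rw [lp_append]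
          nlinarith
        · have h5 : lp r ρ s'' ≤ 1 := lp_le_one_single hr0 hρ0 hr1 hs''
          have hbw := hw w (List.prefix_refl w)
          have pw := lp_pos hr0 hρ0 w
          have ps := lp_pos hr0 hρ0 s''
          rw [lp_append, lp_append]
          calc lp r ρ L * (lp r ρ u0 * (lp r ρ w * lp r ρ s''))
              = (lp r ρ L * lp r ρ u0) * (lp r ρ w * lp r ρ s'') := by ring
            _ ≤ (b:ℝ) * (lp r ρ w * lp r ρ s'') :=
                mul_le_mul_of_nonneg_right hu0b.le (mul_pos pw ps).le
            _ = ((b:ℝ) * lp r ρ w) * lp r ρ s'' := by ring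
            _ ≤ 1 * lp r ρ s'' := mul_le_mul_of_nonneg_right hbw ps.le
            _ = lp r ρ s'' := one_mul _
            _ ≤ 1 := h5
    · exact ⟨[false], rfl⟩
    · rwa [lp_append]
    · rwa [lp_append]
  · refine ⟨[false], ?_, by simp, fun hV' => absurd hV' hV⟩
    apply hL.append
    intro s hs
    have h5 : lp r ρ s ≤ 1 := lp_le_one_single hr0 hρ0 hr1 hs
    nlinarith [lp_pos hr0 hρ0 L, hL.le_one, lp_pos hr0 hρ0 s]
end NCa

namespace NCa
section helpers
variable {α : Type*}

theorem getD_append_off (A B : List α) (i : ℕ) (d : α) :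
    (A ++ B).getD (A.length + i) d = B.getD i d := by
  rw [List.getD_eq_getElem?_getD, List.getD_eq_getElem?_getD,
    List.getElem?_append_right (Nat.le_add_right _ _)]
  simp

theorem take_eq_of_prefix {p L : List α} (n : ℕ) (h : p <+: L) (hn : n ≤ p.length) :
    p.take n = L.take n := by
  obtain ⟨t, rfl⟩ := h
  rw [List.take_append_of_le_length hn]

theorem getD_append_left (A B : List α) (i : ℕ) (hi : i < A.length) (d : α) :
    (A ++ B).getD i d = A.getD i d := by
  rw [List.getD_eq_getElem?_getD, List.getD_eq_getElem?_getD, List.getElem?_append_left hi]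

theorem take_succ_getD (L : List α) (n : ℕ) (h : n < L.length) (d : α) :
    L.take (n+1) = L.take n ++ [L.getD n d] := by
  rw [List.take_succ, List.getD_eq_getElem?_getD, List.getElem?_eq_getElem h]
  simp
end helpers

variable {r ρ : ℝ}

theorem exists_point (h : NC r ρ) :
    ∃ z : ℕ → ℝ, (∀ i, z i ∈ Set.Icc (0:ℝ) 1) ∧
      (∀ i, z (i+1) = r * z i ∨ z (i+1) = ρ * z i) ∧
      ∀ (w : List Bool) (a b : ℚ), Valid r ρ w a b →
        ∃ k, (a:ℝ) < z k ∧ z k < b ∧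
          ∀ i, i < w.length → z (k+i+1) = lv r ρ (w.getD i false) * z (k+i) := by
  have hr0 := h.1; have hr1 := h.2.1; have hρ1 := h.2.2.1
  have hρ0 : (0:ℝ) < ρ := lt_trans one_pos hρ1
  obtain ⟨e, he⟩ := exists_surjective_nat (List Bool × ℚ × ℚ)
  choose U hOk hlen hsat using
    fun (s : {L : List Bool // Ok r ρ L}) (j : ℕ) =>
      exists_block h s.1 s.2 (e j).1 (e j).2.1 (e j).2.2
  let F : ℕ → {L : List Bool // Ok r ρ L} :=
    fun n => Nat.rec ⟨[], ok_nil⟩ (fun j s => ⟨s.1 ++ U s j, hOk s j⟩) n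
  have hFs : ∀ j, (F (j+1)).1 = (F j).1 ++ U (F j) j := fun j => rfl
  have hchain : ∀ j k, j ≤ k → (F j).1 <+: (F k).1 := by
    intro j k hjk
    induction k with
    | zero => rw [Nat.le_zero.mp hjk]
    | succ k ih =>
      rcases Nat.lt_or_ge j (k+1) with hlt | hge
      · exact (ih (Nat.lt_succ_iff.mp hlt)).trans ⟨U (F k) k, (hFs k).symm⟩
      · rw [Nat.le_antisymm hjk hge]
  have hlenF : ∀ j, j ≤ (F j).1.length := by
    intro j
    induction j with
    | zero => exact Nat.zero_le _
    | succ j ih =>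
      have := hlen (F j) j
      rw [hFs j, List.length_append]
      omega
  obtain ⟨z, hz⟩ : ∃ z : ℕ → ℝ, z = fun n => lp r ρ ((F n).1.take n) := ⟨_, rfl⟩
  have htake : ∀ j n, n ≤ (F j).1.length → lp r ρ ((F j).1.take n) = z n := by
    intro j n hn
    have heq : (F j).1.take n = (F n).1.take n := by
      rcases le_total j n with hjn | hnj
      · exact take_eq_of_prefix n (hchain j n hjn) hn
      · exact (take_eq_of_prefix n (hchain n j hnj) (hlenF n)).symm
    rw [hz, heq]
  have hz_pos : ∀ n, 0 < z n := by
    intro n; rw [hz]; exact lp_pos hr0 hρ0 _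
  have hz_le : ∀ n, z n ≤ 1 := by
    intro n; rw [hz]; exact (F n).2 _ (List.take_prefix n (F n).1)
  have hz_letter : ∀ j n, n < (F j).1.length →
      z (n+1) = lv r ρ ((F j).1.getD n false) * z n := by
    intro j n hn
    rw [← htake j (n+1) hn, take_succ_getD (F j).1 n hn false, lp_append, lp_single,
      htake j n hn.le, mul_comm]
  refine ⟨z, fun i => ⟨(hz_pos i).le, hz_le i⟩, ?_, ?_⟩
  · intro i
    have hi : i < (F (i+1)).1.length := Nat.lt_of_lt_of_le (Nat.lt_succ_self i) (hlenF (i+1))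
    have := hz_letter (i+1) i hi
    cases hb : ((F (i+1)).1.getD i false) with
    | false => left; rw [this, hb]; simp [lv]
    | true => right; rw [this, hb]; simp [lv]
  · intro w a b hV
    obtain ⟨j, hej⟩ := he (w, a, b)
    have hs := hsat (F j) j
    rw [hej] at hs
    obtain ⟨v, hvw, hva, hvb⟩ := hs hV
    have hA : ((F j).1 ++ v) ++ w <+: (F (j+1)).1 := by
      rw [hFs j, List.append_assoc]
      exact (List.prefix_append_right_inj (F j).1).mpr hvw
    have hApre : (F j).1 ++ v <+: (F (j+1)).1 := (((F j).1 ++ v).prefix_append w).trans hA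
    have hklen : (F j).1.length + v.length + w.length ≤ (F (j+1)).1.length := by
      have h9 := hA.length_le
      rw [List.length_append, List.length_append] at h9
      exact h9
    have hzk : z ((F j).1.length + v.length) = lp r ρ ((F j).1 ++ v) := by
      rw [← htake (j+1) ((F j).1.length + v.length) (by omega)]
      congr 1
      have h10 := List.prefix_iff_eq_take.mp hApre
      rw [List.length_append] at h10
      exact h10.symm
    refine ⟨(F j).1.length + v.length, by rw [hzk]; exact hva, by rw [hzk]; exact hvb, ?_⟩
    intro i hi
    have hlt : (F j).1.length + v.length + i < (F (j+1)).1.length := by omega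
    rw [hz_letter (j+1) _ hlt]
    congr 2
    obtain ⟨rest, hrest⟩ := hA
    rw [← hrest, List.append_assoc, List.append_assoc]
    rw [show (F j).1.length + v.length + i = (F j).1.length + (v.length + i) by omega]
    rw [getD_append_off, getD_append_off, getD_append_left _ _ _ hi]
end NCa

namespace NCa
variable {r ρ : ℝ}

theorem getD_map_range {β : Type*} (f : ℕ → β) (N i : ℕ) (hi : i < N) (d : β) :
    (((List.range N).map f).getD i d) = f i := by
  rw [List.getD_eq_getElem?_getD, List.getElem?_map, List.getElem?_range hi]
  rfl

theorem approx (h : NC r ρ) :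
    ∃ z : ℕ → ℝ, z ∈ Mset r ρ ∧ ∀ m ∈ Mset r ρ, ∀ N : ℕ, ∀ ε : ℝ, 0 < ε →
      ∃ n : ℕ, ∀ i ≤ N, |z (i + n) - m i| < ε := by
  have hr0 := h.1; have hr1 := h.2.1; have hρ1 := h.2.2.1
  have hρ0 : (0:ℝ) < ρ := lt_trans one_pos hρ1
  obtain ⟨z, hz1, hz2, hz3⟩ := exists_point h
  refine ⟨z, ⟨hz1, hz2⟩, ?_⟩
  intro m hm N ε hε
  by_cases hm0 : m 0 = 0
  · -- m is identically zero
    have hall : ∀ i, m i = 0 := by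
      intro i
      induction i with
      | zero => exact hm0
      | succ i ih => rcases hm.2 i with h' | h' <;> rw [h', ih, mul_zero]
    obtain ⟨qb, hqb1, hqb2⟩ := exists_rat_btwn (show (0:ℝ) < min ε 1 from lt_min hε one_pos)
    obtain ⟨qa, hqa1, hqa2⟩ := exists_rat_btwn hqb1
    have hV : Valid r ρ (List.replicate N false) qa qb := by
      refine ⟨by exact_mod_cast hqa1, by exact_mod_cast hqa2, ?_, ?_⟩
      · have : (qb:ℝ) < 1 := lt_of_lt_of_le hqb2 (min_le_right _ _)
        linarith
      · intro p hp
        obtain ⟨hrep, hlen⟩ := prefix_replicate hp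
        rw [hrep, lp_replicate_false]
        have h1 : r ^ p.length ≤ 1 := pow_le_one₀ hr0.le hr1.le
        have h2 : (qb:ℝ) < 1 := lt_of_lt_of_le hqb2 (min_le_right _ _)
        nlinarith
    obtain ⟨k, hka, hkb, hkw⟩ := hz3 _ _ _ hV
    have hdec : ∀ i ≤ N, z (k + i) ≤ z k := by
      intro i hi
      induction i with
      | zero => simp
      | succ i ih =>
        have hlt : i < N := by omega
        have h15 := hkw i (by simpa using hlt)
        rw [show (List.replicate N false).getD i false = false by
          rw [List.getD_eq_getElem?_getD, List.getElem?_replicate]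
          split <;> rfl] at h15
        rw [show lv r ρ false = r from by simp [lv]] at h15
        have h13 := ih (by omega)
        have h14 := (hz1 (k+i)).1
        rw [show k + (i+1) = k + i + 1 by omega, h15]
        nlinarith
    refine ⟨k, ?_⟩
    intro i hi
    rw [hall i, sub_zero, abs_of_nonneg (hz1 (i+k)).1]
    have h3 := hdec i hi
    have h4 : (qb:ℝ) < ε := lt_of_lt_of_le hqb2 (min_le_left _ _)
    have h5 : z (i + k) = z (k + i) := by rw [Nat.add_comm]
    linarith [h5 ▸ h3]
  · -- m 0 > 0
    have hm00 : 0 < m 0 := lt_of_le_of_ne (hm.1 0).1 (Ne.symm hm0)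
    have hmpos : ∀ i, 0 < m i := by
      intro i
      induction i with
      | zero => exact hm00
      | succ i ih => rcases hm.2 i with h' | h' <;> rw [h'] <;> positivity
    have hwf : ∀ i, ∃ b : Bool, m (i+1) = lv r ρ b * m i := by
      intro i
      rcases hm.2 i with h' | h'
      · exact ⟨false, by simpa [lv] using h'⟩
      · exact ⟨true, by simpa [lv] using h'⟩
    choose wf hwfs using hwf
    obtain ⟨Pi, hPi⟩ : ∃ Pi : ℕ → ℝ, Pi = fun i => lp r ρ ((List.range i).map wf) := ⟨_, rfl⟩
    have hPi0 : Pi 0 = 1 := by rw [hPi]; simp [lp_nil]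
    have hPisucc : ∀ i, Pi (i+1) = Pi i * lv r ρ (wf i) := by
      intro i
      rw [hPi]
      show lp r ρ ((List.range (i+1)).map wf) = _
      rw [List.range_succ, List.map_append, lp_append]
      simp [lp_single]
    have hPipos : ∀ i, 0 < Pi i := by
      intro i; rw [hPi]; exact lp_pos hr0 hρ0 _
    have hmeq : ∀ i, m i = m 0 * Pi i := by
      intro i
      induction i with
      | zero => rw [hPi0, mul_one]
      | succ i ih => rw [hwfs i, hPisucc, ih]; ring
    have hlv_le : ∀ b, lv r ρ b ≤ ρ := by
      intro b; cases b <;> simp [lv] <;> linarith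
    have hPi_le : ∀ i, Pi i ≤ ρ ^ i := by
      intro i
      induction i with
      | zero => rw [hPi0]; simp
      | succ i ih =>
        rw [hPisucc, pow_succ]
        have := hlv_le (wf i)
        nlinarith [hPipos i, lv_pos hr0 hρ0 (wf i), pow_pos hρ0 i]
    have hρN : (0:ℝ) < ρ ^ N := pow_pos hρ0 N
    have hPi_leN : ∀ i ≤ N, Pi i ≤ ρ ^ N := by
      intro i hi
      calc Pi i ≤ ρ ^ i := hPi_le i
        _ ≤ ρ ^ N := pow_le_pow_right₀ hρ1.le hi
    -- choose rationals
    obtain ⟨ε', hε'⟩ : ∃ ε' : ℝ, ε' = min (ε / ρ ^ N) (m 0) := ⟨_, rfl⟩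
    have hε'0 : 0 < ε' := by rw [hε']; exact lt_min (by positivity) hm00
    obtain ⟨qb, hqb1, hqb2⟩ := exists_rat_btwn (show m 0 - ε'/2 < m 0 by linarith)
    obtain ⟨qa, hqa1, hqa2⟩ := exists_rat_btwn hqb1
    have hqb0 : (0:ℝ) < qb := by
      have : ε' ≤ m 0 := hε' ▸ min_le_right _ _
      linarith
    have hqa0 : (0:ℝ) < qa := by
      have : ε' ≤ m 0 := hε' ▸ min_le_right _ _
      linarith
    -- the word
    have hlptake : ∀ p, p <+: (List.range N).map wf → lp r ρ p = Pi p.length := by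
      intro p hp
      have h7 : p.length ≤ N := by simpa using hp.length_le
      have h6 : p = (List.range p.length).map wf := by
        conv_lhs => rw [List.prefix_iff_eq_take.mp hp]
        rw [← List.map_take, List.take_range, Nat.min_eq_left h7]
      rw [hPi]
      show lp r ρ p = lp r ρ ((List.range p.length).map wf)
      exact congrArg (lp r ρ) h6
    have hV : Valid r ρ ((List.range N).map wf) qa qb := by
      refine ⟨by exact_mod_cast hqa0, by exact_mod_cast hqa2, ?_, ?_⟩
      · have h8 := (hm.1 0).2
        linarith
      · intro p hp
        rw [hlptake p hp]
        have h7 : p.length ≤ N := by simpa using hp.length_le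
        have h8 : m p.length ≤ 1 := (hm.1 p.length).2
        have h9 := hmeq p.length
        nlinarith [hPipos p.length]
    obtain ⟨k, hka, hkb, hkw⟩ := hz3 _ _ _ hV
    have hzki : ∀ i ≤ N, z (k + i) = z k * Pi i := by
      intro i hi
      induction i with
      | zero => simp [hPi0]
      | succ i ih =>
        have hlt : i < N := by omega
        have h10 := hkw i (by simpa using hlt)
        rw [getD_map_range _ _ _ hlt] at h10
        rw [show k + (i+1) = k + i + 1 by omega, h10, ih (by omega), hPisucc]
        ring
    refine ⟨k, ?_⟩
    intro i hi
    rw [show i + k = k + i by omega, hzki i hi, hmeq i]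
    rw [show z k * Pi i - m 0 * Pi i = (z k - m 0) * Pi i by ring, abs_mul,
      abs_of_pos (hPipos i)]
    have h11 : |z k - m 0| < ε'/2 := by
      rw [abs_lt]
      constructor <;> nlinarith
    have h12 : ε' * ρ ^ N ≤ ε := by
      have : ε' ≤ ε / ρ ^ N := hε' ▸ min_le_left _ _
      rw [div_eq_inv_mul] at this
      calc ε' * ρ ^ N ≤ ((ρ^N)⁻¹ * ε) * ρ ^ N := by nlinarith
        _ = ε := by field_simp
    calc |z k - m 0| * Pi i ≤ |z k - m 0| * ρ ^ N := by
          nlinarith [abs_nonneg (z k - m 0), hPi_leN i hi]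
      _ < (ε'/2) * ρ ^ N := by nlinarith
      _ ≤ ε := by nlinarith
end NCa

/-- There is a point of `M_{r,ρ}` whose forward orbit under the shift map is dense. -/
theorem stmt1 (r ρ : ℝ) (h : NC r ρ) :
    ∃ z : Mset r ρ, Dense (Set.range fun n : ℕ => (shiftM r ρ)^[n] z) := by
  obtain ⟨z, hzM, hzA⟩ := NCa.approx h
  refine ⟨⟨z, hzM⟩, ?_⟩
  have hit : ∀ n : ℕ, ((shiftM r ρ)^[n] ⟨z, hzM⟩).1 = fun i => z (i + n) := by
    intro n
    induction n with
    | zero => rfl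
    | succ n ih =>
      funext i
      rw [Function.iterate_succ_apply']
      show ((shiftM r ρ)^[n] ⟨z, hzM⟩).1 (i + 1) = z (i + (n+1))
      rw [ih]
      show z (i + 1 + n) = z (i + (n + 1))
      congr 1
      omega
  rw [dense_iff_inter_open]
  rintro U hU hUne
  obtain ⟨V, hV, rfl⟩ := isOpen_induced_iff.mp hU
  obtain ⟨m, hmV⟩ := hUne
  obtain ⟨I, u, hu, hpi⟩ := isOpen_pi_iff.mp hV m.1 hmV
  have hE : ∀ i : ℕ, ∃ δ : ℝ, 0 < δ ∧ (i ∈ I → Metric.ball (m.1 i) δ ⊆ u i) := by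
    intro i
    by_cases hi : i ∈ I
    · obtain ⟨δ, hδ0, hδb⟩ := Metric.isOpen_iff.mp (hu i hi).1 (m.1 i) (hu i hi).2
      exact ⟨δ, hδ0, fun _ => hδb⟩
    · exact ⟨1, one_pos, fun h' => absurd h' hi⟩
  choose δ hδ0 hδb using hE
  by_cases hI : I.Nonempty
  · obtain ⟨n, hn⟩ := hzA m.1 m.2 (I.sup id) (I.inf' hI δ) ((Finset.lt_inf'_iff hI).mpr (fun i _ => hδ0 i))
    refine ⟨(shiftM r ρ)^[n] ⟨z, hzM⟩, ?_, Set.mem_range_self n⟩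
    show ((shiftM r ρ)^[n] ⟨z, hzM⟩).1 ∈ V
    apply hpi
    intro i hi
    apply hδb i hi
    rw [Metric.mem_ball, hit n, Real.dist_eq]
    calc |z (i + n) - m.1 i| < I.inf' hI δ := hn i (Finset.le_sup (f := id) hi)
      _ ≤ δ i := Finset.inf'_le _ hi
  · refine ⟨(shiftM r ρ)^[0] ⟨z, hzM⟩, ?_, Set.mem_range_self 0⟩
    show ((shiftM r ρ)^[0] ⟨z, hzM⟩).1 ∈ V
    apply hpi
    intro i hi
    exact absurd ⟨i, hi⟩ hI
end

section
/- Let X be a compact metric space and let f : X → X be a continuous map such that (X,f) is transitive. Then the shift map σ on the inverse limit varprojlim(X,f), defined by σ(x_1,x_2,x_3,…) = (x_2,x_3,x_4,…), is also transitive. -/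
/-- The inverse limit `varprojlim(X, f)` of a single map `f : X → X`. -/
def invLimit {X : Type*} (f : X → X) : Set (ℕ → X) :=
  {x | ∀ i, x i = f (x (i + 1))}

/-- The shift map on the inverse limit `varprojlim(X, f)`. -/
def invShift {X : Type*} (f : X → X) (x : invLimit f) : invLimit f :=
  ⟨fun i => x.1 (i + 1), fun i => x.2 (i + 1)⟩

/-- A self-map `g` of a topological space is (topologically) transitive if for all non-empty
open sets `U`, `V` there is `n ≥ 0` with `g^[n] '' U ∩ V ≠ ∅`. -/
def IsTransitiveMap {Y : Type*} [TopologicalSpace Y] (g : Y → Y) : Prop :=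
  ∀ U V : Set Y, IsOpen U → IsOpen V → U.Nonempty → V.Nonempty →
    ∃ n : ℕ, (g^[n] '' U ∩ V).Nonempty

lemma invLimit_iter {X : Type*} {f : X → X} {x : ℕ → X} (hx : x ∈ invLimit f) :
    ∀ k j, x j = f^[k] (x (j + k)) := by
  intro k
  induction k with
  | zero => intro j; simp
  | succ k ih =>
    intro j
    rw [ih j, Function.iterate_succ_apply]
    congr 1
    have := hx (j + k)
    rw [this]
    ring_nf

lemma invShift_iter {X : Type*} (f : X → X) (m : ℕ) (x : invLimit f) (i : ℕ) :
    ((invShift f)^[m] x).1 i = x.1 (i + m) := by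
  induction m generalizing x with
  | zero => simp
  | succ m ih =>
    rw [Function.iterate_succ_apply, ih]
    show x.1 (i + m + 1) = x.1 (i + (m + 1))
    ring_nf

lemma transitive_surjective {X : Type*} [MetricSpace X] [CompactSpace X] {f : X → X}
    (hf : Continuous f) (ht : IsTransitiveMap f) : Function.Surjective f := by
  intro y
  by_contra hy
  push_neg at hy
  have hcl : IsClosed (Set.range f) := (isCompact_range hf).isClosed
  have hyc : y ∈ (Set.range f)ᶜ := by
    intro h
    obtain ⟨a, ha⟩ := h
    exact hy a ha
  obtain ⟨ε, hε, hball⟩ := Metric.isOpen_iff.mp hcl.isOpen_compl y hyc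
  have hz : ∀ z : X, z = y := by
    intro z
    by_contra hzy
    have hd : 0 < dist z y := dist_pos.mpr hzy
    set d := dist z y
    set t := min ε (d / 2) with ht'
    have htpos : 0 < t := lt_min hε (by linarith)
    obtain ⟨n, w, ⟨a, haU, haw⟩, hwV⟩ := ht (Metric.ball z (d / 4)) (Metric.ball y t)
      Metric.isOpen_ball Metric.isOpen_ball
      ⟨z, Metric.mem_ball_self (by linarith)⟩ ⟨y, Metric.mem_ball_self htpos⟩
    match n with
    | 0 =>
      simp only [Function.iterate_zero, id] at haw
      subst haw
      have h1 : dist a z < d / 4 := Metric.mem_ball.mp haU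
      have h2 : dist a y < t := Metric.mem_ball.mp hwV
      have h3 : t ≤ d / 2 := min_le_right _ _
      have := dist_triangle z a y
      rw [dist_comm z a] at this
      have : d < d / 4 + d / 2 := by
        calc d ≤ dist a z + dist a y := by rw [dist_comm a z] at this ⊢; exact this
        _ < d / 4 + d / 2 := by linarith
      linarith
    | (n + 1) =>
      have : w ∈ Set.range f := by
        rw [← haw, Function.iterate_succ_apply']
        exact ⟨_, rfl⟩
      exact hball (Metric.ball_subset_ball (min_le_left _ _) hwV) this
  exact hy y ((hz (f y)))

lemma transitive_boost {X : Type*} [MetricSpace X] {f : X → X}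
    (hf : Continuous f) (hs : Function.Surjective f) (ht : IsTransitiveMap f)
    (U V : Set X) (hU : IsOpen U) (hV : IsOpen V) (hUne : U.Nonempty) (hVne : V.Nonempty)
    (n₀ : ℕ) : ∃ n ≥ n₀, (f^[n] '' U ∩ V).Nonempty := by
  have hV' : IsOpen (f^[n₀] ⁻¹' V) := hV.preimage (hf.iterate n₀)
  have hV'ne : (f^[n₀] ⁻¹' V).Nonempty := by
    obtain ⟨y, hy⟩ := hVne
    obtain ⟨a, ha⟩ := (hs.iterate n₀) y
    exact ⟨a, by simp [Set.mem_preimage, ha, hy]⟩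
  obtain ⟨m, w, ⟨a, haU, haw⟩, hwV⟩ := ht U _ hU hV' hUne hV'ne
  refine ⟨n₀ + m, Nat.le_add_right _ _, f^[n₀ + m] a, ⟨a, haU, rfl⟩, ?_⟩
  rw [Function.iterate_add_apply, haw]
  exact hwV

lemma key_reduce {X : Type*} [MetricSpace X] {f : X → X} (hf : Continuous f)
    {U : Set (invLimit f)} (hU : IsOpen U) (u : invLimit f) (hu : u ∈ U) :
    ∃ c : ℕ, ∃ ε > 0, ∀ x : invLimit f, dist (x.1 c) (u.1 c) < ε → x ∈ U := by
  rw [isOpen_induced_iff] at hU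
  obtain ⟨U', hU', rfl⟩ := hU
  have hu' : u.1 ∈ U' := hu
  obtain ⟨I, t, h1, h2⟩ := isOpen_pi_iff.mp hU' u.1 hu'
  set c := I.sup id with hc
  have hIc : ∀ i ∈ I, i ≤ c := fun i hi => Finset.le_sup (f := id) hi
  set S : Set X := ⋂ i ∈ I, (f^[c - i]) ⁻¹' (t i) with hS
  have hSopen : IsOpen S := isOpen_biInter_finset fun i _ =>
    (h1 i ‹_›).1.preimage (hf.iterate _)
  have huS : u.1 c ∈ S := by
    rw [hS]
    simp only [Set.mem_iInter, Set.mem_preimage]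
    intro i hi
    have : u.1 i = f^[c - i] (u.1 c) := by
      have := invLimit_iter u.2 (c - i) i
      rwa [Nat.add_sub_cancel' (hIc i hi)] at this
    rw [← this]
    exact (h1 i hi).2
  obtain ⟨δ, hδ, hballS⟩ := Metric.isOpen_iff.mp hSopen _ huS
  refine ⟨c, δ, hδ, fun x hx => ?_⟩
  have hxS : x.1 c ∈ S := hballS (Metric.mem_ball.mpr hx)
  apply h2
  intro i hi
  have : x.1 i = f^[c - i] (x.1 c) := by
    have := invLimit_iter x.2 (c - i) i
    rwa [Nat.add_sub_cancel' (hIc i hi)] at this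
  rw [this]
  simp only [hS, Set.mem_iInter, Set.mem_preimage] at hxS
  exact hxS i hi

/-- If `(X, f)` is a transitive dynamical system on a compact metric space, then the shift map
on the inverse limit `varprojlim(X, f)` is also transitive. -/
theorem stmt3 {X : Type*} [MetricSpace X] [CompactSpace X] (f : X → X)
    (hf : Continuous f) (ht : IsTransitiveMap f) :
    IsTransitiveMap (invShift f) := by
  intro U V hUo hVo hUne hVne
  obtain ⟨u, hu⟩ := hUne
  obtain ⟨v, hv⟩ := hVne
  obtain ⟨cu, εu, hεu, hKU⟩ := key_reduce hf hUo u hu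
  obtain ⟨cv, εv, hεv, hKV⟩ := key_reduce hf hVo v hv
  have hs : Function.Surjective f := transitive_surjective hf ht
  obtain ⟨n, hn, w, ⟨b, hbV, hbw⟩, hwU⟩ := transitive_boost hf hs ht
    (Metric.ball (v.1 cv) εv) (Metric.ball (u.1 cu) εu)
    Metric.isOpen_ball Metric.isOpen_ball
    ⟨_, Metric.mem_ball_self hεv⟩ ⟨_, Metric.mem_ball_self hεu⟩ cv
  -- m such that cv + m = n + cu
  set m := n + cu - cv with hm
  have hcvm : cv + m = n + cu := by omega
  set g := Function.surjInv hs with hg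
  have hfg : ∀ a, f (g a) = a := fun a => Function.surjInv_eq hs a
  set p := cv + m with hp
  set x : ℕ → X := fun i => if i ≤ p then f^[p - i] b else g^[i - p] b with hxdef
  have hx : x ∈ invLimit f := by
    intro i
    by_cases h1 : i + 1 ≤ p
    · have h0 : i ≤ p := by omega
      simp only [hxdef, if_pos h1, if_pos h0]
      have : p - i = (p - (i + 1)) + 1 := by omega
      rw [this, Function.iterate_succ_apply']
    · by_cases h2 : i ≤ p
      · have hip : i = p := by omega
        simp only [hxdef, if_pos h2, if_neg h1]
        have e1 : p - i = 0 := by omega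
        have e2 : i + 1 - p = 1 := by omega
        rw [e1, e2]
        simp [hfg]
      · simp only [hxdef, if_neg h1, if_neg h2]
        have : i + 1 - p = (i - p) + 1 := by omega
        rw [this, Function.iterate_succ_apply', hfg]
  refine ⟨m, (invShift f)^[m] ⟨x, hx⟩, ⟨⟨x, hx⟩, ?_, rfl⟩, ?_⟩
  · apply hKU
    show dist (x cu) (u.1 cu) < εu
    have hcup : cu ≤ p := by omega
    have : x cu = f^[n] b := by
      simp only [hxdef, if_pos hcup]
      congr 1
      omega
    rw [this, hbw]
    exact Metric.mem_ball.mp hwU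
  · apply hKV
    rw [invShift_iter]
    show dist (x (cv + m)) (v.1 cv) < εv
    have : x (cv + m) = b := by
      simp only [hxdef, hp, if_pos (le_refl _)]
      simp
    rw [this]
    exact Metric.mem_ball.mp hbV
end

section
/- Let (r,ρ) ∈ 𝒩𝒞 and let M = varprojlim(M_{r,ρ}, σ_{r,ρ}) with shift map σ(x_1,x_2,x_3,…) = (x_2,x_3,x_4,…). Then σ is a homeomorphism of M onto itself and (M,σ) is transitive, i.e., for all non-empty open sets U and V in M there is a non-negative integer n with σ^n(U) ∩ V ≠ ∅. -/
section Homeo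
variable (r ρ : ℝ)

noncomputable def prepend (x : invLimit (shiftM r ρ)) : invLimit (shiftM r ρ) :=
  ⟨fun i => match i with
    | 0 => shiftM r ρ (x.1 0)
    | (k+1) => x.1 k,
   by intro i
      match i with
      | 0 => rfl
      | (k+1) => exact x.2 k⟩

noncomputable def invHomeo : invLimit (shiftM r ρ) ≃ₜ invLimit (shiftM r ρ) where
  toFun := invShift (shiftM r ρ)
  invFun := prepend r ρ
  left_inv := by
    intro x
    apply Subtype.ext
    funext i
    match i with
    | 0 => show shiftM r ρ (x.1 1) = x.1 0; exact (x.2 0).symm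
    | (k+1) => rfl
  right_inv := by
    intro x
    apply Subtype.ext
    funext i
    rfl
  continuous_toFun := by
    apply Continuous.subtype_mk
    exact continuous_pi fun i => (continuous_apply (i+1)).comp continuous_subtype_val
  continuous_invFun := by
    apply Continuous.subtype_mk
    apply continuous_pi
    intro i
    match i with
    | 0 =>
      have hsh : Continuous (shiftM r ρ) := by
        apply Continuous.subtype_mk
        exact continuous_pi fun j => (continuous_apply (j+1)).comp continuous_subtype_val
      exact hsh.comp ((continuous_apply 0).comp continuous_subtype_val)
    | (k+1) => exact (continuous_apply k).comp continuous_subtype_val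

end Homeo

section Ext
variable {r ρ : ℝ}

noncomputable def extSeq (z : invLimit (shiftM r ρ)) (t : ℤ) : ℝ :=
  (z.1 ((-t).toNat)).1 (t.toNat)

lemma shiftval (z : invLimit (shiftM r ρ)) (i j : ℕ) :
    (z.1 i).1 j = (z.1 (i+1)).1 (j+1) :=
  congrFun (congrArg Subtype.val (z.2 i)) j

lemma addk (z : invLimit (shiftM r ρ)) (i j k : ℕ) :
    (z.1 i).1 j = (z.1 (i+k)).1 (j+k) := by
  induction k with
  | zero => rfl
  | succ n ih => rw [ih, shiftval]; ring_nf

lemma coherent (z : invLimit (shiftM r ρ)) (i j : ℕ) :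
    (z.1 i).1 j = extSeq z ((j:ℤ) - i) := by
  unfold extSeq
  rcases le_total i j with hle | hle
  · have h1 : (-((j:ℤ) - i)).toNat = 0 := by omega
    have h2 : (((j:ℤ) - i)).toNat = j - i := by omega
    rw [h1, h2]
    have := addk z 0 (j - i) i
    rw [Nat.zero_add, Nat.sub_add_cancel hle] at this
    exact this.symm
  · have h1 : (-((j:ℤ) - i)).toNat = i - j := by omega
    have h2 : (((j:ℤ) - i)).toNat = 0 := by omega
    rw [h1, h2]
    have := addk z (i - j) 0 j
    rw [Nat.zero_add, Nat.sub_add_cancel hle] at this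
    exact this.symm

lemma extSeq_mem (z : invLimit (shiftM r ρ)) (t : ℤ) :
    extSeq z t ∈ Set.Icc (0:ℝ) 1 :=
  (z.1 ((-t).toNat)).2.1 (t.toNat)

lemma extSeq_step (z : invLimit (shiftM r ρ)) (t : ℤ) :
    extSeq z (t+1) = r * extSeq z t ∨ extSeq z (t+1) = ρ * extSeq z t := by
  set i : ℕ := t.natAbs + 1 with hi
  set j : ℕ := (t + i).toNat with hj
  have hji : (j:ℤ) - i = t := by rw [hj, hi]; omega
  have h1 : extSeq z t = (z.1 i).1 j := by rw [coherent z i j, hji]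
  have h2 : extSeq z (t+1) = (z.1 i).1 (j+1) := by
    rw [coherent z i (j+1)]; congr 1; rw [hj, hi]; omega
  rw [h1, h2]
  exact (z.1 i).2.2 j

lemma extSeq_shift (z : invLimit (shiftM r ρ)) (t : ℤ) :
    extSeq (invShift (shiftM r ρ) z) t = extSeq z (t - 1) := by
  show ((z.1 _).1 _) = _
  rw [coherent z ((-t).toNat + 1) (t.toNat)]
  congr 1
  omega

lemma extSeq_iter (z : invLimit (shiftM r ρ)) (n : ℕ) (t : ℤ) :
    extSeq ((invShift (shiftM r ρ))^[n] z) t = extSeq z (t - n) := by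
  induction n generalizing t with
  | zero => simp
  | succ m ih =>
    rw [Function.iterate_succ_apply', extSeq_shift, ih]
    congr 1
    push_cast; ring

noncomputable def mkM (r ρ : ℝ) (X : ℤ → ℝ) (h1 : ∀ t, X t ∈ Set.Icc (0:ℝ) 1)
    (h2 : ∀ t, X (t+1) = r * X t ∨ X (t+1) = ρ * X t) : invLimit (shiftM r ρ) :=
  ⟨fun i => ⟨fun j => X ((j:ℤ) - i),
    ⟨fun j => h1 _, fun j => by
      have := h2 ((j:ℤ) - i)
      have he : ((j:ℤ)) - i + 1 = ((j+1:ℕ):ℤ) - i := by push_cast; ring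
      rw [he] at this
      exact this⟩⟩,
   fun i => Subtype.ext (funext fun j => by
      show X ((j:ℤ) - i) = X (((j+1:ℕ):ℤ) - ((i+1:ℕ):ℤ))
      congr 1; push_cast; ring)⟩

lemma extSeq_mkM (r ρ : ℝ) (X : ℤ → ℝ) (h1) (h2) (t : ℤ) :
    extSeq (mkM r ρ X h1 h2) t = X t := by
  show X _ = X t
  congr 1; omega

lemma zero_prop (z : invLimit (shiftM r ρ)) (hr : 0 < r) (hρ : 0 < ρ) (t₀ : ℤ)
    (h0 : extSeq z t₀ = 0) : ∀ t, extSeq z t = 0 := by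
  intro t
  refine Int.inductionOn' t t₀ h0 (fun k _ ih => ?_) (fun k _ ih => ?_)
  · rcases extSeq_step z k with hs | hs <;> rw [hs, ih, mul_zero]
  · rcases extSeq_step z (k-1) with hs | hs <;>
      · rw [show k-1+1 = k by ring, ih] at hs
        rcases mul_eq_zero.mp hs.symm with hcon | hgoal
        · exact absurd hcon (by positivity)
        · exact hgoal

lemma cylinder (U : Set (invLimit (shiftM r ρ))) (hU : IsOpen U)
    (x : invLimit (shiftM r ρ)) (hx : x ∈ U) :
    ∃ N : ℕ, ∃ ε : ℝ, 0 < ε ∧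
      ∀ z : invLimit (shiftM r ρ),
        (∀ t : ℤ, t.natAbs ≤ N → |extSeq z t - extSeq x t| < ε) → z ∈ U := by
  classical
  obtain ⟨U₁, hU₁, hU₁eq⟩ := isOpen_induced_iff.mp hU
  have hx₁ : x.1 ∈ U₁ := by rw [← hU₁eq] at hx; exact hx
  obtain ⟨I, u, hu, hsub⟩ := isOpen_pi_iff.mp hU₁ x.1 hx₁
  have hv : ∀ i : ℕ, ∃ v : Set (ℕ → ℝ), IsOpen v ∧ (i ∈ I → Subtype.val ⁻¹' v = u i) := by
    intro i
    by_cases hi : i ∈ I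
    · obtain ⟨v, hvo, hve⟩ := isOpen_induced_iff.mp (hu i hi).1
      exact ⟨v, hvo, fun _ => hve⟩
    · exact ⟨Set.univ, isOpen_univ, fun h => absurd h hi⟩
  choose v hvo hve using hv
  have hxv : ∀ i ∈ I, (x.1 i).1 ∈ v i := by
    intro i hi
    have h2 := (hu i hi).2
    rw [← hve i hi] at h2
    exact h2
  have hw : ∀ i : ℕ, ∃ (Jw : Finset ℕ × (ℕ → Set ℝ)),
      (∀ j ∈ Jw.1, IsOpen (Jw.2 j) ∧ (x.1 i).1 j ∈ Jw.2 j) ∧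
      (i ∈ I → (Jw.1 : Set ℕ).pi Jw.2 ⊆ v i) := by
    intro i
    by_cases hi : i ∈ I
    · obtain ⟨J, w, h1, h2⟩ := isOpen_pi_iff.mp (hvo i) (x.1 i).1 (hxv i hi)
      exact ⟨(J, w), h1, fun _ => h2⟩
    · exact ⟨(∅, fun _ => Set.univ), by simp, fun h => absurd h hi⟩
  choose Jw hwo hwsub using hw
  set J : ℕ → Finset ℕ := fun i => (Jw i).1 with hJ
  set w : ℕ → ℕ → Set ℝ := fun i => (Jw i).2 with hwdef
  have hball : ∀ i j : ℕ, ∃ ε : ℝ, 0 < ε ∧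
      (i ∈ I → j ∈ J i → Metric.ball ((x.1 i).1 j) ε ⊆ w i j) := by
    intro i j
    by_cases hij : i ∈ I ∧ j ∈ J i
    · obtain ⟨ε, hε, hb⟩ := Metric.isOpen_iff.mp (hwo i j hij.2).1 _ (hwo i j hij.2).2
      exact ⟨ε, hε, fun _ _ => hb⟩
    · exact ⟨1, one_pos, fun h1 h2 => absurd ⟨h1, h2⟩ hij⟩
  choose εf hεf hεb using hball
  set F : Finset (ℕ × ℕ) := I.biUnion (fun i => (J i).image (fun j => (i, j))) with hF
  set G : Finset ℝ := insert (1:ℝ) (F.image fun p => εf p.1 p.2) with hG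
  have hGne : G.Nonempty := ⟨1, Finset.mem_insert_self _ _⟩
  have hpos : ∀ a ∈ G, 0 < a := by
    intro a ha
    rcases Finset.mem_insert.mp ha with hh | hh
    · rw [hh]; norm_num
    · obtain ⟨p, _, hp⟩ := Finset.mem_image.mp hh
      rw [← hp]; exact hεf p.1 p.2
  refine ⟨(I.sup id) ⊔ (I.sup fun i => (J i).sup id), G.min' hGne,
    hpos _ (G.min'_mem hGne), fun z hz => ?_⟩
  have hzmem : z.1 ∈ U₁ := by
    apply hsub
    refine Set.mem_pi.mpr fun i hi' => ?_
    have hi : i ∈ I := hi'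
    rw [← hve i hi]
    apply hwsub i hi
    refine Set.mem_pi.mpr fun j hj' => ?_
    have hj : j ∈ J i := hj'
    apply hεb i j hi hj
    rw [Metric.mem_ball, Real.dist_eq]
    have hiN : i ≤ (I.sup id) ⊔ (I.sup fun i => (J i).sup id) :=
      le_sup_of_le_left (Finset.le_sup (f := id) hi)
    have hjN : j ≤ (I.sup id) ⊔ (I.sup fun i => (J i).sup id) :=
      le_sup_of_le_right (Finset.le_sup_of_le hi (Finset.le_sup (f := id) hj))
    have ht : ((j:ℤ) - i).natAbs ≤ (I.sup id) ⊔ (I.sup fun i => (J i).sup id) := by omega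
    have hlt := hz ((j:ℤ) - i) ht
    rw [← coherent z i j, ← coherent x i j] at hlt
    have hεle : G.min' hGne ≤ εf i j := by
      apply Finset.min'_le
      exact Finset.mem_insert_of_mem (Finset.mem_image.mpr
        ⟨(i, j), Finset.mem_biUnion.mpr ⟨i, hi, Finset.mem_image.mpr ⟨j, hj, rfl⟩⟩, rfl⟩)
    exact lt_of_lt_of_le hlt hεle
  rw [← hU₁eq]
  exact hzmem

end Ext

section Density

variable {α β : ℝ}

lemma small_elt (hα : α < 0) (hβ : 0 < β)
    (hirr : ∀ k l : ℤ, (k:ℝ) * α + (l:ℝ) * β = 0 → k = 0 ∧ l = 0)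
    {δ : ℝ} (hδ : 0 < δ) :
    ∃ k l : ℕ, (k:ℝ) * α + (l:ℝ) * β ≠ 0 ∧ |(k:ℝ) * α + (l:ℝ) * β| < δ := by
  classical
  obtain ⟨K, hK⟩ := exists_nat_gt ((-α) / δ)
  have hKpos : 0 < (K:ℝ) := lt_of_le_of_lt (div_nonneg (by linarith) hδ.le) hK
  have hKδ : -α < K * δ := by
    rw [div_lt_iff₀ hδ] at hK
    exact hK
  -- define m n and s n
  set m : ℕ → ℕ := fun n => (⌊(n * β) / (-α)⌋).toNat with hm
  set s : ℕ → ℝ := fun n => n * β + (m n) * α with hs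
  have hmcast : ∀ n : ℕ, ((m n : ℤ) : ℝ) = (⌊(n * β) / (-α)⌋ : ℝ) := by
    intro n
    have : (0:ℤ) ≤ ⌊(n * β) / (-α)⌋ := by
      apply Int.floor_nonneg.mpr
      apply div_nonneg (by positivity) (by linarith)
    rw [hm]
    simp [Int.toNat_of_nonneg this]
  have hsbound : ∀ n : ℕ, 0 ≤ s n ∧ s n < -α := by
    intro n
    have h1 : (⌊(n * β) / (-α)⌋ : ℝ) ≤ (n * β) / (-α) := Int.floor_le _
    have h2 : (n * β) / (-α) < ⌊(n * β) / (-α)⌋ + 1 := Int.lt_floor_add_one _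
    have hα' : (0:ℝ) < -α := by linarith
    constructor
    · have := mul_le_mul_of_nonneg_right h1 hα'.le
      rw [div_mul_cancel₀ _ (ne_of_gt hα')] at this
      have h3 : ((m n : ℝ)) * (-α) ≤ n * β := by
        calc ((m n : ℝ)) * (-α) = ((⌊(n * β) / (-α)⌋ : ℝ)) * (-α) := by
              rw [← hmcast n]; norm_num
          _ ≤ n * β := this
      rw [hs]; simp only; nlinarith [h3]
    · have := mul_lt_mul_of_pos_right h2 hα'
      rw [div_mul_cancel₀ _ (ne_of_gt hα')] at this
      have h3 : (n:ℝ) * β < ((m n : ℝ) + 1) * (-α) := by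
        calc (n:ℝ) * β < ((⌊(n * β) / (-α)⌋ : ℝ) + 1) * (-α) := this
          _ = ((m n : ℝ) + 1) * (-α) := by rw [← hmcast n]; norm_num
      rw [hs]; simp only; nlinarith [h3]
  -- pigeonhole
  have hα' : (0:ℝ) < -α := by linarith
  have hbucket : ∀ n : ℕ, (⌊ s n * K / (-α) ⌋).toNat < K := by
    intro n
    have h0 : 0 ≤ s n * K / (-α) := by
      apply div_nonneg _ hα'.le
      exact mul_nonneg (hsbound n).1 hKpos.le
    have h1 : s n * K / (-α) < K := by
      rw [div_lt_iff₀ hα']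
      have := (hsbound n).2
      nlinarith [this, hKpos]
    have h2 : (⌊ s n * K / (-α) ⌋ : ℝ) < K := lt_of_le_of_lt (Int.floor_le _) h1
    have h3 : ⌊ s n * K / (-α) ⌋ < (K:ℤ) := by exact_mod_cast h2
    have h4 : (0:ℤ) ≤ ⌊ s n * K / (-α) ⌋ := Int.floor_nonneg.mpr h0
    omega
  have hKne : K ≠ 0 := by
    rintro rfl
    simp at hKpos
  set g : Fin (K+1) → Fin K := fun n => ⟨(⌊ s n * K / (-α) ⌋).toNat, hbucket n⟩ with hg
  have hcard : Fintype.card (Fin K) < Fintype.card (Fin (K+1)) := by simp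
  obtain ⟨n₁, n₂, hne, heq⟩ := Fintype.exists_ne_map_eq_of_card_lt g hcard
  -- wlog n₁ < n₂
  wlog hlt : (n₁:ℕ) < (n₂:ℕ) generalizing n₁ n₂
  · exact this n₂ n₁ hne.symm heq.symm (by omega)
  -- difference bound
  have hfloor_eq : ⌊ s n₁ * K / (-α) ⌋ = ⌊ s n₂ * K / (-α) ⌋ := by
    have h1 : (0:ℤ) ≤ ⌊ s n₁ * K / (-α) ⌋ := Int.floor_nonneg.mpr (by
      apply div_nonneg _ hα'.le
      exact mul_nonneg (hsbound n₁).1 hKpos.le)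
    have h2 : (0:ℤ) ≤ ⌊ s n₂ * K / (-α) ⌋ := Int.floor_nonneg.mpr (by
      apply div_nonneg _ hα'.le
      exact mul_nonneg (hsbound n₂).1 hKpos.le)
    have := congrArg Fin.val heq
    simp only [hg] at this
    omega
  have hdiff : |s n₂ - s n₁| < (-α) / K := by
    have habs : |s n₂ * K / (-α) - s n₁ * K / (-α)| < 1 :=
      Int.abs_sub_lt_one_of_floor_eq_floor hfloor_eq.symm
    have hrw : s n₂ * K / (-α) - s n₁ * K / (-α) = (s n₂ - s n₁) * (K / (-α)) := by
      ring
    rw [hrw, abs_mul] at habs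
    have hpos : 0 < (K:ℝ) / (-α) := div_pos hKpos hα'
    have habs' : |(K:ℝ) / (-α)| = (K:ℝ) / (-α) := abs_of_pos hpos
    rw [habs'] at habs
    rw [show (-α)/(K:ℝ) = 1/((K:ℝ)/(-α)) by field_simp, lt_div_iff₀ hpos]
    linarith [habs]
  -- monotonicity of m
  have hmono : m n₁ ≤ m n₂ := by
    have : (n₁:ℝ) * β ≤ (n₂:ℝ) * β := by
      apply mul_le_mul_of_nonneg_right _ hβ.le
      exact_mod_cast hlt.le
    have hfl : ⌊(n₁ * β) / (-α)⌋ ≤ ⌊(n₂ * β) / (-α)⌋ :=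
      Int.floor_le_floor (by gcongr)
    rw [hm]
    simp only
    omega
  refine ⟨m n₂ - m n₁, (n₂:ℕ) - n₁, ?_, ?_⟩
  · intro hzero
    have hcast : ((m n₂ - m n₁ : ℕ) : ℝ) * α + (((n₂:ℕ) - (n₁:ℕ) : ℕ) : ℝ) * β = 0 := hzero
    have := hirr ((m n₂ - m n₁ : ℕ) : ℤ) (((n₂:ℕ) - (n₁:ℕ) : ℕ) : ℤ) (by push_cast at hcast ⊢; linarith [hcast])
    omega
  · have hval : ((m n₂ - m n₁ : ℕ) : ℝ) * α + (((n₂:ℕ) - (n₁:ℕ) : ℕ) : ℝ) * β = s n₂ - s n₁ := by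
      rw [hs]
      simp only
      have c1 : ((m n₂ - m n₁ : ℕ) : ℝ) = (m n₂ : ℝ) - (m n₁ : ℝ) := by
        push_cast [Nat.cast_sub hmono]; ring
      have c2 : (((n₂:ℕ) - (n₁:ℕ) : ℕ) : ℝ) = ((n₂:ℕ) : ℝ) - ((n₁:ℕ) : ℝ) := by
        push_cast [Nat.cast_sub hlt.le]; ring
      rw [c1, c2]; ring
    rw [hval]
    apply lt_of_lt_of_le hdiff
    rw [div_le_iff₀ hKpos]
    nlinarith [hKδ]

lemma both_signs (hα : α < 0) (hβ : 0 < β)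
    (hirr : ∀ k l : ℤ, (k:ℝ) * α + (l:ℝ) * β = 0 → k = 0 ∧ l = 0)
    {δ : ℝ} (hδ : 0 < δ) :
    (∃ k l : ℕ, (k:ℝ) * α + (l:ℝ) * β ∈ Set.Ioo 0 δ) ∧
    (∃ k l : ℕ, (k:ℝ) * α + (l:ℝ) * β ∈ Set.Ioo (-δ) 0) := by
  classical
  obtain ⟨k, l, hne, habs⟩ := small_elt hα hβ hirr hδ
  set v : ℝ := (k:ℝ) * α + (l:ℝ) * β with hv
  rcases lt_or_gt_of_ne hne with hneg | hpos
  · -- v negative; build positive small element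
    have hvmem : v ∈ Set.Ioo (-δ) 0 := ⟨by rw [abs_lt] at habs; linarith, hneg⟩
    refine ⟨?_, k, l, hvmem⟩
    set m : ℕ := (⌊(-α) / β⌋).toNat + 1 with hm
    have hflnn : (0:ℤ) ≤ ⌊(-α) / β⌋ := Int.floor_nonneg.mpr (div_nonneg (by linarith) hβ.le)
    have hmcast : ((m:ℝ)) = (⌊(-α)/β⌋ : ℝ) + 1 := by
      have h' := congrArg (fun z : ℤ => (z : ℝ)) (Int.toNat_of_nonneg hflnn)
      push_cast at h'
      rw [hm]; push_cast; linarith [h']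
    have hu0pos : 0 < α + m * β := by
      have := Int.lt_floor_add_one ((-α)/β)
      rw [div_lt_iff₀ hβ] at this
      nlinarith [hmcast]
    have hu0le : α + m * β ≤ β := by
      have := Int.floor_le ((-α)/β)
      rw [le_div_iff₀ hβ] at this
      nlinarith [hmcast]
    set u0 : ℝ := α + m * β with hu0
    -- least q with u0 + q * v < δ
    have hex : ∃ q : ℕ, u0 + q * v < δ := by
      obtain ⟨q, hq⟩ := exists_nat_gt ((u0 - δ) / (-v))
      refine ⟨q, ?_⟩
      rw [div_lt_iff₀ (by linarith)] at hq
      have hring : (q:ℝ) * -v = -((q:ℝ) * v) := by ring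
      linarith
    set q : ℕ := Nat.find hex with hq
    have hspec : u0 + q * v < δ := Nat.find_spec hex
    have hlb : 0 < u0 + q * v := by
      rcases Nat.eq_zero_or_pos q with h0 | h0
      · rw [h0]; simpa using hu0pos
      · have hmin := Nat.find_min hex (m := q - 1) (by omega)
        push_neg at hmin
        have hc : ((q - 1 : ℕ) : ℝ) = (q:ℝ) - 1 := by
          push_cast [Nat.cast_sub h0]; ring
        rw [hc] at hmin
        rw [abs_lt] at habs
        nlinarith
    have expand : ((1 + q * k : ℕ):ℝ) * α + ((m + q * l : ℕ):ℝ) * β = u0 + q * v := by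
      rw [hu0, hv]; push_cast; ring
    exact ⟨1 + q * k, m + q * l, by rw [Set.mem_Ioo, expand]; exact ⟨hlb, hspec⟩⟩
  · -- v positive; build negative small element
    have hvmem : v ∈ Set.Ioo 0 δ := ⟨hpos, by rw [abs_lt] at habs; linarith⟩
    refine ⟨⟨k, l, hvmem⟩, ?_⟩
    set m : ℕ := (⌊β / (-α)⌋).toNat + 1 with hm
    have hflnn : (0:ℤ) ≤ ⌊β / (-α)⌋ := Int.floor_nonneg.mpr (div_nonneg hβ.le (by linarith))
    have hmcast : ((m:ℝ)) = (⌊β/(-α)⌋ : ℝ) + 1 := by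
      have h' := congrArg (fun z : ℤ => (z : ℝ)) (Int.toNat_of_nonneg hflnn)
      push_cast at h'
      rw [hm]; push_cast; linarith [h']
    have ht0neg : m * α + β < 0 := by
      have := Int.lt_floor_add_one (β/(-α))
      rw [div_lt_iff₀ (by linarith : (0:ℝ) < -α)] at this
      nlinarith [hmcast]
    have ht0ge : α ≤ m * α + β := by
      have := Int.floor_le (β/(-α))
      rw [le_div_iff₀ (by linarith : (0:ℝ) < -α)] at this
      nlinarith [hmcast]
    set t0 : ℝ := m * α + β with ht0
    have hex : ∃ p : ℕ, -δ < t0 + p * v := by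
      obtain ⟨p, hp⟩ := exists_nat_gt ((-δ - t0) / v)
      refine ⟨p, ?_⟩
      rw [div_lt_iff₀ hpos] at hp
      linarith
    set p : ℕ := Nat.find hex with hp
    have hspec : -δ < t0 + p * v := Nat.find_spec hex
    have hub : t0 + p * v < 0 := by
      rcases Nat.eq_zero_or_pos p with h0 | h0
      · rw [h0]; simpa using ht0neg
      · have hmin := Nat.find_min hex (m := p - 1) (by omega)
        push_neg at hmin
        have hc : ((p - 1 : ℕ) : ℝ) = (p:ℝ) - 1 := by
          push_cast [Nat.cast_sub h0]; ring
        rw [hc] at hmin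
        rw [abs_lt] at habs
        nlinarith
    have expand : ((m + p * k : ℕ):ℝ) * α + ((1 + p * l : ℕ):ℝ) * β = t0 + p * v := by
      rw [ht0, hv]; push_cast; ring
    exact ⟨m + p * k, 1 + p * l, by rw [Set.mem_Ioo, expand]; exact ⟨hspec, hub⟩⟩

lemma semigroup_dense_s4 (hα : α < 0) (hβ : 0 < β)
    (hirr : ∀ k l : ℤ, (k:ℝ) * α + (l:ℝ) * β = 0 → k = 0 ∧ l = 0)
    {u v : ℝ} (huv : u < v) :
    ∃ k l : ℕ, (k:ℝ) * α + (l:ℝ) * β ∈ Set.Ioo u v := by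
  classical
  have hδ : 0 < v - u := by linarith
  obtain ⟨⟨kp, lp, hp⟩, ⟨kn, ln, hn⟩⟩ := both_signs hα hβ hirr hδ
  set sp : ℝ := (kp:ℝ) * α + (lp:ℝ) * β with hsp
  set sn : ℝ := (kn:ℝ) * α + (ln:ℝ) * β with hsn
  rcases lt_or_ge 0 v with hv0 | hv0
  · -- use multiples of sp
    have hex : ∃ p : ℕ, u < p * sp := by
      obtain ⟨p, hpp⟩ := exists_nat_gt (u / sp)
      refine ⟨p, ?_⟩
      rw [div_lt_iff₀ hp.1] at hpp
      linarith
    set p : ℕ := Nat.find hex with hpdef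
    have hspec : u < p * sp := Nat.find_spec hex
    have hub : (p:ℝ) * sp < v := by
      rcases Nat.eq_zero_or_pos p with h0 | h0
      · rw [h0]; simpa using hv0
      · have hmin := Nat.find_min hex (m := p - 1) (by omega)
        push_neg at hmin
        have hc : ((p - 1 : ℕ) : ℝ) = (p:ℝ) - 1 := by
          push_cast [Nat.cast_sub h0]; ring
        rw [hc] at hmin
        have := hp.2
        nlinarith
    have expand : ((p * kp : ℕ):ℝ) * α + ((p * lp : ℕ):ℝ) * β = p * sp := by
      rw [hsp]; push_cast; ring
    exact ⟨p * kp, p * lp, by rw [Set.mem_Ioo, expand]; exact ⟨hspec, hub⟩⟩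
  · -- v ≤ 0: use multiples of sn
    have hex : ∃ q : ℕ, q * sn < v := by
      obtain ⟨q, hqq⟩ := exists_nat_gt (v / sn)
      refine ⟨q, ?_⟩
      have hsnneg : sn < 0 := hn.2
      rw [div_lt_iff_of_neg hsnneg] at hqq
      linarith
    set q : ℕ := Nat.find hex with hqdef
    have hspec : (q:ℝ) * sn < v := Nat.find_spec hex
    have hlb : u < (q:ℝ) * sn := by
      rcases Nat.eq_zero_or_pos q with h0 | h0
      · rw [h0] at hspec
        simp at hspec
        linarith
      · have hmin := Nat.find_min hex (m := q - 1) (by omega)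
        push_neg at hmin
        have hc : ((q - 1 : ℕ) : ℝ) = (q:ℝ) - 1 := by
          push_cast [Nat.cast_sub h0]; ring
        rw [hc] at hmin
        have := hn.1
        nlinarith
    have expand : ((q * kn : ℕ):ℝ) * α + ((q * ln : ℕ):ℝ) * β = q * sn := by
      rw [hsn]; push_cast; ring
    exact ⟨q * kn, q * ln, by rw [Set.mem_Ioo, expand]; exact ⟨hlb, hspec⟩⟩

end Density

lemma reach {r ρ : ℝ} (h : NC r ρ) {a b ε : ℝ} (ha : 0 < a) (ha1 : a ≤ 1)
    (hb : 0 < b) (hb1 : b ≤ 1) (hε : 0 < ε) (hε1 : ε < 1) :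
    ∃ k l : ℕ, (1-ε)*b < a * r^k * ρ^l ∧ a * r^k * ρ^l ≤ b := by
  obtain ⟨hr0, hr1, hρ1, hNC⟩ := h
  set α : ℝ := Real.log r with hαdef
  set β : ℝ := Real.log ρ with hβdef
  have hα : α < 0 := Real.log_neg hr0 hr1
  have hβ : 0 < β := Real.log_pos hρ1
  have hρ0 : (0:ℝ) < ρ := lt_trans one_pos hρ1
  have hirr : ∀ k l : ℤ, (k:ℝ) * α + (l:ℝ) * β = 0 → k = 0 ∧ l = 0 := by
    intro k l hkl
    have hrk : (0:ℝ) < r ^ k := zpow_pos hr0 k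
    have hρl : (0:ℝ) < ρ ^ (-l) := zpow_pos hρ0 (-l)
    have hlog : Real.log (r ^ k) = Real.log (ρ ^ (-l)) := by
      rw [Real.log_zpow, Real.log_zpow]
      push_cast
      rw [hαdef, hβdef] at hkl
      linarith
    have heq : r ^ k = ρ ^ (-l) := by
      rw [← Real.exp_log hrk, ← Real.exp_log hρl, hlog]
    have := (hNC k (-l)).mp heq
    exact ⟨this.1, by omega⟩
  have hbb : (1-ε)*b < b := by nlinarith
  have huv : Real.log ((1-ε)*b) - Real.log a < Real.log b - Real.log a := by
    have := Real.log_lt_log (by nlinarith) hbb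
    linarith
  obtain ⟨k, l, hmem⟩ := semigroup_dense_s4 hα hβ hirr huv
  have e1 : Real.exp ((k:ℝ) * α) = r ^ k := by
    rw [hαdef, ← Real.log_pow]
    exact Real.exp_log (pow_pos hr0 k)
  have e2 : Real.exp ((l:ℝ) * β) = ρ ^ l := by
    rw [hβdef, ← Real.log_pow]
    exact Real.exp_log (pow_pos hρ0 l)
  have key : a * r^k * ρ^l = Real.exp (Real.log a + ((k:ℝ) * α + (l:ℝ) * β)) := by
    rw [Real.exp_add, Real.exp_add, Real.exp_log ha, e1, e2]
    ring
  obtain ⟨h1, h2⟩ := hmem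
  refine ⟨k, l, ?_, ?_⟩
  · have : (1-ε)*b = Real.exp (Real.log ((1-ε)*b)) := (Real.exp_log (by nlinarith)).symm
    rw [this, key]
    exact Real.exp_lt_exp.mpr (by linarith)
  · have : b = Real.exp (Real.log b) := (Real.exp_log hb).symm
    rw [this, key]
    exact le_of_lt (Real.exp_lt_exp.mpr (by linarith))

set_option maxHeartbeats 2000000 in
lemma transitive_shift {r ρ : ℝ} (h : NC r ρ) : IsTransitiveMap (invShift (shiftM r ρ)) := by
  classical
  obtain ⟨hr0, hr1, hρ1, hNC⟩ := h
  have h' : NC r ρ := ⟨hr0, hr1, hρ1, hNC⟩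
  have hρ0 : (0:ℝ) < ρ := lt_trans one_pos hρ1
  intro U V hU hV hUne hVne
  obtain ⟨x, hx⟩ := hUne
  obtain ⟨y, hy⟩ := hVne
  obtain ⟨N₁, ε₁, hε₁, hU'⟩ := cylinder U hU x hx
  obtain ⟨N₂, ε₂, hε₂, hV'⟩ := cylinder V hV y hy
  set N : ℕ := max N₁ N₂ with hN
  set ε : ℝ := min (min ε₁ ε₂) (1/2) with hε
  have hεpos : 0 < ε := lt_min (lt_min hε₁ hε₂) (by norm_num)
  have hε1 : ε < 1 := lt_of_le_of_lt (min_le_right _ _) (by norm_num)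
  have hεε₁ : ε ≤ ε₁ := le_trans (min_le_left _ _) (min_le_left _ _)
  have hεε₂ : ε ≤ ε₂ := le_trans (min_le_left _ _) (min_le_right _ _)
  suffices key : ∃ n : ℕ, ∃ w : invLimit (shiftM r ρ),
      (∀ t : ℤ, t.natAbs ≤ N → |extSeq w t - extSeq x t| < ε) ∧
      (∀ t : ℤ, t.natAbs ≤ N → |extSeq w (t - n) - extSeq y t| < ε) by
    obtain ⟨n, w, hA, hB⟩ := key
    refine ⟨n, (invShift (shiftM r ρ))^[n] w, ⟨w, ?_, rfl⟩, ?_⟩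
    · apply hU' w
      intro t ht
      exact lt_of_lt_of_le (hA t (le_trans ht (by omega))) hεε₁
    · apply hV'
      intro t ht
      rw [extSeq_iter]
      exact lt_of_lt_of_le (hB t (le_trans ht (by omega))) hεε₂
  rcases eq_or_lt_of_le (extSeq_mem x (-(N:ℤ))).1 with hb | hb
  · -- Case 1 : x is identically zero
    have hx0 : ∀ t : ℤ, extSeq x t = 0 := zero_prop x hr0 hρ0 (-(N:ℤ)) hb.symm
    obtain ⟨m₀, hm₀⟩ := exists_pow_lt_of_lt_one hεpos hr1
    set m : ℕ := m₀ + 1 with hmdef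
    have hm1 : 1 ≤ m := by omega
    have hrm : r ^ (m:ℤ) < ε := by
      rw [zpow_natCast]
      calc r ^ m ≤ r ^ m₀ := pow_le_pow_of_le_one hr0.le hr1.le (by omega)
        _ < ε := hm₀
    set n : ℕ := 2 * N + m with hndef
    set W : ℤ → ℝ := fun t =>
      if t ≤ (N:ℤ) - n then extSeq y (t + n)
      else extSeq y (N:ℤ) * r ^ (t - ((N:ℤ) - n)) with hW
    have hYN := extSeq_mem y ((N:ℤ))
    have We2 : ∀ t : ℤ, (N:ℤ) - n ≤ t → W t = extSeq y (N:ℤ) * r ^ (t - ((N:ℤ) - n)) := by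
      intro t ht
      by_cases h1 : t ≤ (N:ℤ) - n
      · have heq : t = (N:ℤ) - n := le_antisymm h1 ht
        rw [hW]
        simp only [if_pos h1]
        rw [heq, sub_self, zpow_zero, mul_one]
        congr 1
        ring
      · rw [hW]; simp only [if_neg h1]
    have h1W : ∀ t, W t ∈ Set.Icc (0:ℝ) 1 := by
      intro t
      by_cases h1 : t ≤ (N:ℤ) - n
      · rw [hW]; simp only [if_pos h1]; exact extSeq_mem y _
      · push_neg at h1
        rw [We2 t h1.le]
        have hz0 : (0:ℝ) ≤ r ^ (t - ((N:ℤ) - n)) := (zpow_pos hr0 _).le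
        have hz1 : r ^ (t - ((N:ℤ) - n)) ≤ 1 := zpow_le_one₀ hr0 hr1.le (by omega)
        constructor
        · exact mul_nonneg hYN.1 hz0
        · nlinarith [hYN.1, hYN.2]
    have h2W : ∀ t, W (t+1) = r * W t ∨ W (t+1) = ρ * W t := by
      intro t
      by_cases h1 : t + 1 ≤ (N:ℤ) - n
      · have h0 : t ≤ (N:ℤ) - n := by omega
        have e1 : W t = extSeq y (t + n) := by rw [hW]; simp only [if_pos h0]
        have e2 : W (t+1) = extSeq y ((t + n) + 1) := by
          rw [hW]; simp only [if_pos h1]; congr 1; ring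
        rw [e1, e2]
        exact extSeq_step y (t + n)
      · push_neg at h1
        left
        have h0 : (N:ℤ) - n ≤ t := by omega
        rw [We2 t h0, We2 (t+1) (by omega)]
        rw [show t + 1 - ((N:ℤ) - n) = (t - ((N:ℤ) - n)) + 1 by ring,
          zpow_add_one₀ (ne_of_gt hr0)]
        ring
    refine ⟨n, mkM r ρ W h1W h2W, ?_, ?_⟩
    · intro t ht
      rw [extSeq_mkM, hx0 t, sub_zero]
      have htn : (N:ℤ) - n ≤ t := by omega
      rw [We2 t htn, abs_of_nonneg (by
        have := h1W t
        rw [We2 t htn] at this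
        exact this.1)]
      have hme : (m:ℤ) ≤ t - ((N:ℤ) - n) := by omega
      have hmono : r ^ (t - ((N:ℤ) - n)) ≤ r ^ (m:ℤ) :=
        zpow_le_zpow_right_of_le_one₀ hr0 hr1.le hme
      nlinarith [(zpow_pos hr0 (t - ((N:ℤ) - n))).le, hYN.1, hYN.2]
    · intro t ht
      rw [extSeq_mkM]
      have htn : t - n ≤ (N:ℤ) - n := by omega
      have e1 : W (t - n) = extSeq y t := by
        rw [hW]; simp only [if_pos htn]; congr 1; ring
      rw [e1, sub_self, abs_zero]
      exact hεpos
  rcases eq_or_lt_of_le (extSeq_mem y ((N:ℤ))).1 with ha | ha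
  · -- Case 2 : y is identically zero
    have hy0 : ∀ t : ℤ, extSeq y t = 0 := zero_prop y hr0 hρ0 ((N:ℤ)) ha.symm
    have hinv1 : (0:ℝ) < 1/ρ := by positivity
    have hinv2 : 1/ρ < 1 := by rw [div_lt_one hρ0]; exact hρ1
    obtain ⟨m₀, hm₀⟩ := exists_pow_lt_of_lt_one hεpos hinv2
    set m : ℕ := m₀ + 1 with hmdef
    have hm1 : 1 ≤ m := by omega
    have hρm : ρ ^ (-(m:ℤ)) < ε := by
      have hconv : ρ ^ (-(m:ℤ)) = (1/ρ) ^ m := by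
        rw [zpow_neg, zpow_natCast, one_div, inv_pow]
      rw [hconv]
      calc (1/ρ) ^ m ≤ (1/ρ) ^ m₀ := pow_le_pow_of_le_one hinv1.le hinv2.le (by omega)
        _ < ε := hm₀
    set n : ℕ := 2 * N + m with hndef
    set W : ℤ → ℝ := fun t =>
      if t < -(N:ℤ) then extSeq x (-(N:ℤ)) * ρ ^ (t + N) else extSeq x t with hW
    have hXN := extSeq_mem x (-(N:ℤ))
    have We2 : ∀ t : ℤ, t ≤ -(N:ℤ) → W t = extSeq x (-(N:ℤ)) * ρ ^ (t + N) := by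
      intro t ht
      by_cases h1 : t < -(N:ℤ)
      · rw [hW]; simp only [if_pos h1]
      · have heq : t = -(N:ℤ) := by omega
        rw [hW]
        simp only [if_neg h1]
        rw [heq, show -(N:ℤ) + N = 0 by ring, zpow_zero, mul_one]
    have h1W : ∀ t, W t ∈ Set.Icc (0:ℝ) 1 := by
      intro t
      by_cases h1 : t < -(N:ℤ)
      · rw [We2 t h1.le]
        have hz0 : (0:ℝ) ≤ ρ ^ (t + N) := (zpow_pos hρ0 _).le
        have hz1 : ρ ^ (t + N) ≤ 1 := by
          calc ρ ^ (t + N) ≤ ρ ^ (0:ℤ) := zpow_le_zpow_right₀ hρ1.le (by omega)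
            _ = 1 := zpow_zero ρ
        constructor
        · exact mul_nonneg hXN.1 hz0
        · nlinarith [hXN.1, hXN.2]
      · rw [hW]; simp only [if_neg h1]; exact extSeq_mem x _
    have h2W : ∀ t, W (t+1) = r * W t ∨ W (t+1) = ρ * W t := by
      intro t
      by_cases h1 : t + 1 ≤ -(N:ℤ)
      · right
        rw [We2 t (by omega), We2 (t+1) h1]
        rw [show t + 1 + (N:ℤ) = (t + N) + 1 by ring, zpow_add_one₀ (ne_of_gt hρ0)]
        ring
      · push_neg at h1
        have e1 : W t = extSeq x t := by rw [hW]; simp only [if_neg (by omega : ¬ t < -(N:ℤ))]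
        have e2 : W (t+1) = extSeq x (t+1) := by
          rw [hW]; simp only [if_neg (by omega : ¬ t + 1 < -(N:ℤ))]
        rw [e1, e2]
        exact extSeq_step x t
    refine ⟨n, mkM r ρ W h1W h2W, ?_, ?_⟩
    · intro t ht
      rw [extSeq_mkM]
      have e1 : W t = extSeq x t := by rw [hW]; simp only [if_neg (by omega : ¬ t < -(N:ℤ))]
      rw [e1, sub_self, abs_zero]
      exact hεpos
    · intro t ht
      rw [extSeq_mkM, hy0 t, sub_zero]
      have htn : t - n ≤ -(N:ℤ) := by omega
      rw [We2 _ htn, abs_of_nonneg (by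
        have h3 := h1W (t - n)
        rw [We2 _ htn] at h3
        exact h3.1)]
      have hme : t - n + (N:ℤ) ≤ -(m:ℤ) := by omega
      have hmono : ρ ^ (t - n + (N:ℤ)) ≤ ρ ^ (-(m:ℤ)) := zpow_le_zpow_right₀ hρ1.le hme
      nlinarith [(zpow_pos hρ0 (t - n + (N:ℤ))).le, hXN.1, hXN.2]
  · -- Case 3 : both positive
    have hYN := extSeq_mem y ((N:ℤ))
    have hXN := extSeq_mem x (-(N:ℤ))
    obtain ⟨k, l, hc1, hc2⟩ := reach h' ha hYN.2 hb hXN.2 hεpos hε1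
    set a : ℝ := extSeq y ((N:ℤ)) with hadef
    set b : ℝ := extSeq x (-(N:ℤ)) with hbdef
    set c : ℝ := a * r^k * ρ^l with hcdef
    have hcpos : 0 < c := by positivity
    have hcb : c ≤ b := hc2
    have hcb' : (1-ε)*b < c := hc1
    set n : ℕ := 2 * N + k + l with hndef
    set W : ℤ → ℝ := fun t =>
      if t ≤ -(N:ℤ) - k - l then extSeq y (t + n)
      else if t ≤ -(N:ℤ) - l then a * r ^ (t + N + k + l)
      else if t < -(N:ℤ) then a * r^k * ρ ^ (t + N + l)
      else (c / b) * extSeq x t with hW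
    have E1 : ∀ t : ℤ, t ≤ -(N:ℤ) - k - l → W t = extSeq y (t + n) := by
      intro t ht
      rw [hW]; simp only [if_pos ht]
    have E2 : ∀ t : ℤ, -(N:ℤ) - k - l ≤ t → t ≤ -(N:ℤ) - l →
        W t = a * r ^ (t + N + k + l) := by
      intro t ht1 ht2
      by_cases hc1' : t ≤ -(N:ℤ) - k - l
      · have heq : t = -(N:ℤ) - k - l := le_antisymm hc1' ht1
        rw [E1 t hc1', heq]
        rw [show -(N:ℤ) - k - l + N + k + l = 0 by ring, zpow_zero, mul_one]
        rw [show -(N:ℤ) - k - l + n = (N:ℤ) by rw [hndef]; push_cast; ring]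
      · rw [hW]; simp only [if_neg hc1', if_pos ht2]
    have E3 : ∀ t : ℤ, -(N:ℤ) - l ≤ t → t ≤ -(N:ℤ) →
        W t = a * r^k * ρ ^ (t + N + l) := by
      intro t ht1 ht2
      by_cases hc1' : t ≤ -(N:ℤ) - k - l
      · have hk0 : (k:ℤ) = 0 := by omega
        have heq : t = -(N:ℤ) - l := by omega
        have hkn : k = 0 := by omega
        rw [E1 t hc1', heq, hkn]
        rw [show -(N:ℤ) - l + N + l = 0 by ring, zpow_zero, pow_zero, mul_one, mul_one]
        rw [show -(N:ℤ) - l + n = (N:ℤ) by rw [hndef]; push_cast; omega]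
      · by_cases hc2' : t ≤ -(N:ℤ) - l
        · have heq : t = -(N:ℤ) - l := le_antisymm hc2' ht1
          rw [hW]; simp only [if_neg hc1', if_pos hc2']
          rw [heq]
          rw [show -(N:ℤ) - l + N + k + l = (k:ℤ) by ring,
            show -(N:ℤ) - l + N + l = 0 by ring, zpow_zero, mul_one, zpow_natCast]
        · by_cases hc3' : t < -(N:ℤ)
          · rw [hW]; simp only [if_neg hc1', if_neg hc2', if_pos hc3']
          · have heq : t = -(N:ℤ) := by omega
            rw [hW]; simp only [if_neg hc1', if_neg hc2', if_neg hc3']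
            rw [heq, show -(N:ℤ) + N + l = (l:ℤ) by ring, zpow_natCast]
            rw [div_mul_cancel₀ _ (ne_of_gt hb)]
    have E4 : ∀ t : ℤ, -(N:ℤ) ≤ t → W t = (c / b) * extSeq x t := by
      intro t ht
      by_cases hc1' : t ≤ -(N:ℤ) - k - l
      · have hk0 : k = 0 := by omega
        have hl0 : l = 0 := by omega
        have heq : t = -(N:ℤ) := by omega
        rw [E1 t hc1', heq]
        rw [show -(N:ℤ) + n = (N:ℤ) by rw [hndef, hk0, hl0]; push_cast; ring]
        have hca : c = a := by rw [hcdef, hk0, hl0]; simp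
        rw [hca, div_mul_cancel₀ _ (ne_of_gt hb), hadef]
      · by_cases hc2' : t ≤ -(N:ℤ) - l
        · have hl0 : l = 0 := by omega
          have heq : t = -(N:ℤ) := by omega
          rw [hW]; simp only [if_neg hc1', if_pos hc2']
          rw [heq, show -(N:ℤ) + N + k + l = (k:ℤ) by omega, zpow_natCast]
          have hca : c = a * r^k := by rw [hcdef, hl0]; simp
          rw [hca, div_mul_cancel₀ _ (ne_of_gt hb)]
        · have hc3' : ¬ t < -(N:ℤ) := by omega
          rw [hW]; simp only [if_neg hc1', if_neg hc2', if_neg hc3']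
    have h1W : ∀ t, W t ∈ Set.Icc (0:ℝ) 1 := by
      intro t
      rcases le_or_gt t (-(N:ℤ) - k - l) with h1 | h1
      · rw [E1 t h1]; exact extSeq_mem y _
      rcases le_or_gt t (-(N:ℤ) - l) with h2 | h2
      · rw [E2 t h1.le h2]
        have hz0 : (0:ℝ) ≤ r ^ (t + N + k + l) := (zpow_pos hr0 _).le
        have hz1 : r ^ (t + N + k + l) ≤ 1 := zpow_le_one₀ hr0 hr1.le (by omega)
        constructor
        · exact mul_nonneg hYN.1 hz0
        · nlinarith [hYN.1, hYN.2]
      rcases le_or_gt t (-(N:ℤ)) with h3 | h3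
      · rw [E3 t h2.le h3]
        have hz0 : (0:ℝ) ≤ ρ ^ (t + N + l) := (zpow_pos hρ0 _).le
        have hzl : ρ ^ (t + N + l) ≤ ρ ^ (l:ℤ) := zpow_le_zpow_right₀ hρ1.le (by omega)
        have hrk : (0:ℝ) ≤ a * r^k := by positivity
        constructor
        · exact mul_nonneg hrk hz0
        · have : a * r^k * ρ ^ (t + N + l) ≤ a * r^k * ρ ^ (l:ℤ) := by
            apply mul_le_mul_of_nonneg_left hzl hrk
          rw [zpow_natCast] at this
          calc a * r^k * ρ ^ (t + N + l) ≤ a * r^k * ρ^l := this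
            _ = c := by rw [hcdef]
            _ ≤ b := hcb
            _ ≤ 1 := hXN.2
      · rw [E4 t h3.le]
        have hdiv0 : (0:ℝ) ≤ c / b := (div_pos hcpos hb).le
        have hdiv1 : c / b ≤ 1 := (div_le_one hb).mpr hcb
        have hXt := extSeq_mem x t
        constructor
        · exact mul_nonneg hdiv0 hXt.1
        · nlinarith [hXt.1, hXt.2]
    have h2W : ∀ t, W (t+1) = r * W t ∨ W (t+1) = ρ * W t := by
      intro t
      rcases le_or_gt (t+1) (-(N:ℤ) - k - l) with h1 | h1
      · rw [E1 t (by omega), E1 (t+1) h1]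
        rw [show t + 1 + (n:ℤ) = (t + n) + 1 by ring]
        exact extSeq_step y (t + n)
      rcases le_or_gt (t+1) (-(N:ℤ) - l) with h2 | h2
      · left
        rw [E2 t (by omega) (by omega), E2 (t+1) (by omega) h2]
        rw [show t + 1 + (N:ℤ) + k + l = (t + N + k + l) + 1 by ring,
          zpow_add_one₀ (ne_of_gt hr0)]
        ring
      rcases le_or_gt (t+1) (-(N:ℤ)) with h3 | h3
      · right
        rw [E3 t (by omega) (by omega), E3 (t+1) (by omega) h3]
        rw [show t + 1 + (N:ℤ) + l = (t + N + l) + 1 by ring,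
          zpow_add_one₀ (ne_of_gt hρ0)]
        ring
      · rcases extSeq_step x t with hs | hs
        · left
          rw [E4 t (by omega), E4 (t+1) (by omega), hs]
          ring
        · right
          rw [E4 t (by omega), E4 (t+1) (by omega), hs]
          ring
    refine ⟨n, mkM r ρ W h1W h2W, ?_, ?_⟩
    · intro t ht
      rw [extSeq_mkM]
      rw [E4 t (by omega)]
      have hdiv1 : c / b ≤ 1 := (div_le_one hb).mpr hcb
      have hdivlb : 1 - ε < c / b := by
        rw [lt_div_iff₀ hb]
        nlinarith [hXN.1, hXN.2]
      have hXt := extSeq_mem x t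
      have heq : (c / b) * extSeq x t - extSeq x t = (c / b - 1) * extSeq x t := by ring
      rw [heq, abs_lt]
      constructor
      · nlinarith [hXt.1, hXt.2]
      · nlinarith [hXt.1, hXt.2]
    · intro t ht
      rw [extSeq_mkM]
      rw [E1 (t - n) (by omega)]
      rw [show t - (n:ℤ) + n = t by ring, sub_self, abs_zero]
      exact hεpos

/-- The shift map on `M = varprojlim(M_{r,ρ}, σ_{r,ρ})` is a homeomorphism of `M` onto
itself, and `(M, σ)` is a transitive dynamical system. -/
theorem stmt4 (r ρ : ℝ) (h : NC r ρ) :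
    (∃ e : invLimit (shiftM r ρ) ≃ₜ invLimit (shiftM r ρ), ⇑e = invShift (shiftM r ρ)) ∧
      IsTransitiveMap (invShift (shiftM r ρ)) := by
  constructor
  · exact ⟨invHomeo r ρ, rfl⟩
  · exact transitive_shift h
end

section
/- Let (r,ρ) ∈ 𝒩𝒞, let x ∈ (0,1), and let a = (a_1,a_2,a_3,…) ∈ {r,ρ}^ℕ be a sequence such that (a_1·a_2·…·a_n)·x ∈ [0,1] for every positive integer n. Then sup{(a_1·a_2·…·a_n)·x : n a positive integer} = 1 if and only if the point (x, a_1·x, (a_1·a_2)·x, (a_1·a_2·a_3)·x, …) is an end-point of M_{r,ρ}. -/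
/-- A subset `A` of a topological space is an arc if it is homeomorphic to `[0,1]`. -/
def IsArc {X : Type*} [TopologicalSpace X] (A : Set X) : Prop :=
  Nonempty (Set.Icc (0:ℝ) 1 ≃ₜ A)

/-- `x` is an end-point of the arc `A` if some homeomorphism `φ : [0,1] → A` has `φ 0 = x`. -/
def IsEndpointOfArc {X : Type*} [TopologicalSpace X] (A : Set X) (x : X) : Prop :=
  ∃ φ : Set.Icc (0:ℝ) 1 ≃ₜ A, ((φ ⟨0, by norm_num⟩ : A) : X) = x

/-- `x` is an end-point of the space `X` if it is an end-point of every arc in `X`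
containing it. -/
def IsEndpoint {X : Type*} [TopologicalSpace X] (x : X) : Prop :=
  ∀ A : Set X, IsArc A → x ∈ A → IsEndpointOfArc A x

/-! On the part of `M_{r,ρ}` where the coordinates are positive, the ratio of two consecutive
coordinates is a continuous function with values in `{r, ρ}`, hence locally constant. So an arc
through `p = (x, a₀x, a₀a₁x, …)` stays, near `p`, on the leg `{leg a t}` of `p`, and there it is
parametrised strictly monotonically by its first coordinate. Hence `p` is an interior point of
some arc iff the leg extends beyond `p`, i.e. `leg a t ∈ M_{r,ρ}` for some `t > x`, and this
happens iff the coordinates of `p` are bounded by a constant `< 1`. -/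

open Set unitInterval

lemma unitInterval.homeomorph_zero_eq_zero_or_one (h : I ≃ₜ I) : h 0 = 0 ∨ h 0 = 1 := by
  rcases h.continuous.strictMono_of_inj h.injective with hmono | hanti
  · left
    simpa using hmono.monotone (show (0 : I) ≤ h.symm 0 from (h.symm 0).2.1)
  · right
    exact le_antisymm (h 0).2.2
      (by simpa using hanti.antitone (show (0 : I) ≤ h.symm 1 from (h.symm 1).2.1))

lemma isEndpointOfArc_iff {X : Type*} [TopologicalSpace X] {A : Set X} (e : I ≃ₜ A) (s : I) :
    IsEndpointOfArc A (e s : X) ↔ s = 0 ∨ s = 1 := by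
  constructor
  · rintro ⟨φ, hφ⟩
    have : (φ.trans e.symm) 0 = s := by
      simp [show φ 0 = e s from Subtype.ext hφ]
    exact this ▸ unitInterval.homeomorph_zero_eq_zero_or_one _
  · rintro (rfl | rfl)
    · exact ⟨e, rfl⟩
    · exact ⟨symmHomeomorph.trans e, by simp⟩

def leg (a : ℕ → ℝ) (t : ℝ) : ℕ → ℝ := fun n => (∏ i ∈ Finset.range n, a i) * t

@[simp]
lemma leg_zero (a : ℕ → ℝ) (t : ℝ) : leg a t 0 = t := by
  simp [leg]

lemma leg_succ (a : ℕ → ℝ) (t : ℝ) (n : ℕ) : leg a t (n + 1) = a n * leg a t n := by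
  simp only [leg, Finset.prod_range_succ]; ring

lemma leg_mul (a : ℕ → ℝ) (c t : ℝ) (n : ℕ) : leg a (c * t) n = c * leg a t n := by
  simp only [leg]; ring

lemma continuous_leg (a : ℕ → ℝ) : Continuous (leg a) :=
  continuous_pi fun _ => continuous_const.mul continuous_id

section

variable {r ρ : ℝ} {a : ℕ → ℝ} {x : ℝ}

lemma Mset.pos {q : ℕ → ℝ} (hr : 0 < r) (hρ : 0 < ρ) (hq : q ∈ Mset r ρ) (h0 : 0 < q 0)
    (n : ℕ) : 0 < q n := by
  induction n with
  | zero => exact h0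
  | succ n ih => rcases hq.2 n with h | h <;> rw [h] <;> positivity

lemma prod_range_nonneg (hr : 0 ≤ r) (hρ : 0 ≤ ρ) (ha : ∀ n, a n = r ∨ a n = ρ) (n : ℕ) :
    0 ≤ ∏ i ∈ Finset.range n, a i :=
  Finset.prod_nonneg fun i _ => (ha i).elim (· ▸ hr) (· ▸ hρ)

lemma leg_mem_Mset (hr : 0 ≤ r) (hρ : 0 ≤ ρ) (ha : ∀ n, a n = r ∨ a n = ρ) {t : ℝ}
    (ht : 0 ≤ t) (h1 : ∀ n, leg a t n ≤ 1) : leg a t ∈ Mset r ρ :=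
  ⟨fun n => ⟨mul_nonneg (prod_range_nonneg hr hρ ha n) ht, h1 n⟩,
    fun n => by rw [leg_succ]; rcases ha n with h | h <;> simp [h]⟩

lemma leg_mem_Mset_of_le (hr : 0 ≤ r) (hρ : 0 ≤ ρ) (ha : ∀ n, a n = r ∨ a n = ρ) {s t : ℝ}
    (ht : leg a t ∈ Mset r ρ) (hs : 0 ≤ s) (hst : s ≤ t) : leg a s ∈ Mset r ρ :=
  leg_mem_Mset hr hρ ha hs fun n =>
    (mul_le_mul_of_nonneg_left hst (prod_range_nonneg hr hρ ha n)).trans (ht.1 n).2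

lemma eq_leg_of_isPreconnected {X : Type*} [TopologicalSpace X] (hr : 0 < r) (hρ : 0 < ρ)
    {F : X → ℕ → ℝ} (hF : Continuous F) {S : Set X} (hS : IsPreconnected S)
    (hFM : ∀ u ∈ S, F u ∈ Mset r ρ) (hpos : ∀ u ∈ S, 0 < F u 0) {s : X}
    (hs : s ∈ S) (hFs : F s = leg a x) {u : X} (hu : u ∈ S) : F u = leg a (F u 0) := by
  have hposn : ∀ v ∈ S, ∀ n, 0 < F v n := fun v hv => Mset.pos hr hρ (hFM v hv) (hpos v hv)
  funext n
  induction n with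
  | zero => simp
  | succ n ih =>
    let χ : X → ℝ := fun v => F v (n + 1) / F v n
    have hχ : ∀ v ∈ S, χ v ∈ ({r, ρ} : Set ℝ) := fun v hv => by
      rcases (hFM v hv).2 n with h | h <;> simp [χ, h, (hposn v hv n).ne']
    have hχc : ContinuousOn χ S :=
      ((continuous_apply _).comp hF).continuousOn.div ((continuous_apply n).comp hF).continuousOn
        fun v hv => (hposn v hv n).ne'
    have hχs : χ s = a n := by
      have := hposn s hs n
      simp only [χ, hFs, leg_succ] at this ⊢
      field_simp
    have hχu : χ u = a n :=
      hχs ▸ hS.constant_of_mapsTo (toFinite _).isDiscrete hχc hχ hu hs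
    rw [leg_succ, ← ih, ← hχu]
    exact (div_mul_cancel₀ _ (hposn u hu n).ne').symm

lemma exists_lt_leg_mem_of_injOn (hr : 0 < r) (hρ : 0 < ρ) {F : ℝ → ℕ → ℝ} (hF : Continuous F)
    {U : Set ℝ} (hU : IsOpen U) (hFM : ∀ u ∈ U, F u ∈ Mset r ρ) (hinj : InjOn F U)
    {s : ℝ} (hs : s ∈ U) (hx : 0 < x) (hFs : F s = leg a x) :
    ∃ t, x < t ∧ leg a t ∈ Mset r ρ := by
  have hg : Continuous fun u => F u 0 := (continuous_apply 0).comp hF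
  have hV : {u | 0 < F u 0} ∩ U ∈ nhds s :=
    ((isOpen_lt continuous_const hg).inter hU).mem_nhds ⟨by simpa [hFs] using hx, hs⟩
  obtain ⟨l, m, hslm, hlm⟩ := mem_nhds_iff_exists_Ioo_subset.mp hV
  have hleg : ∀ u ∈ Ioo l m, F u = leg a (F u 0) := fun u hu =>
    eq_leg_of_isPreconnected hr hρ hF isPreconnected_Ioo (fun v hv => hFM v (hlm hv).2)
      (fun v hv => (hlm hv).1) hslm hFs hu
  have hginj : InjOn (fun u => F u 0) (Ioo l m) := fun u hu v hv huv =>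
    hinj (hlm hu).2 (hlm hv).2 (by rw [hleg u hu, hleg v hv]; exact congrArg (leg a) huv)
  have hgs : F s 0 = x := by simp [hFs]
  obtain ⟨u, hu, hxu⟩ : ∃ u ∈ Ioo l m, x < F u 0 := by
    obtain ⟨hls, hsm⟩ := hslm
    have hl : (l + s) / 2 ∈ Ioo l m := ⟨by linarith, by linarith⟩
    have hm : (s + m) / 2 ∈ Ioo l m := ⟨by linarith, by linarith⟩
    rcases hg.continuousOn.strictMonoOn_of_injOn_Ioo (hls.trans hsm) hginj with
      hmono | hanti
    · exact ⟨_, hm, hgs ▸ hmono ⟨hls, hsm⟩ hm (by linarith)⟩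
    · exact ⟨_, hl, hgs ▸ hanti hl ⟨hls, hsm⟩ (by linarith)⟩
  exact ⟨F u 0, hxu, hleg u hu ▸ hFM u (hlm hu).2⟩

lemma isEndpoint_leg_of_forall_not_mem (hr : 0 < r) (hρ : 0 < ρ) (hx : 0 < x)
    (hp : leg a x ∈ Mset r ρ) (h : ∀ t, x < t → leg a t ∉ Mset r ρ) :
    IsEndpoint (⟨leg a x, hp⟩ : Mset r ρ) := by
  rintro A ⟨ψ⟩ hpA
  set s := ψ.symm ⟨_, hpA⟩
  have hψs : (ψ s : Mset r ρ) = ⟨leg a x, hp⟩ := by simp [s]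
  rw [← hψs, isEndpointOfArc_iff]
  by_contra! hs
  have hs' : (s : ℝ) ∈ Ioo 0 1 :=
    ⟨s.2.1.lt_of_ne' fun h0 => hs.1 (Subtype.ext h0),
      s.2.2.lt_of_ne fun h1 => hs.2 (Subtype.ext h1)⟩
  let F : ℝ → ℕ → ℝ := IccExtend zero_le_one fun u => ((ψ u : Mset r ρ) : ℕ → ℝ)
  have hFc : Continuous F := continuous_IccExtend_iff.mpr
    (continuous_subtype_val.comp (continuous_subtype_val.comp ψ.continuous))
  have hFinj : InjOn F (Ioo 0 1) := fun u hu v hv huv => by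
    simp only [F, IccExtend_of_mem _ _ (Ioo_subset_Icc_self hu),
      IccExtend_of_mem _ _ (Ioo_subset_Icc_self hv)] at huv
    exact congrArg Subtype.val (ψ.injective (Subtype.ext (Subtype.ext huv)))
  have hFs : F s = leg a x := by
    simp only [F, IccExtend_val, hψs]
  obtain ⟨t, hxt, ht⟩ := exists_lt_leg_mem_of_injOn hr hρ hFc isOpen_Ioo
    (fun u _ => (ψ _ : Mset r ρ).2) hFinj hs' hx hFs
  exact h t hxt ht

lemma not_isEndpoint_leg_of_mem (hr : 0 ≤ r) (hρ : 0 ≤ ρ) (ha : ∀ n, a n = r ∨ a n = ρ)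
    (hx : 0 < x) (hp : leg a x ∈ Mset r ρ) {t : ℝ} (hxt : x < t) (ht : leg a t ∈ Mset r ρ) :
    ¬ IsEndpoint (⟨leg a x, hp⟩ : Mset r ρ) := by
  intro hend
  let τ : I → ℝ := fun u => x / 2 + u * (t - x / 2)
  have hτ : ∀ u : I, 0 ≤ τ u ∧ τ u ≤ t := fun u => by
    constructor <;> simp only [τ] <;> nlinarith [u.2.1, u.2.2]
  let f : I → Mset r ρ := fun u =>
    ⟨leg a (τ u), leg_mem_Mset_of_le hr hρ ha ht (hτ u).1 (hτ u).2⟩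
  have hfc : Continuous f := ((continuous_leg a).comp
    (continuous_const.add (continuous_subtype_val.mul continuous_const))).subtype_mk _
  have hfi : Function.Injective f := fun u v huv => by
    have := congrArg (fun q : Mset r ρ => (q : ℕ → ℝ) 0) huv
    simp only [f, τ, leg_zero, add_right_inj] at this
    exact Subtype.ext (mul_right_cancel₀ (by linarith) this)
  let e := (hfc.isClosedEmbedding hfi).toIsEmbedding.toHomeomorph
  have hd : 0 < 2 * t - x := by linarith
  have hs1 : x / (2 * t - x) < 1 := (div_lt_one hd).mpr (by linarith)
  let s : I := ⟨x / (2 * t - x), (div_pos hx hd).le, hs1.le⟩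
  have hτs : τ s = x := by
    simp only [τ, s]
    field_simp
    ring
  have hes : (e s : Mset r ρ) = ⟨leg a x, hp⟩ := Subtype.ext (congrArg (leg a) hτs)
  rcases (isEndpointOfArc_iff e s).mp (hes ▸ hend _ ⟨e⟩ (hes ▸ (e s).2)) with h | h
  · exact (div_pos hx hd).ne' (congrArg Subtype.val h)
  · exact hs1.ne (congrArg Subtype.val h)

lemma isEndpoint_leg_iff (hr : 0 < r) (hρ : 0 < ρ) (ha : ∀ n, a n = r ∨ a n = ρ) (hx : 0 < x)
    (hp : leg a x ∈ Mset r ρ) :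
    IsEndpoint (⟨leg a x, hp⟩ : Mset r ρ) ↔ ¬ ∃ t, x < t ∧ leg a t ∈ Mset r ρ :=
  ⟨fun hend ⟨_, hxt, ht⟩ => not_isEndpoint_leg_of_mem hr.le hρ.le ha hx hp hxt ht hend,
    fun h => isEndpoint_leg_of_forall_not_mem hr hρ hx hp fun t hxt ht => h ⟨t, hxt, ht⟩⟩

lemma sSup_lt_one_iff_exists_leg_mem (hr : 0 ≤ r) (hρ : 0 ≤ ρ) (ha : ∀ n, a n = r ∨ a n = ρ)
    (hx : x ∈ Ioo 0 1) (hp : leg a x ∈ Mset r ρ) :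
    sSup {y | ∃ n, 1 ≤ n ∧ y = leg a x n} < 1 ↔ ∃ t, x < t ∧ leg a t ∈ Mset r ρ := by
  set S := {y | ∃ n, 1 ≤ n ∧ y = leg a x n}
  have hS : S.Nonempty := ⟨_, 1, le_rfl, rfl⟩
  have hSb : BddAbove S := ⟨1, fun _ ⟨n, _, hy⟩ => hy ▸ (hp.1 n).2⟩
  constructor
  · intro hlt
    set c := max x (sSup S)
    have hc : 0 < c := lt_max_of_lt_left hx.1
    have hxc : ∀ n, leg a x n ≤ c := fun n => by
      rcases n.eq_zero_or_pos with rfl | hn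
      · simp [c]
      · exact (le_csSup hSb ⟨n, hn, rfl⟩).trans (le_max_right _ _)
    refine ⟨c⁻¹ * x, lt_inv_mul_iff₀ hc |>.mpr ?_, leg_mem_Mset hr hρ ha ?_ fun n => ?_⟩
    · nlinarith [max_lt hx.2 hlt, hx.1]
    · exact mul_nonneg (inv_nonneg.mpr hc.le) hx.1.le
    · rw [leg_mul, inv_mul_le_iff₀ hc, mul_one]
      exact hxc n
  · rintro ⟨t, hxt, ht⟩
    have ht0 : 0 < t := hx.1.trans hxt
    calc sSup S ≤ x / t := csSup_le hS <| by
          rintro _ ⟨n, -, rfl⟩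
          rw [← div_mul_cancel₀ x ht0.ne', leg_mul, div_mul_cancel₀ x ht0.ne']
          exact mul_le_of_le_one_right (div_pos hx.1 ht0).le (ht.1 n).2
      _ < 1 := (div_lt_one ht0).mpr hxt

end

theorem stmt5_general (r ρ : ℝ) (h : NC r ρ) (x : ℝ) (hx : x ∈ Set.Ioo (0:ℝ) 1)
    (a : ℕ → ℝ) (ha : ∀ n, a n = r ∨ a n = ρ)
    (hp : (fun n => (∏ i ∈ Finset.range n, a i) * x) ∈ Mset r ρ) :
    sSup {y : ℝ | ∃ n : ℕ, 1 ≤ n ∧ y = (∏ i ∈ Finset.range n, a i) * x} = 1 ↔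
      IsEndpoint (X := Mset r ρ) ⟨fun n => (∏ i ∈ Finset.range n, a i) * x, hp⟩ := by
  obtain ⟨hr, -, hρ, -⟩ := h
  have hρ0 : 0 < ρ := zero_lt_one.trans hρ
  change sSup {y | ∃ n, 1 ≤ n ∧ y = leg a x n} = 1 ↔ IsEndpoint (⟨leg a x, hp⟩ : Mset r ρ)
  have hle : sSup {y | ∃ n, 1 ≤ n ∧ y = leg a x n} ≤ 1 :=
    csSup_le ⟨_, 1, le_rfl, rfl⟩ fun _ ⟨n, _, hy⟩ => hy ▸ (hp.1 n).2
  rw [isEndpoint_leg_iff hr hρ0 ha hx.1 hp,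
    ← sSup_lt_one_iff_exists_leg_mem hr.le hρ0.le ha hx hp, not_lt]
  exact ⟨Eq.ge, hle.antisymm⟩

/-- Characterization of end-points of `M_{r,ρ}` lying on the leg determined by a sequence
`a ∈ {r,ρ}^ℕ`: the point `(x, a₁x, a₂a₁x, …)` is an end-point of `M_{r,ρ}` iff the supremum
of its coordinates equals `1`. -/
theorem stmt5 (r ρ : ℝ) (h : NC r ρ) (x : ℝ) (hx : x ∈ Set.Ioo (0:ℝ) 1)
    (a : ℕ → ℝ) (ha : ∀ n, a n = r ∨ a n = ρ)
    (hin : ∀ n : ℕ, 1 ≤ n → (∏ i ∈ Finset.range n, a i) * x ∈ Set.Icc (0:ℝ) 1)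
    (hp : (fun n => (∏ i ∈ Finset.range n, a i) * x) ∈ Mset r ρ) :
    sSup {y : ℝ | ∃ n : ℕ, 1 ≤ n ∧ y = (∏ i ∈ Finset.range n, a i) * x} = 1 ↔
      IsEndpoint (X := Mset r ρ) ⟨fun n => (∏ i ∈ Finset.range n, a i) * x, hp⟩ :=
  stmt5_general r ρ h x hx a ha hp
end

section
/- Let (r,ρ) ∈ 𝒩𝒞 and let e = (e_1,e_2,e_3,…) ∈ M_{r,ρ}. Then e is an end-point of M_{r,ρ} if and only if sup{e_n : n a positive integer} = 1. -/
open Set Topology Filter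

namespace Stmt6Aux


lemma mset_zero {r ρ : ℝ} {x : ℕ → ℝ} (hx : x ∈ Mset r ρ) (h0 : x 0 = 0) : ∀ i, x i = 0 := by
  intro i
  induction i with
  | zero => exact h0
  | succ n ih => rcases hx.2 n with h | h <;> rw [h, ih, mul_zero]

lemma mset_pos {r ρ : ℝ} (hr : 0 < r) (hρ : 0 < ρ) {x : ℕ → ℝ} (hx : x ∈ Mset r ρ)
    (h0 : 0 < x 0) : ∀ i, 0 < x i := by
  intro i
  induction i with
  | zero => exact h0
  | succ n ih => rcases hx.2 n with h | h <;> rw [h] <;> positivity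

lemma matching {r ρ : ℝ} (hr : 0 < r) (hrρ : r < ρ) {η : ℝ}
    (hηb : η ≤ (ρ - r) / (2 * (ρ + r))) {E x : ℕ → ℝ} (hE : E ∈ Mset r ρ)
    (hx : x ∈ Mset r ρ) (hEpos : ∀ i, 0 < E i) {N : ℕ}
    (hcl : ∀ i ≤ N, |x i - E i| ≤ η * E i) :
    ∀ i ≤ N, x i * E 0 = x 0 * E i := by
  have hρpos : 0 < ρ := hr.trans hrρ
  have hη0 : 0 ≤ η := by
    have h0 := hcl 0 (Nat.zero_le N)
    have := abs_nonneg (x 0 - E 0)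
    nlinarith [hEpos 0]
  have hηρ : η * (ρ + r) < ρ - r := by
    have h1 : 0 < ρ + r := by linarith
    have h2 : (ρ - r) / (2 * (ρ + r)) < (ρ - r) / (ρ + r) := by
      apply div_lt_div_of_pos_left (by linarith) h1 (by linarith)
    have h3 : η < (ρ - r) / (ρ + r) := lt_of_le_of_lt hηb h2
    calc η * (ρ + r) < ((ρ - r) / (ρ + r)) * (ρ + r) := by
          exact mul_lt_mul_of_pos_right h3 h1
      _ = ρ - r := by field_simp
  intro i hi
  induction i with
  | zero => ring
  | succ n ih =>
    have hn1 : n ≤ N := le_trans (Nat.le_succ n) hi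
    have hid := ih (le_trans (Nat.le_succ n) hi)
    have hEn := hEpos n
    have hEn1 := hEpos (n + 1)
    have hb1 := abs_le.mp (hcl n hn1)
    have hb2 := abs_le.mp (hcl (n + 1) hi)
    rcases hE.2 n with hEc | hEc <;> rcases hx.2 n with hxc | hxc
    · rw [hxc, hEc]; linarith [mul_comm (x n) (E 0), mul_comm (x 0) (E n),
        congrArg (r * ·) hid]
    · -- E choice r, x choice ρ : impossible
      exfalso
      rw [hEc] at hb2
      rw [hxc] at hb2
      nlinarith [hb1.1, hb2.2, hEn]
    · exfalso
      rw [hEc] at hb2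
      rw [hxc] at hb2
      nlinarith [hb1.2, hb2.1, hEn]
    · rw [hxc, hEc]; nlinarith [hid]





lemma side_exit {r ρ : ℝ} (hr : 0 < r) (hrρ : r < ρ) {E : ℕ → ℝ} (hE : E ∈ Mset r ρ)
    (hEpos : ∀ i, 0 < E i) {η : ℝ} (hη : 0 < η) (hηb : η ≤ (ρ - r) / (2 * (ρ + r)))
    {n₀ : ℕ} (hn₀ : 1 < (1 + η) * E n₀) {a b : ℝ} (hab : a < b)
    {G : ℝ → ℕ → ℝ} (hG : ∀ i, Continuous fun t => G t i)
    (hGmem : ∀ t, G t ∈ Mset r ρ) (hGb : G b = E)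
    {N : ℕ} (hN : n₀ ≤ N)
    (hfar : ¬ ∀ i ≤ N, |G a i - E i| ≤ η * E i) :
    ∃ t, a ≤ t ∧ t < b ∧ ∀ i ≤ N, G t i = (1 - η / 2) * E i := by
  have hE0 := hEpos 0
  push_neg at hfar
  obtain ⟨i₀, hi₀N, hi₀⟩ := hfar
  set S : Set ℝ := Icc a b ∩ ⋃ i ∈ Iic N, {t | η * E i ≤ |G t i - E i|} with hSdef
  have hSclosed : IsClosed S := by
    apply IsClosed.inter isClosed_Icc
    apply Set.Finite.isClosed_biUnion (finite_Iic N)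
    intro i _
    exact isClosed_le continuous_const (((hG i).sub continuous_const).abs)
  have haS : a ∈ S :=
    ⟨⟨le_refl a, hab.le⟩, mem_biUnion hi₀N hi₀.le⟩
  have hSbdd : BddAbove S := ⟨b, fun t ht => ht.1.2⟩
  set t₀ := sSup S with ht₀def
  have ht₀S : t₀ ∈ S := hSclosed.csSup_mem ⟨a, haS⟩ hSbdd
  have hat₀ : a ≤ t₀ := le_csSup hSbdd haS
  have hbS : b ∉ S := by
    intro hb'
    obtain ⟨i, hi, hbi⟩ := mem_iUnion₂.mp hb'.2
    simp only [mem_setOf_eq] at hbi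
    rw [hGb, sub_self, abs_zero] at hbi
    exact absurd hbi (not_le.mpr (mul_pos hη (hEpos i)))
  have ht₀b : t₀ < b := lt_of_le_of_ne ht₀S.1.2 (fun h => hbS (h ▸ ht₀S))
  have hmatch : ∀ t, t₀ < t → t ≤ b → ∀ i ≤ N, G t i * E 0 = G t 0 * E i := by
    intro t ht1 ht2
    have htS : t ∉ S := fun hmem => absurd (le_csSup hSbdd hmem) (not_le.mpr ht1)
    have hclose : ∀ i ≤ N, |G t i - E i| ≤ η * E i := by
      intro i hi
      by_contra hc
      push_neg at hc
      exact htS ⟨⟨le_trans hat₀ ht1.le, ht2⟩, mem_biUnion hi hc.le⟩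
    exact matching hr hrρ hηb hE (hGmem t) hEpos hclose
  have hmatch₀ : ∀ i ≤ N, G t₀ i * E 0 = G t₀ 0 * E i := by
    intro i hi
    have h1 : Tendsto (fun t => G t i * E 0) (𝓝[>] t₀) (𝓝 (G t₀ i * E 0)) :=
      (((hG i).mul continuous_const).tendsto t₀).mono_left nhdsWithin_le_nhds
    have h2 : Tendsto (fun t => G t 0 * E i) (𝓝[>] t₀) (𝓝 (G t₀ 0 * E i)) :=
      (((hG 0).mul continuous_const).tendsto t₀).mono_left nhdsWithin_le_nhds
    refine tendsto_nhds_unique_of_eventuallyEq h1 h2 ?_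
    filter_upwards [Ioc_mem_nhdsGT ht₀b] with t ht
    exact hmatch t ht.1 ht.2 i hi
  obtain ⟨i₁, hi₁N, hi₁⟩ := mem_iUnion₂.mp ht₀S.2
  have hEi₁ := hEpos i₁
  have hi₁' : η * E i₁ ≤ |G t₀ i₁ - E i₁| := hi₁
  have hxy : (G t₀ i₁ - E i₁) * E 0 = (G t₀ 0 - E 0) * E i₁ := by
    have hthis := hmatch₀ i₁ hi₁N
    ring_nf
    ring_nf at hthis
    linarith
  have habs : |G t₀ i₁ - E i₁| * E 0 = |G t₀ 0 - E 0| * E i₁ := by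
    rw [show |G t₀ i₁ - E i₁| * E 0 = |(G t₀ i₁ - E i₁) * E 0| by
      rw [abs_mul, abs_of_pos hE0], hxy, abs_mul, abs_of_pos hEi₁]
  have key1 : η * E 0 ≤ |G t₀ 0 - E 0| := by
    have h1 : η * E i₁ * E 0 ≤ |G t₀ 0 - E 0| * E i₁ := by
      rw [← habs]; exact mul_le_mul_of_nonneg_right hi₁' hE0.le
    nlinarith [abs_nonneg (G t₀ 0 - E 0)]
  have key2 : G t₀ 0 * E n₀ ≤ E 0 := by
    have hm := hmatch₀ n₀ hN
    have := ((hGmem t₀).1 n₀).2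
    nlinarith
  have key3 : G t₀ 0 ≤ (1 - η) * E 0 := by
    rcases le_or_gt (G t₀ 0) ((1 - η) * E 0) with hle | hlt
    · exact hle
    exfalso
    rcases le_abs.mp key1 with h | h
    · nlinarith [hEpos n₀, (hGmem t₀).1 0 |>.1]
    · linarith
  set c := (1 - η / 2) * E 0 with hcdef
  have hc1 : G t₀ 0 < c := lt_of_le_of_lt key3 (by nlinarith)
  have hc2 : c < E 0 := by nlinarith
  have hivt := intermediate_value_Icc ht₀b.le ((hG 0).continuousOn)
  have hcmem : c ∈ (fun t => G t 0) '' Icc t₀ b := by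
    apply hivt
    constructor
    · exact hc1.le
    · show c ≤ G b 0
      rw [hGb]; exact hc2.le
  obtain ⟨t₁, ht₁mem, ht₁c⟩ := hcmem
  change G t₁ 0 = c at ht₁c
  have ht₁t₀ : t₀ < t₁ := by
    rcases lt_or_eq_of_le ht₁mem.1 with h | h
    · exact h
    · exfalso; rw [← h] at ht₁c; exact absurd ht₁c (ne_of_lt hc1)
  have ht₁b : t₁ < b := by
    rcases lt_or_eq_of_le ht₁mem.2 with h | h
    · exact h
    · exfalso; rw [h, hGb] at ht₁c; exact absurd ht₁c.symm (ne_of_lt hc2)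
  refine ⟨t₁, le_trans hat₀ ht₁mem.1, ht₁b, ?_⟩
  intro i hi
  have hm := hmatch t₁ ht₁t₀ ht₁b.le i hi
  rw [ht₁c] at hm
  have : G t₁ i * E 0 = ((1 - η / 2) * E i) * E 0 := by rw [hm, hcdef]; ring
  exact mul_right_cancel₀ hE0.ne' this


lemma not_preconnected_Icc_diff {a b c : ℝ} (hac : a < c) (hcb : c < b) :
    ¬ IsPreconnected (Icc a b \ {c}) := by
  intro H
  obtain ⟨x, hx⟩ := H (Iio c) (Ioi c) isOpen_Iio isOpen_Ioi
    (fun y hy => (show y ≠ c from fun h => hy.2 h).lt_or_gt)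
    ⟨a, ⟨⟨le_rfl, (hac.trans hcb).le⟩, ne_of_lt hac⟩, hac⟩
    ⟨b, ⟨⟨(hac.trans hcb).le, le_rfl⟩, ne_of_gt hcb⟩, hcb⟩
  exact absurd (hx.2.1.trans hx.2.2) (lt_irrefl x)

/-- The homeomorphism from `Icc a b` onto the range of a continuous injection. -/
noncomputable def rangeHomeo {X : Type*} [TopologicalSpace X] [T2Space X] {a b : ℝ}
    (F : Set.Icc a b → X) (hF : Continuous F) (hinj : Function.Injective F) :
    Set.Icc a b ≃ₜ Set.range F :=
  haveI : CompactSpace (Set.Icc a b) := isCompact_iff_compactSpace.mp isCompact_Icc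
  Continuous.homeoOfEquivCompactToT2 (f := Equiv.ofInjective F hinj) (hF.subtype_mk _)

lemma rangeHomeo_apply {X : Type*} [TopologicalSpace X] [T2Space X] {a b : ℝ}
    (F : Set.Icc a b → X) (hF : Continuous F) (hinj : Function.Injective F)
    (x : Set.Icc a b) : (rangeHomeo F hF hinj x : X) = F x := rfl

lemma isArc_range {X : Type*} [TopologicalSpace X] [T2Space X] {a b : ℝ} (hab : a < b)
    (F : Set.Icc a b → X) (hF : Continuous F) (hinj : Function.Injective F) :
    IsArc (Set.range F) :=
  ⟨(iccHomeoI a b hab).symm.trans (rangeHomeo F hF hinj)⟩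

lemma preconnected_ne_zero :
    IsPreconnected {x : Set.Icc (0:ℝ) 1 | x ≠ ⟨0, by norm_num⟩} := by
  rw [← Topology.IsInducing.subtypeVal.isPreconnected_image]
  have : Subtype.val '' {x : Set.Icc (0:ℝ) 1 | x ≠ ⟨0, by norm_num⟩} = Ioc (0:ℝ) 1 := by
    ext y
    constructor
    · rintro ⟨x, hx, rfl⟩
      have h0 : (x : ℝ) ≠ 0 := fun h => hx (Subtype.ext h)
      exact ⟨lt_of_le_of_ne x.2.1 (Ne.symm h0), x.2.2⟩
    · intro hy
      exact ⟨⟨y, ⟨hy.1.le, hy.2⟩⟩, fun h => absurd (congrArg Subtype.val h) (by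
        simpa using ne_of_gt hy.1), rfl⟩
  rw [this]
  exact isPreconnected_Ioc

lemma not_endpoint_interior {X : Type*} [TopologicalSpace X] [T2Space X] {a b c : ℝ}
    (hac : a < c) (hcb : c < b) {F : Set.Icc a b → X} (hF : Continuous F)
    (hinj : Function.Injective F) :
    ¬ IsEndpointOfArc (Set.range F) (F ⟨c, hac.le, hcb.le⟩) := by
  rintro ⟨φ, hφ⟩
  set H := rangeHomeo F hF hinj with hH
  set g : Set.Icc (0:ℝ) 1 ≃ₜ Set.Icc a b := φ.trans H.symm with hg
  have hg0 : g ⟨0, by norm_num⟩ = ⟨c, hac.le, hcb.le⟩ := by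
    have h1 : H ⟨c, hac.le, hcb.le⟩ = φ ⟨0, by norm_num⟩ := by
      apply Subtype.ext
      rw [hφ]
      rfl
    show H.symm (φ ⟨0, by norm_num⟩) = _
    rw [← h1, Homeomorph.symm_apply_apply]
  set S : Set (Set.Icc (0:ℝ) 1) := {x | x ≠ ⟨0, by norm_num⟩} with hS
  have himg : IsPreconnected ((Subtype.val ∘ g) '' S) :=
    preconnected_ne_zero.image _ (continuous_subtype_val.comp g.continuous).continuousOn
  have heq : (Subtype.val ∘ g) '' S = Icc a b \ {c} := by
    ext y
    constructor
    · rintro ⟨x, hx, rfl⟩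
      refine ⟨(g x).2, ?_⟩
      intro hy
      apply hx
      apply g.injective
      rw [hg0]
      exact Subtype.ext hy
    · rintro ⟨hy1, hy2⟩
      refine ⟨g.symm ⟨y, hy1⟩, ?_, by simp⟩
      intro hx
      apply hy2
      have : g (g.symm ⟨y, hy1⟩) = g ⟨0, by norm_num⟩ := by rw [hx]
      rw [Homeomorph.apply_symm_apply, hg0] at this
      exact congrArg Subtype.val this
  rw [heq] at himg
  exact not_preconnected_Icc_diff hac hcb himg









lemma smul_mem_mset {r ρ : ℝ} {x : ℕ → ℝ} (hx : x ∈ Mset r ρ) {c : ℝ} (hc : 0 ≤ c)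
    (h1 : ∀ i, c * x i ≤ 1) : (fun i => c * x i) ∈ Mset r ρ := by
  refine ⟨fun i => ⟨mul_nonneg hc (hx.1 i).1, h1 i⟩, fun i => ?_⟩
  rcases hx.2 i with h | h
  · left; show c * x (i + 1) = r * (c * x i); rw [h]; ring
  · right; show c * x (i + 1) = ρ * (c * x i); rw [h]; ring

/-- direction 1, case `e ≠ 0`. -/
lemma not_endpoint_of_sup_lt {r ρ : ℝ} (hr : 0 < r) (hrρ : r < ρ)
    (e : Mset r ρ) (hE0 : 0 < e.1 0)
    (hlt : sSup (Set.range fun n : ℕ => e.1 n) < 1) :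
    ¬ IsEndpoint e := by
  intro hend
  set m := sSup (Set.range fun n : ℕ => e.1 n) with hm
  have hbdd : BddAbove (Set.range fun n : ℕ => e.1 n) := ⟨1, by
    rintro x ⟨n, rfl⟩; exact (e.2.1 n).2⟩
  have hle : ∀ i, e.1 i ≤ m := fun i => le_csSup hbdd ⟨i, rfl⟩
  have hm0 : 0 < m := lt_of_lt_of_le hE0 (hle 0)
  have h1m : 1 < m⁻¹ := (one_lt_inv₀ hm0).mpr hlt
  set F : Set.Icc (0:ℝ) m⁻¹ → Mset r ρ := fun lam =>
    ⟨fun i => lam.1 * e.1 i, smul_mem_mset e.2 lam.2.1 (fun i => by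
      calc lam.1 * e.1 i ≤ m⁻¹ * e.1 i :=
            mul_le_mul_of_nonneg_right lam.2.2 (e.2.1 i).1
        _ ≤ m⁻¹ * m := mul_le_mul_of_nonneg_left (hle i) (by positivity)
        _ = 1 := inv_mul_cancel₀ hm0.ne')⟩ with hF
  have hFcont : Continuous F := by
    apply Continuous.subtype_mk
    exact continuous_pi fun i => continuous_subtype_val.mul continuous_const
  have hFinj : Function.Injective F := by
    intro x y hxy
    have h0 := congrArg (fun z => z.1 0) hxy
    simp only [hF] at h0
    exact Subtype.ext (mul_right_cancel₀ hE0.ne' h0)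
  have hmem : e ∈ Set.range F := ⟨⟨1, by norm_num, h1m.le⟩, Subtype.ext (funext fun i => one_mul _)⟩
  have heq : e = F ⟨1, zero_lt_one.le, h1m.le⟩ := Subtype.ext (funext fun i => (one_mul _).symm)
  have := hend (Set.range F) (isArc_range (by linarith) F hFcont hFinj) hmem
  rw [heq] at this
  exact not_endpoint_interior zero_lt_one h1m hFcont hFinj this

/-- direction 1, case `e = 0`. -/
lemma not_endpoint_zero {r ρ : ℝ} (hr : 0 < r) (hr1 : r < 1) (hρ1 : 1 < ρ)
    (e : Mset r ρ) (hE0 : e.1 0 = 0) : ¬ IsEndpoint e := by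
  intro hend
  have hρ0 : (0:ℝ) < ρ := by linarith
  have hEzero : ∀ i, e.1 i = 0 := mset_zero e.2 hE0
  set q : ℕ → ℝ := fun i => if i = 0 then ρ⁻¹ else r ^ (i - 1) with hq
  have hq0 : q 0 = ρ⁻¹ := rfl
  have hqs : ∀ i, q (i + 1) = r ^ i := fun i => by simp [hq]
  have hqpos : ∀ i, 0 < q i := by
    intro i; cases i with
    | zero => rw [hq0]; positivity
    | succ n => rw [hqs]; positivity
  have hqle : ∀ i, q i ≤ 1 := by
    intro i; cases i with
    | zero => rw [hq0]; exact (inv_le_one₀ hρ0).mpr hρ1.le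
    | succ n => rw [hqs]; exact pow_le_one₀ hr.le hr1.le
  set F : Set.Icc (-1:ℝ) 1 → Mset r ρ := fun t =>
    ⟨fun i => max (-t.1) 0 * r ^ i + max t.1 0 * q i, by
      rcases le_total t.1 0 with ht | ht
      · have h1 : max t.1 0 = 0 := max_eq_right ht
        have h2 : max (-t.1) 0 = -t.1 := max_eq_left (neg_nonneg.mpr ht)
        refine ⟨fun i => ⟨?_, ?_⟩, fun i => Or.inl ?_⟩
        · simp only [h1, h2, zero_mul, add_zero]
          have : 0 ≤ -t.1 := neg_nonneg.mpr ht
          positivity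
        · simp only [h1, h2, zero_mul, add_zero]
          have h3 : -t.1 ≤ 1 := by linarith [t.2.1]
          exact mul_le_one₀ h3 (by positivity) (pow_le_one₀ hr.le hr1.le)
        · simp only [h1, h2, zero_mul, add_zero]
          rw [pow_succ]; ring
      · have h1 : max t.1 0 = t.1 := max_eq_left ht
        have h2 : max (-t.1) 0 = 0 := max_eq_right (neg_nonpos.mpr ht)
        refine ⟨fun i => ⟨?_, ?_⟩, fun i => ?_⟩
        · simp only [h1, h2, zero_mul, zero_add]
          exact mul_nonneg ht (hqpos i).le
        · simp only [h1, h2, zero_mul, zero_add]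
          exact mul_le_one₀ t.2.2 (hqpos i).le (hqle i)
        · simp only [h1, h2, zero_mul, zero_add]
          cases i with
          | zero =>
            right
            rw [hqs 0, hq0, pow_zero]
            rw [show ρ * (t.1 * ρ⁻¹) = t.1 * (ρ * ρ⁻¹) by ring, mul_inv_cancel₀ hρ0.ne']
          | succ n =>
            left
            rw [hqs (n+1), hqs n, pow_succ]
            ring⟩ with hFdef
  have hFcont : Continuous F := by
    apply Continuous.subtype_mk
    apply continuous_pi
    intro i
    apply Continuous.add
    · exact (Continuous.max (continuous_subtype_val.neg) continuous_const).mul continuous_const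
    · exact (Continuous.max continuous_subtype_val continuous_const).mul continuous_const
  have hFinj : Function.Injective F := by
    intro x y hxy
    have h0 := congrArg (fun z => z.1 0) hxy
    have h1 := congrArg (fun z => z.1 1) hxy
    simp only [hFdef, pow_zero, pow_one, hq0, hqs 0] at h0 h1
    have hρne : ρ ≠ 0 := hρ0.ne'
    have e0 : max (-x.1) 0 * ρ + max x.1 0 = max (-y.1) 0 * ρ + max y.1 0 := by
      field_simp at h0
      linarith [h0]
    have e1 : max (-x.1) 0 * r + max x.1 0 = max (-y.1) 0 * r + max y.1 0 := by
      linarith [h1]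
    have hA : max (-x.1) 0 = max (-y.1) 0 := by
      have hsub : max (-x.1) 0 * (ρ - r) = max (-y.1) 0 * (ρ - r) := by
        linear_combination e0 - e1
      exact mul_right_cancel₀ (sub_ne_zero.mpr (by linarith : r ≠ ρ).symm) hsub
    have hB : max x.1 0 = max y.1 0 := by rw [hA] at e1; linarith
    apply Subtype.ext
    rw [← max_zero_sub_max_neg_zero_eq_self x.1, ← max_zero_sub_max_neg_zero_eq_self y.1,
      hA, hB]
  have heq : e = F ⟨0, by norm_num⟩ := by
    apply Subtype.ext
    funext i
    simp [hFdef, hEzero i]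
  have hmem : e ∈ Set.range F := ⟨_, heq.symm⟩
  have := hend (Set.range F) (isArc_range (by norm_num) F hFcont hFinj) hmem
  rw [heq] at this
  have h01 : F ⟨0, by norm_num⟩ = F ⟨(0:ℝ), (neg_one_lt_zero).le, zero_le_one⟩ := rfl
  rw [h01] at this
  exact not_endpoint_interior neg_one_lt_zero zero_lt_one hFcont hFinj this


/-- Reversal homeomorphism of `[0,1]`. -/
def revIcc : Set.Icc (0:ℝ) 1 ≃ₜ Set.Icc (0:ℝ) 1 where
  toFun x := ⟨1 - x.1, ⟨by linarith [x.2.2], by linarith [x.2.1]⟩⟩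
  invFun x := ⟨1 - x.1, ⟨by linarith [x.2.2], by linarith [x.2.1]⟩⟩
  left_inv x := Subtype.ext (by ring)
  right_inv x := Subtype.ext (by ring)
  continuous_toFun := Continuous.subtype_mk (continuous_const.sub continuous_subtype_val) _
  continuous_invFun := Continuous.subtype_mk (continuous_const.sub continuous_subtype_val) _

set_option maxHeartbeats 1000000 in
lemma endpoint_of_sup_eq {r ρ : ℝ} (hr : 0 < r) (hr1 : r < 1) (hρ1 : 1 < ρ)
    (e : Mset r ρ) (hsup : sSup (Set.range fun n : ℕ => e.1 n) = 1) :
    IsEndpoint e := by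
  intro A hA heA
  obtain ⟨ψ⟩ := hA
  have hrρ : r < ρ := by linarith
  have hρ0 : (0:ℝ) < ρ := by linarith
  have hnear : ∀ δ : ℝ, 0 < δ → ∃ n, 1 - δ < e.1 n := by
    intro δ hδ
    have hlt : (1:ℝ) - δ < sSup (Set.range fun n : ℕ => e.1 n) := by rw [hsup]; linarith
    obtain ⟨x, ⟨n, rfl⟩, hx⟩ := exists_lt_of_lt_csSup (Set.range_nonempty (fun n : ℕ => e.1 n)) hlt
    exact ⟨n, hx⟩
  have hE0 : 0 < e.1 0 := by
    rcases lt_or_eq_of_le (e.2.1 0).1 with h0 | h0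
    · exact h0
    · exfalso
      obtain ⟨n, hn⟩ := hnear (1/2) (by norm_num)
      rw [mset_zero e.2 h0.symm n] at hn; linarith
  have hEpos : ∀ i, 0 < e.1 i := mset_pos hr hρ0 e.2 hE0
  set η₀ : ℝ := (ρ - r) / (2 * (ρ + r)) with hη₀def
  have hη₀ : 0 < η₀ := by apply div_pos <;> linarith
  have hη₀lt : η₀ < 1 := by
    rw [hη₀def, div_lt_one (by linarith)]; linarith
  set s : Set.Icc (0:ℝ) 1 := ψ.symm ⟨e, heA⟩ with hs
  have hψs : ψ s = ⟨e, heA⟩ := ψ.apply_symm_apply _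
  by_cases hs0 : s = ⟨0, by norm_num⟩
  · exact ⟨ψ, by rw [← hs0, hψs]⟩
  by_cases hs1 : s = ⟨1, by norm_num⟩
  · refine ⟨revIcc.trans ψ, ?_⟩
    have h0 : revIcc ⟨0, by norm_num⟩ = ⟨1, by norm_num⟩ := Subtype.ext (by norm_num [revIcc])
    show ((ψ (revIcc ⟨0, by norm_num⟩) : A) : Mset r ρ) = e
    rw [h0, ← hs1, hψs]
  exfalso
  have hs0' : 0 < s.1 := lt_of_le_of_ne s.2.1 (fun hc => hs0 (Subtype.ext hc.symm))
  have hs1' : s.1 < 1 := lt_of_le_of_ne s.2.2 (fun hc => hs1 (Subtype.ext hc))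
  -- the parametrization of the arc
  set F : Set.Icc (0:ℝ) 1 → ℕ → ℝ := fun t => ((ψ t).1).1 with hFdef
  have hFcont : Continuous F :=
    continuous_subtype_val.comp (continuous_subtype_val.comp ψ.continuous)
  have hFmem : ∀ t, F t ∈ Mset r ρ := fun t => ((ψ t).1).2
  have hFs : F s = e.1 := by
    have h1 : (ψ s).1 = e := congrArg Subtype.val hψs
    rw [hFdef]
    simp only [h1]
  have hFinj : Function.Injective F := fun t t' hF =>
    ψ.injective (Subtype.ext (Subtype.ext hF))
  set G : ℝ → ℕ → ℝ := fun u => F (Set.projIcc 0 1 zero_le_one u) with hGdef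
  have hGmem : ∀ u, G u ∈ Mset r ρ := fun u => hFmem _
  have hGcont : Continuous G := hFcont.comp continuous_projIcc
  have hGi : ∀ i, Continuous fun u => G u i := fun i => (continuous_apply i).comp hGcont
  have hGIcc : ∀ (u : ℝ) (hu : u ∈ Icc (0:ℝ) 1), G u = F ⟨u, hu⟩ := by
    intro u hu
    rw [hGdef]
    simp only [Set.projIcc_of_mem zero_le_one hu]
  have hGs : G s.1 = e.1 := by
    rw [hGIcc s.1 s.2, Subtype.coe_eta, hFs]
  -- exclusion of the two arc end points from thin tubes around e
  have hexcl : ∀ u : ℕ → ℝ, u ∈ Mset r ρ → u ≠ e.1 → ∃ ηu : ℝ, 0 < ηu ∧ ηu ≤ η₀ ∧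
      ∃ Nu : ℕ, ∀ N ≥ Nu, ∀ η' : ℝ, 0 < η' → η' ≤ ηu →
        ¬ ∀ i ≤ N, |u i - e.1 i| ≤ η' * e.1 i := by
    intro u hu hne
    by_cases hmul : ∀ i, u i * e.1 0 = u 0 * e.1 i
    · set lam := u 0 / e.1 0 with hlamdef
      have hlam : ∀ i, u i = lam * e.1 i := by
        intro i
        rw [hlamdef]
        field_simp
        linarith [hmul i]
      have hlam1 : lam ≤ 1 := by
        by_contra hl
        push_neg at hl
        have hlam0 : 0 < lam := by linarith
        have hinvlt : 1/lam < 1 := by rw [div_lt_one hlam0]; linarith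
        obtain ⟨n, hn⟩ := hnear (1 - 1/lam) (by linarith)
        have h2 : u n ≤ 1 := (hu.1 n).2
        rw [hlam n] at h2
        have h3 : 1 - (1 - 1/lam) = 1/lam := by ring
        rw [h3] at hn
        have hc : lam * (1/lam) = 1 := by field_simp
        nlinarith [mul_pos hlam0 (sub_pos.mpr hn)]
      have hlamlt : lam < 1 := by
        rcases lt_or_eq_of_le hlam1 with h | h
        · exact h
        · exact absurd (funext fun i => by rw [hlam i, h, one_mul] : u = e.1) hne
      refine ⟨min η₀ ((1 - lam)/2), lt_min hη₀ (by linarith), min_le_left _ _, 0, ?_⟩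
      intro N _ η' hp hle hall
      have h0 := hall 0 (Nat.zero_le N)
      rw [hlam 0] at h0
      have habs : |lam * e.1 0 - e.1 0| = (1 - lam) * e.1 0 := by
        rw [abs_of_nonpos (by nlinarith)]
        ring
      rw [habs] at h0
      have hle2 : η' ≤ (1 - lam)/2 := le_trans hle (min_le_right _ _)
      nlinarith
    · push_neg at hmul
      obtain ⟨i₀, hi₀⟩ := hmul
      refine ⟨η₀, hη₀, le_refl _, i₀, ?_⟩
      intro N hN η' hp hle hall
      exact hi₀ (matching hr hrρ (le_trans hle (le_of_eq hη₀def.symm)) e.2 hu hEpos hall i₀ hN)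
  have hneL : G 0 ≠ e.1 := by
    rw [hGIcc 0 ⟨le_refl 0, zero_le_one⟩]
    intro hc
    exact hs0 (hFinj (hc.trans hFs.symm)).symm
  have hneR : G 1 ≠ e.1 := by
    rw [hGIcc 1 ⟨zero_le_one, le_refl 1⟩]
    intro hc
    exact hs1 (hFinj (hc.trans hFs.symm)).symm
  obtain ⟨ηL, hηL0, hηLb, NL, hLfar⟩ := hexcl (G 0) (hGmem 0) hneL
  obtain ⟨ηR, hηR0, hηRb, NR, hRfar⟩ := hexcl (G 1) (hGmem 1) hneR
  set η := min ηL ηR with hηdef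
  have hη0 : 0 < η := lt_min hηL0 hηR0
  have hηb : η ≤ η₀ := le_trans (min_le_left _ _) hηLb
  have h1η : (0:ℝ) < 1 + η := by linarith
  have hinv1 : 1/(1+η) < 1 := by rw [div_lt_one h1η]; linarith
  obtain ⟨n₀, hn₀⟩ := hnear (1 - 1/(1+η)) (by linarith)
  have hn₀' : 1 < (1 + η) * e.1 n₀ := by
    have h3 : 1 - (1 - 1/(1+η)) = 1/(1+η) := by ring
    rw [h3] at hn₀
    have hc : (1+η) * (1/(1+η)) = 1 := by field_simp
    nlinarith [mul_lt_mul_of_pos_left hn₀ h1η]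
  set N₁ := max NL NR with hN₁def
  have hηbfull : η ≤ (ρ - r) / (2 * (ρ + r)) := le_trans hηb (le_of_eq hη₀def)
  have hsideL : ∀ N : ℕ, ∃ u, 0 ≤ u ∧ u < s.1 ∧
      ∀ i ≤ max (max N N₁) n₀, G u i = (1 - η/2) * e.1 i := by
    intro N
    apply side_exit hr hrρ e.2 hEpos hη0 hηbfull hn₀' hs0' hGi hGmem hGs
      (le_max_right _ _)
    exact hLfar _ (le_trans (le_trans (le_max_left NL NR) (le_max_right N N₁))
      (le_max_left _ _)) η hη0 (min_le_left _ _)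
  have hsideR : ∀ N : ℕ, ∃ u, u ≤ 1 ∧ s.1 < u ∧
      ∀ i ≤ max (max N N₁) n₀, G u i = (1 - η/2) * e.1 i := by
    intro N
    have hab : (-1:ℝ) < -s.1 := by linarith
    have hGb' : (fun u => G (-u)) (-s.1) = e.1 := by
      simp only [neg_neg]; exact hGs
    have hGi' : ∀ i, Continuous fun u => (fun u => G (-u)) u i :=
      fun i => (hGi i).comp continuous_neg
    have hfar' : ¬ ∀ i ≤ max (max N N₁) n₀,
        |(fun u => G (-u)) (-1) i - e.1 i| ≤ η * e.1 i := by
      simp only [neg_neg]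
      exact hRfar _ (le_trans (le_trans (le_max_right NL NR) (le_max_right N N₁))
        (le_max_left _ _)) η hη0 (min_le_right _ _)
    obtain ⟨τ, hτ1, hτs, hτval⟩ := side_exit hr hrρ e.2 hEpos hη0 hηbfull hn₀' hab
      hGi' (fun t => hGmem (-t)) hGb' (le_max_right _ _) hfar'
    exact ⟨-τ, by linarith, by linarith, fun i hi => hτval i hi⟩
  choose uL huL0 huLs huLval using hsideL
  choose uR huR1 huRs huRval using hsideR
  set yfun : ℕ → ℝ := fun i => (1 - η/2) * e.1 i with hyfun
  have hymem : yfun ∈ Mset r ρ := by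
    apply smul_mem_mset e.2 (by nlinarith : (0:ℝ) ≤ 1 - η/2)
    intro i
    exact mul_le_one₀ (by nlinarith) (e.2.1 i).1 (e.2.1 i).2
  set yhat : Mset r ρ := ⟨yfun, hymem⟩ with hyhat
  have hmemIccL : ∀ N, uL N ∈ Icc (0:ℝ) 1 :=
    fun N => ⟨huL0 N, le_trans (huLs N).le s.2.2⟩
  have hmemIccR : ∀ N, uR N ∈ Icc (0:ℝ) 1 :=
    fun N => ⟨le_trans s.2.1 (huRs N).le, huR1 N⟩
  set seqL : ℕ → Mset r ρ := fun N => ⟨G (uL N), hGmem _⟩ with hseqL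
  set seqR : ℕ → Mset r ρ := fun N => ⟨G (uR N), hGmem _⟩ with hseqR
  have hconvL : Filter.Tendsto seqL Filter.atTop (nhds yhat) := by
    rw [tendsto_subtype_rng, tendsto_pi_nhds]
    intro i
    refine Filter.Tendsto.congr' ?_ (tendsto_const_nhds (x := yfun i))
    filter_upwards [Filter.eventually_ge_atTop i] with N hN
    exact (huLval N i (le_trans hN (le_trans (le_max_left N N₁) (le_max_left _ n₀)))).symm
  have hconvR : Filter.Tendsto seqR Filter.atTop (nhds yhat) := by
    rw [tendsto_subtype_rng, tendsto_pi_nhds]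
    intro i
    refine Filter.Tendsto.congr' ?_ (tendsto_const_nhds (x := yfun i))
    filter_upwards [Filter.eventually_ge_atTop i] with N hN
    exact (huRval N i (le_trans hN (le_trans (le_max_left N N₁) (le_max_left _ n₀)))).symm
  set AL : Set (Mset r ρ) := (fun t : Set.Icc (0:ℝ) 1 => (ψ t).1) '' {t | t.1 ≤ s.1}
    with hALdef
  set AR : Set (Mset r ρ) := (fun t : Set.Icc (0:ℝ) 1 => (ψ t).1) '' {t | s.1 ≤ t.1}
    with hARdef
  have hALclosed : IsClosed AL := by
    apply IsCompact.isClosed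
    apply IsCompact.image
    · exact (isClosed_le continuous_subtype_val continuous_const).isCompact
    · exact continuous_subtype_val.comp ψ.continuous
  have hARclosed : IsClosed AR := by
    apply IsCompact.isClosed
    apply IsCompact.image
    · exact (isClosed_le continuous_const continuous_subtype_val).isCompact
    · exact continuous_subtype_val.comp ψ.continuous
  have hseqLmem : ∀ N, seqL N ∈ AL := by
    intro N
    refine ⟨⟨uL N, hmemIccL N⟩, (huLs N).le, ?_⟩
    exact Subtype.ext (hGIcc (uL N) (hmemIccL N)).symm
  have hseqRmem : ∀ N, seqR N ∈ AR := by
    intro N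
    refine ⟨⟨uR N, hmemIccR N⟩, (huRs N).le, ?_⟩
    exact Subtype.ext (hGIcc (uR N) (hmemIccR N)).symm
  have hyL : yhat ∈ AL := hALclosed.mem_of_tendsto hconvL
    (Filter.Eventually.of_forall hseqLmem)
  have hyR : yhat ∈ AR := hARclosed.mem_of_tendsto hconvR
    (Filter.Eventually.of_forall hseqRmem)
  obtain ⟨t₁, ht₁le, ht₁val⟩ := hyL
  obtain ⟨t₂, ht₂ge, ht₂val⟩ := hyR
  have ht12 : t₁ = t₂ := ψ.injective (Subtype.ext (ht₁val.trans ht₂val.symm))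
  have hts : t₁ = s := Subtype.ext (le_antisymm ht₁le (by rw [ht12]; exact ht₂ge))
  rw [hts] at ht₁val
  have hey : (e : Mset r ρ) = yhat := by
    rw [← ht₁val]
    exact (congrArg Subtype.val hψs).symm
  have h00 : e.1 0 = (1 - η/2) * e.1 0 := congrFun (congrArg Subtype.val hey) 0
  nlinarith

end Stmt6Aux

/-- A point `e ∈ M_{r,ρ}` is an end-point of `M_{r,ρ}` if and only if the supremum of its
coordinates equals `1`. -/
theorem stmt6 (r ρ : ℝ) (h : NC r ρ) (e : Mset r ρ) :
    IsEndpoint e ↔ sSup (Set.range fun n : ℕ => e.1 n) = 1 := by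
  obtain ⟨hr, hr1, hρ1, -⟩ := h
  constructor
  · intro hend
    by_contra hne
    have hle1 : sSup (Set.range fun n : ℕ => e.1 n) ≤ 1 := by
      apply csSup_le (Set.range_nonempty (fun n : ℕ => e.1 n))
      rintro x ⟨n, rfl⟩
      exact (e.2.1 n).2
    have hlt : sSup (Set.range fun n : ℕ => e.1 n) < 1 := lt_of_le_of_ne hle1 hne
    rcases lt_or_eq_of_le (e.2.1 0).1 with h0 | h0
    · exact Stmt6Aux.not_endpoint_of_sup_lt hr (by linarith) e h0 hlt hend
    · exact Stmt6Aux.not_endpoint_zero hr hr1 hρ1 e h0.symm hend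
  · exact Stmt6Aux.endpoint_of_sup_eq hr hr1 hρ1 e
end

section
/- Let (r,ρ) ∈ 𝒩𝒞 and let x = (x_1,x_2,x_3,…) ∈ M_{r,ρ} with x ≠ (0,0,0,…). If x is not an end-point of M_{r,ρ}, then x_n ∉ {0,1} for every positive integer n. -/
/-- If some coordinate of `y ∈ M` vanishes, all vanish. -/
lemma mset_zero_prop (r ρ : ℝ) (hr : r ≠ 0) (hρ : ρ ≠ 0) (y : Mset r ρ) (i : ℕ)
    (h : y.1 i = 0) : ∀ j, y.1 j = 0 := by
  have up : ∀ a b : ℕ, y.1 a = 0 → y.1 (a + b) = 0 := by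
    intro a b ha
    induction b with
    | zero => simpa using ha
    | succ b ih =>
      rcases y.2.2 (a + b) with hc | hc <;>
        rw [show a + (b + 1) = (a + b) + 1 from rfl, hc, ih, mul_zero]
  have down : ∀ a : ℕ, y.1 (a + 1) = 0 → y.1 a = 0 := by
    intro a ha
    rcases y.2.2 a with hc | hc <;> rw [hc] at ha
    · exact (mul_eq_zero.mp ha).resolve_left hr
    · exact (mul_eq_zero.mp ha).resolve_left hρ
  have downit : ∀ b a : ℕ, y.1 (a + b) = 0 → y.1 a = 0 := by
    intro b
    induction b with
    | zero => intro a ha; simpa using ha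
    | succ b ih =>
      intro a ha
      exact ih a (down (a + b) (by rwa [show (a + b) + 1 = a + (b + 1) from rfl]))
  intro j
  rcases le_total i j with hij | hij
  · have := up i (j - i) h
    rwa [Nat.add_sub_cancel' hij] at this
  · exact downit (i - j) j (by rwa [Nat.add_sub_cancel' hij])

/-- A preconnected subset of a pair `{r, ρ}` with `r < ρ` is a subsingleton. -/
lemma pair_preconnected_subsingleton {r ρ : ℝ} (hrρ : r < ρ) {S : Set ℝ}
    (hS : IsPreconnected S) (hsub : S ⊆ {r, ρ}) :
    ∀ a ∈ S, ∀ b ∈ S, a = b := by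
  intro a ha b hb
  by_contra hab
  have har := hsub ha
  have hbr := hsub hb
  have hmidmem : (r + ρ) / 2 ∈ S := by
    rcases har with rfl | rfl <;> rcases hbr with rfl | rfl
    · exact absurd rfl hab
    · exact hS.Icc_subset ha hb ⟨by linarith, by linarith⟩
    · exact hS.Icc_subset hb ha ⟨by linarith, by linarith⟩
    · exact absurd rfl hab
  rcases hsub hmidmem with hm | hm
  · linarith
  · rw [Set.mem_singleton_iff] at hm; linarith

/-- Key lemma: a connected subset of `M` on which the `n`-th coordinate never vanishes,
containing a point `x` with `x n = 1`, lies on the ray through `x`. -/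
lemma mset_connected_ray (r ρ : ℝ) (hr : 0 < r) (hr1 : r < 1) (hρ : 1 < ρ) (n : ℕ)
    (C : Set (Mset r ρ)) (hC : IsPreconnected C) (hCn : ∀ y ∈ C, y.1 n ≠ 0)
    (x : Mset r ρ) (hx : x ∈ C) (hxn : x.1 n = 1) :
    ∀ y ∈ C, ∀ i, y.1 i = y.1 n * x.1 i := by
  have hρ0 : (ρ : ℝ) ≠ 0 := by linarith
  have hpos : ∀ y ∈ C, ∀ i, y.1 i ≠ 0 := by
    intro y hy i hzero
    exact hCn y hy (mset_zero_prop r ρ hr.ne' hρ0 y i hzero n)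
  have hconst : ∀ i, ∀ y ∈ C, y.1 (i + 1) * x.1 i = x.1 (i + 1) * y.1 i := by
    intro i
    set f : Mset r ρ → ℝ := fun y => y.1 (i + 1) / y.1 i with hf
    have hfc : ContinuousOn f C := by
      apply ContinuousOn.div
      · exact ((continuous_apply (i + 1)).comp continuous_subtype_val).continuousOn
      · exact ((continuous_apply i).comp continuous_subtype_val).continuousOn
      · exact fun y hy => hpos y hy i
    have himg : f '' C ⊆ {r, ρ} := by
      rintro _ ⟨y, hy, rfl⟩
      rcases y.2.2 i with hc | hc
      · left; simp only [hf, hc]; exact mul_div_cancel_right₀ r (hpos y hy i)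
      · right; simp only [hf, hc]; exact mul_div_cancel_right₀ ρ (hpos y hy i)
    have hpre := hC.image f hfc
    intro y hy
    have hfy : f y = f x :=
      pair_preconnected_subsingleton (by linarith) hpre himg _ ⟨y, hy, rfl⟩ _ ⟨x, hx, rfl⟩
    simp only [hf] at hfy
    exact (div_eq_div_iff (hpos y hy i) (hpos x hx i)).mp hfy
  intro y hy
  have key : ∀ i, y.1 i * x.1 0 = y.1 0 * x.1 i := by
    intro i
    induction i with
    | zero => ring
    | succ i ih =>
      have h1 := hconst i y hy
      apply mul_right_cancel₀ (hpos x hx i)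
      linear_combination x.1 0 * h1 + x.1 (i + 1) * ih
  intro i
  have hn := key n
  rw [hxn] at hn
  have hi := key i
  apply mul_right_cancel₀ (hpos x hx 0)
  linear_combination hi - x.1 i * hn

/-- The reflection homeomorphism of `[0,1]`. -/
def negH : Set.Icc (0:ℝ) 1 ≃ₜ Set.Icc (0:ℝ) 1 where
  toFun t := ⟨1 - t.1, ⟨by linarith [t.2.2], by linarith [t.2.1]⟩⟩
  invFun t := ⟨1 - t.1, ⟨by linarith [t.2.2], by linarith [t.2.1]⟩⟩
  left_inv t := by ext; simp
  right_inv t := by ext; simp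
  continuous_toFun := Continuous.subtype_mk (continuous_const.sub continuous_subtype_val) _
  continuous_invFun := Continuous.subtype_mk (continuous_const.sub continuous_subtype_val) _

/-- If a coordinate of `x ∈ M` equals `1`, then `x` is an end-point of `M`. -/
lemma mset_endpoint_of_coord_one (r ρ : ℝ) (hr : 0 < r) (hr1 : r < 1) (hρ : 1 < ρ)
    (x : Mset r ρ) (n : ℕ) (hxn : x.1 n = 1) : IsEndpoint x := by
  intro A hA hxA
  obtain ⟨ψ⟩ := hA
  set t₀ : Set.Icc (0:ℝ) 1 := ψ.symm ⟨x, hxA⟩ with ht₀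
  have hψt₀ : ψ t₀ = ⟨x, hxA⟩ := ψ.apply_symm_apply _
  set u : ℝ := t₀.1 with hu
  have hu0 : 0 ≤ u := t₀.2.1
  have hu1 : u ≤ 1 := t₀.2.2
  rcases eq_or_lt_of_le hu0 with h0 | h0
  · -- u = 0
    refine ⟨ψ, ?_⟩
    have : (⟨0, by norm_num⟩ : Set.Icc (0:ℝ) 1) = t₀ := Subtype.ext h0
    rw [this, hψt₀]
  rcases eq_or_lt_of_le hu1 with h1 | h1
  · -- u = 1
    refine ⟨negH.trans ψ, ?_⟩
    have : negH ⟨0, by norm_num⟩ = t₀ := Subtype.ext (by simp only [negH]; dsimp; linarith [h1, hu])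
    simp only [Homeomorph.trans_apply, this, hψt₀]
  -- 0 < u < 1 : contradiction
  exfalso
  set Φ : ℝ → Mset r ρ := fun t => ((ψ (Set.projIcc 0 1 zero_le_one t)) : Mset r ρ) with hΦ
  have hΦcont : Continuous Φ :=
    continuous_subtype_val.comp (ψ.continuous.comp continuous_projIcc)
  set G : ℝ → ℝ := fun t => (Φ t).1 n with hG
  have hGcont : Continuous G := (continuous_apply n).comp (continuous_subtype_val.comp hΦcont)
  have hΦu : Φ u = x := by
    simp only [hΦ, Set.projIcc_of_mem zero_le_one ⟨hu0, hu1⟩]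
    have : (⟨u, ⟨hu0, hu1⟩⟩ : Set.Icc (0:ℝ) 1) = t₀ := Subtype.ext rfl
    rw [this, hψt₀]
  have hGu : G u = 1 := by rw [hG]; simp only [hΦu]; exact hxn
  -- values of G lie in [0,1]
  have hGle : ∀ t, G t ≤ 1 := fun t => ((Φ t).2.1 n).2
  -- find a small interval around u where G > 1/2
  have hnhds : G ⁻¹' Set.Ioi (1/2 : ℝ) ∈ nhds u := by
    apply (hGcont.continuousAt (x := u)).preimage_mem_nhds
    rw [hGu]
    exact Ioi_mem_nhds (by norm_num)
  obtain ⟨ε, hε, hball⟩ := Metric.mem_nhds_iff.mp hnhds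
  set δ : ℝ := min (ε / 2) (min u (1 - u)) with hδdef
  have hδ : 0 < δ := by
    apply lt_min (by linarith)
    exact lt_min h0 (by linarith)
  have hδε : δ < ε := lt_of_le_of_lt (min_le_left _ _) (by linarith)
  have hδu : δ ≤ u := le_trans (min_le_right _ _) (min_le_left _ _)
  have hδu1 : δ ≤ 1 - u := le_trans (min_le_right _ _) (min_le_right _ _)
  set a : ℝ := u - δ with ha
  set b : ℝ := u + δ with hb
  have hIccsub : Set.Icc a b ⊆ Set.Icc (0:ℝ) 1 := by
    intro t ht
    exact ⟨by simp only [ha] at ht; linarith [ht.1], by simp only [hb] at ht; linarith [ht.2]⟩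
  have hGpos : ∀ t ∈ Set.Icc a b, (1/2 : ℝ) < G t := by
    intro t ht
    have : t ∈ Metric.ball u ε := by
      rw [Metric.mem_ball, Real.dist_eq, abs_lt]
      constructor <;> [skip; skip] <;> (simp only [ha, hb] at ht; first
        | linarith [ht.1, hδε] | linarith [ht.2, hδε])
    exact hball this
  -- the connected piece of the arc
  set C : Set (Mset r ρ) := Φ '' Set.Icc a b with hCdef
  have hCconn : IsPreconnected C := isPreconnected_Icc.image Φ hΦcont.continuousOn
  have hCn : ∀ y ∈ C, y.1 n ≠ 0 := by
    rintro _ ⟨t, ht, rfl⟩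
    have := hGpos t ht
    simp only [hG] at this
    linarith
  have hxC : x ∈ C := ⟨u, ⟨by linarith, by linarith⟩, hΦu⟩
  have hray := mset_connected_ray r ρ hr hr1 hρ n C hCconn hCn x hxC hxn
  -- Φ is injective on [0,1]
  have hΦinj : ∀ s ∈ Set.Icc (0:ℝ) 1, ∀ t ∈ Set.Icc (0:ℝ) 1, Φ s = Φ t → s = t := by
    intro s hs t ht hst
    have h1 : ψ (Set.projIcc 0 1 zero_le_one s) = ψ (Set.projIcc 0 1 zero_le_one t) :=
      Subtype.ext hst
    have h2 := ψ.injective h1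
    rw [Set.projIcc_of_mem zero_le_one hs, Set.projIcc_of_mem zero_le_one ht] at h2
    exact congrArg Subtype.val h2
  -- G is injective on [a,b]
  have hGinj : ∀ s ∈ Set.Icc a b, ∀ t ∈ Set.Icc a b, G s = G t → s = t := by
    intro s hs t ht hst
    apply hΦinj s (hIccsub hs) t (hIccsub ht)
    apply Subtype.ext
    funext i
    have h1 := hray (Φ s) ⟨s, hs, rfl⟩ i
    have h2 := hray (Φ t) ⟨t, ht, rfl⟩ i
    rw [h1, h2]
    simp only [hG] at hst
    rw [hst]
  have hau : a ≤ u := by simp only [ha]; linarith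
  have hub : u ≤ b := by simp only [hb]; linarith
  have hab : Set.Icc a u ⊆ Set.Icc a b := Set.Icc_subset_Icc le_rfl hub
  have hub' : Set.Icc u b ⊆ Set.Icc a b := Set.Icc_subset_Icc hau le_rfl
  have hGa : G a < 1 := by
    rcases lt_or_eq_of_le (hGle a) with h | h
    · exact h
    · exfalso
      have : a = u := hGinj a ⟨le_rfl, by linarith⟩ u ⟨hau, hub⟩ (by rw [h, hGu])
      simp only [ha] at this; linarith
  have hGb : G b < 1 := by
    rcases lt_or_eq_of_le (hGle b) with h | h
    · exact h
    · exfalso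
      have : b = u := hGinj b ⟨by linarith, le_rfl⟩ u ⟨hau, hub⟩ (by rw [h, hGu])
      simp only [hb] at this; linarith
  set v : ℝ := max (G a) (G b) with hv
  have hv1 : v < 1 := max_lt hGa hGb
  have hs1 : v ∈ G '' Set.Icc a u := by
    apply intermediate_value_Icc hau hGcont.continuousOn
    exact ⟨le_max_left _ _, by rw [hGu]; linarith⟩
  have hs2 : v ∈ G '' Set.Icc u b := by
    apply intermediate_value_Icc' hub hGcont.continuousOn
    exact ⟨le_max_right _ _, by rw [hGu]; linarith⟩
  obtain ⟨s₁, hs₁, hGs₁⟩ := hs1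
  obtain ⟨s₂, hs₂, hGs₂⟩ := hs2
  have heq : s₁ = s₂ := hGinj s₁ (hab hs₁) s₂ (hub' hs₂) (by rw [hGs₁, hGs₂])
  have hs₁u : s₁ = u := le_antisymm hs₁.2 (heq ▸ hs₂.1)
  rw [hs₁u, hGu] at hGs₁
  linarith

/-- If `x ∈ M_{r,ρ}` is neither the top `(0,0,0,…)` nor an end-point of `M_{r,ρ}`, then no
coordinate of `x` equals `0` or `1`. -/
theorem stmt7 (r ρ : ℝ) (h : NC r ρ) (x : Mset r ρ)
    (hx0 : x.1 ≠ fun _ => (0:ℝ)) (hxe : ¬ IsEndpoint x) :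
    ∀ n : ℕ, x.1 n ≠ 0 ∧ x.1 n ≠ 1 := by
  obtain ⟨hr, hr1, hρ, -⟩ := h
  intro n
  constructor
  · intro h0
    apply hx0
    funext j
    exact mset_zero_prop r ρ hr.ne' (by linarith) x n h0 j
  · intro h1
    exact hxe (mset_endpoint_of_coord_one r ρ hr hr1 hρ x n h1)
end

section
/- Let (r,ρ) ∈ 𝒩𝒞. Then for all positive integers k and ℓ, the set B_{k,ℓ} = {r^m·ρ^n : m and n are integers with m ≥ k and n ≥ ℓ} is dense in (0,∞). -/
/-- There are arbitrarily small nonzero elements `u*a + v*b` with `u, v ≥ 1` natural. -/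
lemma small_step (a b : ℝ) (ha : a < 0) (hb : 0 < b)
    (hirr : ∀ m n : ℤ, (m : ℝ) * a = (n : ℝ) * b → m = 0 ∧ n = 0)
    (ε : ℝ) (hε : 0 < ε) :
    ∃ u v : ℕ, 1 ≤ u ∧ 1 ≤ v ∧ (u : ℝ) * a + v * b ≠ 0 ∧ |(u : ℝ) * a + v * b| < ε := by
  have hna : 0 < -a := by linarith
  set h0 : ℝ := min ε b / 2 with hh0def
  have hh0 : 0 < h0 := by
    have := lt_min hε hb
    positivity
  set p : ℕ → ℕ := fun n => ⌊(n * b) / (-a)⌋₊ with hp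
  set e : ℕ → ℝ := fun n => n * b + (p n : ℝ) * a with he
  have hq : ∀ n : ℕ, 0 ≤ (n * b) / (-a) := fun n => by positivity
  have he0 : ∀ n : ℕ, 0 ≤ e n := by
    intro n
    have h1 : (p n : ℝ) ≤ (n * b) / (-a) := Nat.floor_le (hq n)
    have h2 : (p n : ℝ) * (-a) ≤ n * b := by
      rw [← le_div_iff₀ hna]; exact h1
    simp only [he]; nlinarith
  have he1 : ∀ n : ℕ, e n < -a := by
    intro n
    have h1 : (n * b) / (-a) < (p n : ℝ) + 1 := Nat.lt_floor_add_one _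
    have h2 : n * b < ((p n : ℝ) + 1) * (-a) := by
      rw [← div_lt_iff₀ hna]; exact h1
    simp only [he]; nlinarith
  set M : ℕ := ⌈(-a) / h0⌉₊ with hM
  have hfbin : ∀ n : ℕ, ⌊e n / h0⌋₊ < M := by
    intro n
    rw [Nat.floor_lt (div_nonneg (he0 n) hh0.le)]
    calc e n / h0 < (-a) / h0 := by
          rw [div_lt_div_iff₀ hh0 hh0]; nlinarith [he1 n, hh0]
      _ ≤ (M : ℝ) := Nat.le_ceil _
  clear_value p e
  obtain ⟨n₁, hn₁, n₂, hn₂, hne, heq⟩ :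
      ∃ n₁ ∈ Finset.range (M + 1), ∃ n₂ ∈ Finset.range (M + 1), n₁ ≠ n₂ ∧
        ⌊e n₁ / h0⌋₊ = ⌊e n₂ / h0⌋₊ := by
    have := Finset.exists_ne_map_eq_of_card_lt_of_maps_to
      (s := Finset.range (M + 1)) (t := Finset.range M)
      (by simp) (fun n _ => Finset.mem_range.mpr (hfbin n))
    obtain ⟨x, hx, y, hy, hxy, hfe⟩ := this
    exact ⟨x, hx, y, hy, hxy, hfe⟩
  wlog hlt : n₂ < n₁ generalizing n₁ n₂
  · exact this n₂ hn₂ n₁ hn₁ hne.symm heq.symm (by omega)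
  -- |e n₁ - e n₂| < h0
  have hclose : |e n₁ - e n₂| < h0 := by
    have b1 : (⌊e n₁ / h0⌋₊ : ℝ) ≤ e n₁ / h0 := Nat.floor_le (div_nonneg (he0 _) hh0.le)
    have b2 : e n₁ / h0 < ⌊e n₁ / h0⌋₊ + 1 := Nat.lt_floor_add_one _
    have b3 : (⌊e n₂ / h0⌋₊ : ℝ) ≤ e n₂ / h0 := Nat.floor_le (div_nonneg (he0 _) hh0.le)
    have b4 : e n₂ / h0 < ⌊e n₂ / h0⌋₊ + 1 := Nat.lt_floor_add_one _
    rw [heq] at b1 b2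
    have c1 : (⌊e n₂ / h0⌋₊ : ℝ) * h0 ≤ e n₁ := by rw [← le_div_iff₀ hh0]; exact b1
    have c2 : e n₁ < ((⌊e n₂ / h0⌋₊ : ℝ) + 1) * h0 := by rw [← div_lt_iff₀ hh0]; exact b2
    have c3 : (⌊e n₂ / h0⌋₊ : ℝ) * h0 ≤ e n₂ := by rw [← le_div_iff₀ hh0]; exact b3
    have c4 : e n₂ < ((⌊e n₂ / h0⌋₊ : ℝ) + 1) * h0 := by rw [← div_lt_iff₀ hh0]; exact b4
    rw [abs_lt]
    constructor <;> nlinarith [c1, c2, c3, c4, hh0]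
  have hpm : p n₂ ≤ p n₁ := by
    rw [hp]
    apply Nat.floor_mono
    gcongr
  set v : ℕ := n₁ - n₂ with hv
  set u : ℕ := p n₁ - p n₂ with hu
  have hv1 : 1 ≤ v := by omega
  have hcast : e n₁ - e n₂ = (u : ℝ) * a + v * b := by
    simp only [he, hu, hv]
    rw [Nat.cast_sub hpm, Nat.cast_sub (le_of_lt hlt)]
    ring
  have hδne : (u : ℝ) * a + v * b ≠ 0 := by
    intro h0eq
    have : ((u : ℤ) : ℝ) * a = ((-(v : ℤ) : ℤ) : ℝ) * b := by push_cast; linarith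
    obtain ⟨hu0, hv0⟩ := hirr _ _ this
    omega
  have hδsmall : |(u : ℝ) * a + v * b| < ε := by
    rw [← hcast]
    calc |e n₁ - e n₂| < h0 := hclose
      _ ≤ ε := by rw [hh0def]; have := min_le_left ε b; linarith
  have hu1 : 1 ≤ u := by
    by_contra hu0
    have hu0' : (u : ℝ) = 0 := by exact_mod_cast (by omega : u = 0)
    have hv1' : (1 : ℝ) ≤ (v : ℝ) := by exact_mod_cast hv1
    have hvb : b ≤ (u : ℝ) * a + v * b := by rw [hu0']; nlinarith
    have hb2 : |(u : ℝ) * a + v * b| < b := by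
      rw [← hcast]
      calc |e n₁ - e n₂| < h0 := hclose
        _ ≤ b / 2 := by rw [hh0def]; have := min_le_right ε b; linarith
        _ < b := by linarith
    have := le_trans hvb (le_abs_self _)
    linarith
  exact ⟨u, v, hu1, hv1, hδne, hδsmall⟩

lemma approx (a b : ℝ) (ha : a < 0) (hb : 0 < b)
    (hirr : ∀ m n : ℤ, (m : ℝ) * a = (n : ℝ) * b → m = 0 ∧ n = 0)
    (c ε : ℝ) (hε : 0 < ε) (k l : ℕ) :
    ∃ m n : ℕ, k ≤ m ∧ l ≤ n ∧ |(m : ℝ) * a + n * b - c| < ε := by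
  obtain ⟨u, v, hu, hv, hδne, hδsmall⟩ := small_step a b ha hb hirr ε hε
  set δ : ℝ := (u : ℝ) * a + v * b with hδ
  have hna : 0 < -a := by linarith
  set w₀ : ℝ := (k : ℝ) * a + l * b with hw₀
  rcases hδne.lt_or_gt with hneg | hpos
  · -- δ < 0 : go up with b, come down by δ
    set K : ℕ := ⌈(c - w₀) / b⌉₊ + 1 with hK
    have hs₀ : c < w₀ + K * b := by
      have h1 : (c - w₀) / b ≤ ⌈(c - w₀) / b⌉₊ := Nat.le_ceil _
      have h2 : (c - w₀) / b < (K : ℝ) := by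
        rw [hK]; push_cast; linarith
      have := (div_lt_iff₀ hb).mp h2
      linarith
    set s₀ : ℝ := w₀ + K * b with hs₀def
    set j : ℕ := ⌊(s₀ - c) / (-δ)⌋₊ with hj
    have hjd : 0 < -δ := by linarith
    have h1 : (j : ℝ) ≤ (s₀ - c) / (-δ) := Nat.floor_le (div_nonneg (by linarith) (by linarith))
    have h2 : (s₀ - c) / (-δ) < (j : ℝ) + 1 := Nat.lt_floor_add_one _
    have h1' : (j : ℝ) * (-δ) ≤ s₀ - c := by rw [← le_div_iff₀ hjd]; exact h1
    have h2' : s₀ - c < ((j : ℝ) + 1) * (-δ) := by rw [← div_lt_iff₀ hjd]; exact h2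
    refine ⟨k + j * u, l + K + j * v, by omega, by omega, ?_⟩
    have hval : ((k + j * u : ℕ) : ℝ) * a + ((l + K + j * v : ℕ) : ℝ) * b
        = s₀ + j * δ := by
      rw [hs₀def, hw₀, hδ]; push_cast; ring
    rw [hval, abs_lt]
    have hδε : -δ ≤ ε := by
      have := le_abs_self (-δ); rw [abs_neg] at this; linarith
    constructor <;> nlinarith
  · -- δ > 0 : go down with a, come up by δ
    set K : ℕ := ⌈(w₀ - c) / (-a)⌉₊ + 1 with hK
    have hs₀ : w₀ + K * a < c := by
      have h1 : (w₀ - c) / (-a) ≤ ⌈(w₀ - c) / (-a)⌉₊ := Nat.le_ceil _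
      have h2 : (w₀ - c) / (-a) < (K : ℝ) := by
        rw [hK]; push_cast; linarith
      have := (div_lt_iff₀ hna).mp h2
      linarith
    set s₀ : ℝ := w₀ + K * a with hs₀def
    set j : ℕ := ⌊(c - s₀) / δ⌋₊ with hj
    have h1 : (j : ℝ) ≤ (c - s₀) / δ := Nat.floor_le (div_nonneg (by linarith) hpos.le)
    have h2 : (c - s₀) / δ < (j : ℝ) + 1 := Nat.lt_floor_add_one _
    have h1' : (j : ℝ) * δ ≤ c - s₀ := by rw [← le_div_iff₀ hpos]; exact h1
    have h2' : c - s₀ < ((j : ℝ) + 1) * δ := by rw [← div_lt_iff₀ hpos]; exact h2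
    refine ⟨k + K + j * u, l + j * v, by omega, by omega, ?_⟩
    have hval : ((k + K + j * u : ℕ) : ℝ) * a + ((l + j * v : ℕ) : ℝ) * b
        = s₀ + j * δ := by
      rw [hs₀def, hw₀, hδ]; push_cast; ring
    rw [hval, abs_lt]
    have hδε : δ ≤ ε := le_trans (le_abs_self δ) (le_of_lt hδsmall)
    constructor <;> nlinarith

/-- For all positive integers `k`, `ℓ`, the set `B_{k,ℓ} = {r^m · ρ^n : m ≥ k, n ≥ ℓ}` is
dense in `(0, ∞)`. -/
theorem stmt9 (r ρ : ℝ) (h : NC r ρ) (k l : ℕ) (hk : 1 ≤ k) (hl : 1 ≤ l) :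
    Set.Ioi (0:ℝ) ⊆ closure {y : ℝ | ∃ m n : ℕ, k ≤ m ∧ l ≤ n ∧ y = r ^ m * ρ ^ n} := by
  obtain ⟨hr0, hr1, hρ1, hNC⟩ := h
  have hρ0 : (0 : ℝ) < ρ := lt_trans one_pos hρ1
  set a : ℝ := Real.log r with hadef
  set b : ℝ := Real.log ρ with hbdef
  have ha : a < 0 := Real.log_neg hr0 hr1
  have hb : 0 < b := Real.log_pos hρ1
  have hirr : ∀ m n : ℤ, (m : ℝ) * a = (n : ℝ) * b → m = 0 ∧ n = 0 := by
    intro m n hmn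
    apply (hNC m n).mp
    rw [← Real.rpow_intCast r m, ← Real.rpow_intCast ρ n,
      Real.rpow_def_of_pos hr0, Real.rpow_def_of_pos hρ0]
    exact congrArg Real.exp (by rw [mul_comm (Real.log r), mul_comm (Real.log ρ)]; exact hmn)
  intro x hx
  have hx0 : 0 < x := hx
  rw [Metric.mem_closure_iff]
  intro ε hε
  have hcont : ContinuousAt Real.exp (Real.log x) := Real.continuous_exp.continuousAt
  rw [Metric.continuousAt_iff] at hcont
  obtain ⟨δ, hδ0, hδ⟩ := hcont ε hε
  obtain ⟨m, n, hm, hn, happ⟩ := approx a b ha hb hirr (Real.log x) δ hδ0 k l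
  refine ⟨r ^ m * ρ ^ n, ⟨m, n, hm, hn, rfl⟩, ?_⟩
  have hrexp : r ^ m * ρ ^ n = Real.exp ((m : ℝ) * a + n * b) := by
    rw [Real.exp_add, Real.exp_nat_mul, Real.exp_nat_mul, hadef, hbdef,
      Real.exp_log hr0, Real.exp_log hρ0]
  rw [hrexp]
  have : dist ((m : ℝ) * a + n * b) (Real.log x) < δ := by
    rw [Real.dist_eq]; exact happ
  have := hδ this
  rw [Real.exp_log hx0] at this
  rwa [dist_comm]
end

section
/- Let (r,ρ) ∈ 𝒩𝒞. Then for all positive integers k and ℓ, the set B_{k,ℓ} ∩ (0,1) is dense in the open interval (0,1). -/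
/-- Stepping lemma: with a positive step `s` and base `c ≤ t`, some natural multiple of `s`
added to `c` lands in `(t - s, t]`. -/
lemma step_lemma (s c t : ℝ) (hs : 0 < s) (hc : c ≤ t) :
    ∃ j : ℕ, t - s < c + j * s ∧ c + j * s ≤ t := by
  have hnn : (0:ℝ) ≤ (t - c) / s := div_nonneg (by linarith) hs.le
  have h0 : (0:ℤ) ≤ ⌊(t - c) / s⌋ := Int.floor_nonneg.2 hnn
  have hcast : (⌊(t - c) / s⌋.toNat : ℝ) = (⌊(t - c) / s⌋ : ℝ) := by
    exact_mod_cast Int.toNat_of_nonneg h0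
  refine ⟨⌊(t - c) / s⌋.toNat, ?_, ?_⟩
  · have h1 : ((t - c) / s) < ⌊(t - c) / s⌋ + 1 := Int.lt_floor_add_one _
    rw [hcast]
    nlinarith [(div_lt_iff₀ hs).1 h1]
  · have h1 : (⌊(t - c) / s⌋ : ℝ) ≤ (t - c) / s := Int.floor_le _
    rw [hcast]
    nlinarith [(le_div_iff₀ hs).1 h1]

set_option maxHeartbeats 1600000 in
/-- For all positive integers `k`, `ℓ`, the set `B_{k,ℓ} ∩ (0,1)` is dense in the open
interval `(0,1)`. -/
theorem stmt10 (r ρ : ℝ) (h : NC r ρ) (k l : ℕ) (hk : 1 ≤ k) (hl : 1 ≤ l) :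
    Set.Ioo (0:ℝ) 1 ⊆
      closure ({y : ℝ | ∃ m n : ℕ, k ≤ m ∧ l ≤ n ∧ y = r ^ m * ρ ^ n} ∩ Set.Ioo (0:ℝ) 1) := by
  obtain ⟨hr0, hr1, hρ1, hNC⟩ := h
  have hρ0 : (0:ℝ) < ρ := lt_trans one_pos hρ1
  set a : ℝ := -Real.log r with ha_def
  set b : ℝ := Real.log ρ with hb_def
  have ha : 0 < a := by
    have := Real.log_neg hr0 hr1
    simp only [ha_def]; linarith
  have hb : 0 < b := Real.log_pos hρ1
  -- nondegeneracy: q*b - p*a ≠ 0 for naturals with q ≥ 1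
  have hne : ∀ p q : ℕ, 1 ≤ q → (q : ℝ) * b - (p : ℝ) * a ≠ 0 := by
    intro p q hq heq
    have hlog : (p : ℝ) * Real.log r = (-(q:ℤ) : ℝ) * Real.log ρ := by
      simp only [ha_def, hb_def] at heq
      push_cast
      nlinarith
    have hpq : r ^ ((p:ℤ)) = ρ ^ (-(q:ℤ)) := by
      have h1 : Real.log (r ^ ((p:ℤ))) = Real.log (ρ ^ (-(q:ℤ))) := by
        rw [Real.log_zpow, Real.log_zpow]
        exact_mod_cast hlog
      have h2 : (0:ℝ) < r ^ ((p:ℤ)) := zpow_pos hr0 _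
      have h3 : (0:ℝ) < ρ ^ (-(q:ℤ)) := zpow_pos hρ0 _
      exact Real.log_injOn_pos (Set.mem_Ioi.2 h2) (Set.mem_Ioi.2 h3) h1
    have := (hNC (p:ℤ) (-(q:ℤ))).1 hpq
    omega
  -- small nonzero steps with natural coefficients
  have hstep : ∀ ε : ℝ, 0 < ε → ∃ p q : ℕ, 1 ≤ q ∧
      (q : ℝ) * b - (p : ℝ) * a ≠ 0 ∧ |(q : ℝ) * b - (p : ℝ) * a| < ε := by
    intro ε hε
    obtain ⟨N, hN⟩ := exists_nat_gt (a / ε)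
    have hN0 : 0 < N := by
      by_contra hc
      push_neg at hc
      interval_cases N
      · simp at hN; nlinarith [div_pos ha hε]
    obtain ⟨j, q, hq0, hqN, habs⟩ := Real.exists_int_int_abs_mul_sub_le (b / a) hN0
    have haε : a / (N + 1) < ε := by
      rw [div_lt_iff₀ (by positivity)]
      have : a < ε * N := by
        rw [div_lt_iff₀ hε] at hN; linarith [hN]
      nlinarith
    have hkey : |(q:ℝ) * b - (j:ℝ) * a| ≤ a / (N + 1) := by
      have : (q:ℝ) * b - (j:ℝ) * a = ((q:ℝ) * (b/a) - j) * a := by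
        field_simp
      rw [this, abs_mul, abs_of_pos ha]
      calc |(q:ℝ) * (b/a) - j| * a ≤ (1 / (N+1)) * a := by
            apply mul_le_mul_of_nonneg_right habs (le_of_lt ha)
        _ = a / (N+1) := by ring
    -- j ≥ 0
    have hqb : 0 < (q:ℝ) * (b/a) := by
      apply mul_pos _ (div_pos hb ha)
      exact_mod_cast hq0
    have hj0 : 0 ≤ j := by
      by_contra hj
      push_neg at hj
      have hj' : (j:ℝ) ≤ -1 := by exact_mod_cast (by omega : j ≤ -1)
      have h1 : (1:ℝ)/(N+1) ≤ 1 := by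
        rw [div_le_one (by positivity)]; push_cast; linarith
      have := abs_le.1 habs
      linarith
    refine ⟨j.toNat, q.toNat, by omega, ?_, ?_⟩
    · have e1 : ((q.toNat : ℕ) : ℝ) = (q : ℝ) := by exact_mod_cast Int.toNat_of_nonneg (le_of_lt hq0)
      have e2 : ((j.toNat : ℕ) : ℝ) = (j : ℝ) := by exact_mod_cast Int.toNat_of_nonneg hj0
      exact hne j.toNat q.toNat (by omega)
    · have e1 : ((q.toNat : ℕ) : ℝ) = (q : ℝ) := by exact_mod_cast Int.toNat_of_nonneg (le_of_lt hq0)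
      have e2 : ((j.toNat : ℕ) : ℝ) = (j : ℝ) := by exact_mod_cast Int.toNat_of_nonneg hj0
      rw [e1, e2]
      exact lt_of_le_of_lt hkey haε
  -- main density in log space
  have hmain : ∀ t : ℝ, ∀ ε : ℝ, 0 < ε → ∃ m n : ℕ, k ≤ m ∧ l ≤ n ∧
      |((n : ℝ) * b - (m : ℝ) * a) - t| < ε := by
    intro t ε hε
    obtain ⟨p, q, hq1, hs0, hsε⟩ := hstep ε hε
    set s := (q : ℝ) * b - (p : ℝ) * a with hs_def
    rcases lt_or_gt_of_ne hs0 with hneg | hpos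
    · -- s < 0 : base c = N*b - k*a ≥ t, step down
      obtain ⟨N, hN⟩ := exists_nat_gt ((t + (k:ℝ) * a) / b)
      set N' := max N l with hN'_def
      have hc : t ≤ (N' : ℝ) * b - (k : ℝ) * a := by
        have h1 : (t + (k:ℝ) * a) < N * b := by
          rw [div_lt_iff₀ hb] at hN; linarith
        have h2 : (N : ℝ) ≤ (N' : ℝ) := by exact_mod_cast le_max_left N l
        nlinarith
      obtain ⟨j, hj1, hj2⟩ := step_lemma (-s) (-((N' : ℝ) * b - (k : ℝ) * a)) (-t)
        (by linarith) (by linarith)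
      refine ⟨k + j * p, N' + j * q, by omega, by omega, ?_⟩
      have hval : ((N' + j * q : ℕ) : ℝ) * b - ((k + j * p : ℕ) : ℝ) * a
          = ((N' : ℝ) * b - (k : ℝ) * a) + (j : ℝ) * s := by
        push_cast; ring
      rw [hval, abs_lt]
      constructor <;> nlinarith [hj1, hj2, hsε, abs_of_neg hneg]
    · -- s > 0 : base c = l*b - M*a ≤ t, step up
      obtain ⟨M, hM⟩ := exists_nat_gt (((l:ℝ) * b - t) / a)
      set M' := max M k with hM'_def
      have hc : (l : ℝ) * b - (M' : ℝ) * a ≤ t := by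
        have h1 : ((l:ℝ) * b - t) < M * a := by
          rw [div_lt_iff₀ ha] at hM; linarith
        have h2 : (M : ℝ) ≤ (M' : ℝ) := by exact_mod_cast le_max_left M k
        nlinarith
      obtain ⟨j, hj1, hj2⟩ := step_lemma s ((l : ℝ) * b - (M' : ℝ) * a) t hpos hc
      refine ⟨M' + j * p, l + j * q, by omega, by omega, ?_⟩
      have hval : ((l + j * q : ℕ) : ℝ) * b - ((M' + j * p : ℕ) : ℝ) * a
          = ((l : ℝ) * b - (M' : ℝ) * a) + (j : ℝ) * s := by
        push_cast; ring
      rw [hval, abs_lt]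
      constructor <;> nlinarith [hj1, hj2, hsε, abs_of_pos hpos]
  -- conclude
  intro x hx
  obtain ⟨hx0, hx1⟩ := hx
  rw [Metric.mem_closure_iff]
  intro ε hε
  have ht : Real.log x < 0 := Real.log_neg hx0 hx1
  set t := Real.log x with ht_def
  -- choose δ small enough
  have hδpos : 0 < min (ε / 2) (-t) := lt_min (by linarith) (by linarith)
  obtain ⟨m, n, hm, hn, hclose⟩ := hmain t _ hδpos
  set u := (n : ℝ) * b - (m : ℝ) * a with hu_def
  have hu_neg : u < 0 := by
    have h1 : |u - t| < -t := lt_of_lt_of_le hclose (min_le_right _ _)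
    have := abs_lt.1 h1
    linarith [this.2]
  refine ⟨r ^ m * ρ ^ n, ⟨⟨m, n, hm, hn, rfl⟩, ?_, ?_⟩, ?_⟩
  · positivity
  · -- r^m * ρ^n < 1
    have hexp : r ^ m * ρ ^ n = Real.exp u := by
      rw [hu_def, ha_def, hb_def]
      rw [show (n : ℝ) * Real.log ρ - (m : ℝ) * -Real.log r
          = (m : ℝ) * Real.log r + (n : ℝ) * Real.log ρ by ring]
      rw [Real.exp_add, Real.exp_nat_mul, Real.exp_nat_mul, Real.exp_log hr0, Real.exp_log hρ0]
    rw [hexp]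
    exact Real.exp_lt_one_iff.2 hu_neg
  · -- distance
    have hexp : r ^ m * ρ ^ n = Real.exp u := by
      rw [hu_def, ha_def, hb_def]
      rw [show (n : ℝ) * Real.log ρ - (m : ℝ) * -Real.log r
          = (m : ℝ) * Real.log r + (n : ℝ) * Real.log ρ by ring]
      rw [Real.exp_add, Real.exp_nat_mul, Real.exp_nat_mul, Real.exp_log hr0, Real.exp_log hρ0]
    rw [hexp, Real.dist_eq]
    have hxe : x = Real.exp t := (Real.exp_log hx0).symm
    rw [hxe]
    -- |exp t - exp u| ≤ |t - u| since both t, u ≤ 0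
    have h1 : |u - t| < ε / 2 := lt_of_lt_of_le hclose (min_le_left _ _)
    have habs := abs_lt.1 h1
    have key : |Real.exp t - Real.exp u| ≤ |t - u| := by
      rcases le_total t u with hle | hle
      · rw [abs_of_nonpos (by simp [Real.exp_le_exp]; exact hle),
            abs_of_nonpos (by linarith)]
        have hmul : Real.exp u * Real.exp (t - u) = Real.exp t := by
          rw [← Real.exp_add]; ring_nf
        have h2 : Real.exp u - Real.exp t ≤ u - t := by
          nlinarith [Real.add_one_le_exp (t - u), Real.exp_pos u, Real.exp_le_one_iff.2 (le_of_lt hu_neg), Real.exp_pos t, hmul]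
        linarith
      · rw [abs_of_nonneg (by simp [Real.exp_le_exp]; exact hle),
            abs_of_nonneg (by linarith)]
        have hmul : Real.exp t * Real.exp (u - t) = Real.exp u := by
          rw [← Real.exp_add]; ring_nf
        have h2 : Real.exp t - Real.exp u ≤ t - u := by
          nlinarith [Real.add_one_le_exp (u - t), Real.exp_pos t, Real.exp_le_one_iff.2 (le_of_lt ht), Real.exp_pos u, hmul]
        linarith
    have : |t - u| = |u - t| := abs_sub_comm t u
    linarith [key, habs.1, habs.2, h1, this ▸ h1]
end
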